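/- arXiv:2011.07206 — 11 statements merged into one kernel-verified Lean document; each statement's English description precedes it below -/
import Mathlib

section
/- Let A_1,…,A_r be n×n complex matrices that are simultaneously triangularizable, i.e., there exists an invertible n×n complex matrix P such that for every i, P A_i P⁻¹ = J_i is upper triangular, with diagonal entries (J_i)_{jj} = λ_{ij}. Let B_1,…,B_r be m×m complex matrices. Then the characteristic polynomial of the nm×nm matrix C = Σ_{i=1}^r A_i ⊗ B_i equals the product over j = 1,…,n of the characteristic polynomials of the m×m matrices Σ_{i=1}^r λ_{ij} B_i; in particular, the eigenvalues of C (with multiplicity) are exactly the eigenvalues of Σ_i λ_{ij} B_i for j = 1,…,n. -/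
open Matrix Polynomial Finset
open scoped Kronecker

lemma charmatrix_conj {k : Type*} [Fintype k] [DecidableEq k]
    (P M : Matrix k k ℂ) (hP : IsUnit P.det) :
    charmatrix (P * M * P⁻¹) = (P.map C) * charmatrix M * (P⁻¹.map C) := by
  have h1 : (P.map (C : ℂ →+* ℂ[X])) * (P⁻¹.map C) = 1 := by
    rw [← Matrix.map_mul, Matrix.mul_nonsing_inv P hP, Matrix.map_one _ (map_zero C) (map_one C)]
  have hs := (Matrix.scalar_commute (n := k) (X : ℂ[X]) (Commute.all X) (P.map C)).eq
  unfold charmatrix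
  simp only [RingHom.mapMatrix_apply]
  rw [Matrix.mul_sub, Matrix.sub_mul, Matrix.map_mul, Matrix.map_mul]
  congr 1
  rw [← hs, Matrix.mul_assoc, h1, Matrix.mul_one]

lemma charpoly_conj {k : Type*} [Fintype k] [DecidableEq k]
    (P M : Matrix k k ℂ) (hP : IsUnit P.det) :
    (P * M * P⁻¹).charpoly = M.charpoly := by
  have h1 : (P.map (C : ℂ →+* ℂ[X])).det * (P⁻¹.map C).det = 1 := by
    rw [← Matrix.det_mul, ← Matrix.map_mul, Matrix.mul_nonsing_inv P hP,
      Matrix.map_one _ (map_zero C) (map_one C), Matrix.det_one]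
  unfold Matrix.charpoly
  rw [charmatrix_conj P M hP, Matrix.det_mul, Matrix.det_mul]
  rw [mul_comm, ← mul_assoc, mul_comm ((P⁻¹.map C).det), h1, one_mul]

/-- If `A 1, …, A r` are `n × n` complex matrices simultaneously
triangularizable by an invertible matrix `P` (with `P * A i * P⁻¹ = J i` upper triangular,
and `λ_{ij} = (J i) j j` the diagonal entries), and `B 1, …, B r` are `m × m` complex
matrices, then the characteristic polynomial of `C = ∑ i, A i ⊗ B i` is the product over
`j` of the characteristic polynomials of `∑ i, λ_{ij} • B i`. -/
theorem stmt0 {n m r : ℕ}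
    (A : Fin r → Matrix (Fin n) (Fin n) ℂ)
    (B : Fin r → Matrix (Fin m) (Fin m) ℂ)
    (P : Matrix (Fin n) (Fin n) ℂ) (hP : IsUnit P.det)
    (J : Fin r → Matrix (Fin n) (Fin n) ℂ)
    (hJ : ∀ i, P * A i * P⁻¹ = J i)
    (htri : ∀ i, (J i).BlockTriangular id) :
    (∑ i, A i ⊗ₖ B i).charpoly = ∏ j : Fin n, (∑ i, (J i j j) • B i).charpoly := by
  have hA : ∀ i, A i = P⁻¹ * J i * P := by
    intro i
    rw [← hJ i, Matrix.mul_assoc, Matrix.mul_assoc, Matrix.nonsing_inv_mul P hP,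
      Matrix.mul_one, ← Matrix.mul_assoc, Matrix.nonsing_inv_mul P hP, Matrix.one_mul]
  set D : Matrix (Fin n × Fin m) (Fin n × Fin m) ℂ := ∑ i, J i ⊗ₖ B i with hD
  -- Step 1: the LHS is a conjugate of D
  have hconj : (∑ i, A i ⊗ₖ B i) = (P⁻¹ ⊗ₖ (1 : Matrix (Fin m) (Fin m) ℂ)) * D *
      ((P⁻¹)⁻¹ ⊗ₖ (1 : Matrix (Fin m) (Fin m) ℂ)) := by
    rw [Matrix.nonsing_inv_nonsing_inv P hP, hD, Finset.mul_sum, Finset.sum_mul]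
    refine Finset.sum_congr rfl fun i _ => ?_
    rw [← Matrix.mul_kronecker_mul, ← Matrix.mul_kronecker_mul, Matrix.one_mul, Matrix.mul_one,
      hA i]
  have hinvkron : ((P⁻¹)⁻¹ ⊗ₖ (1 : Matrix (Fin m) (Fin m) ℂ)) =
      (P⁻¹ ⊗ₖ (1 : Matrix (Fin m) (Fin m) ℂ))⁻¹ := by
    rw [Matrix.inv_kronecker, inv_one]
  have hudet : IsUnit (P⁻¹ ⊗ₖ (1 : Matrix (Fin m) (Fin m) ℂ)).det := by
    rw [Matrix.det_kronecker, Matrix.det_one, one_pow, mul_one, Fintype.card_fin]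
    exact (Matrix.isUnit_nonsing_inv_det P hP).pow m
  have key : (∑ i, A i ⊗ₖ B i).charpoly = D.charpoly := by
    rw [hconj, hinvkron]
    exact charpoly_conj _ _ hudet
  rw [key]
  -- Step 2: D is block triangular with respect to Prod.fst
  have hbt : D.BlockTriangular Prod.fst := by
    intro p q hpq
    rw [hD, Matrix.sum_apply]
    refine Finset.sum_eq_zero fun i _ => ?_
    have hz : J i p.1 q.1 = 0 := htri i hpq
    simp [Matrix.kroneckerMap_apply, hz]
  rw [hbt.charpoly]
  rcases Nat.eq_zero_or_pos m with hm | hm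
  · subst hm
    refine Eq.trans (Finset.prod_eq_one fun a _ => ?_) (Finset.prod_eq_one fun j _ => ?_).symm
    · haveI : IsEmpty {p : Fin n × Fin 0 // p.1 = a} := ⟨fun p => p.1.2.elim0⟩
      simp [Matrix.charpoly, Matrix.det_isEmpty]
    · simp [Matrix.charpoly, Matrix.det_isEmpty]
  · refine Finset.prod_congr ?_ fun j _ => ?_
    · apply Finset.eq_univ_of_forall
      intro j
      convert Finset.mem_image_of_mem Prod.fst (Finset.mem_univ ((j, ⟨0, hm⟩) : Fin n × Fin m))
    · let e : {p : Fin n × Fin m // p.1 = j} ≃ Fin m :=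
        { toFun := fun p => p.1.2
          invFun := fun a => ⟨(j, a), rfl⟩
          left_inv := fun p => by
            rcases p with ⟨⟨p1, p2⟩, hp⟩
            simp only at hp
            subst hp
            rfl
          right_inv := fun a => rfl }
      have heq : Matrix.reindex e e (D.toSquareBlock Prod.fst j) = ∑ i, (J i j j) • B i := by
        ext a b
        have h1 : e.symm a = (⟨(j, a), rfl⟩ : {p : Fin n × Fin m // p.1 = j}) := rfl
        have h2 : e.symm b = (⟨(j, b), rfl⟩ : {p : Fin n × Fin m // p.1 = j}) := rfl
        rw [Matrix.reindex_apply, Matrix.submatrix_apply, h1, h2]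
        simp [Matrix.toSquareBlock_def, hD, Matrix.sum_apply, Matrix.kroneckerMap_apply]
      have h3 := (Matrix.charpoly_reindex (R := ℂ) e (D.toSquareBlock Prod.fst j)).symm.trans
        (congrArg Matrix.charpoly heq)
      convert h3 using 2
end

section
/- Let A be an n×n complex matrix with eigenvalues λ_1,…,λ_n listed with multiplicity (the roots of its characteristic polynomial), and let B_1, B_2 be m×m complex matrices. Then the characteristic polynomial of I_n ⊗ B_1 + A ⊗ B_2 equals the product over j = 1,…,n of the characteristic polynomials of B_1 + λ_j B_2; in particular, the eigenvalues of I ⊗ B_1 + A ⊗ B_2 are exactly the eigenvalues of B_1 + λ_j B_2 for j = 1,…,n. -/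
open Matrix Polynomial
open scoped Kronecker

section Aux

variable {R : Type*} [CommRing R] {m : ℕ}

lemma my_kron_reindex {I J : Type*} [Fintype I] [DecidableEq I] [Fintype J] [DecidableEq J]
    (e : I ≃ J) (A : Matrix I I R) (B₁ B₂ : Matrix (Fin m) (Fin m) R) :
    ((1 : Matrix J J R) ⊗ₖ B₁ + (reindex e e A) ⊗ₖ B₂).charpoly
      = ((1 : Matrix I I R) ⊗ₖ B₁ + A ⊗ₖ B₂).charpoly := by
  rw [← Matrix.charpoly_reindex (e.prodCongr (Equiv.refl (Fin m)))]
  congr 1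
  ext ⟨i, k⟩ ⟨j, l⟩
  simp only [reindex_apply, submatrix_apply, Matrix.add_apply, kroneckerMap_apply, Equiv.prodCongr_symm,
    Equiv.prodCongr_apply, Equiv.refl_symm, Prod.map, Equiv.refl_apply, one_apply,
    EmbeddingLike.apply_eq_iff_eq]

lemma my_eval_charpoly {I : Type*} [Fintype I] [DecidableEq I] (A : Matrix I I R) (t : R) :
    (A.charpoly).eval t = (t • (1 : Matrix I I R) - A).det := by
  rw [Matrix.charpoly, ← coe_evalRingHom, RingHom.map_det]
  congr 1
  ext i j
  by_cases h : i = j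
  · subst h; simp
  · simp [h]

variable {R : Type*} [CommRing R] {n m : ℕ}

lemma my_kron_block (A₁₁ : Matrix Unit Unit R) (A₁₂ : Matrix Unit (Fin n) R)
    (A₂₂ : Matrix (Fin n) (Fin n) R) (B₁ B₂ : Matrix (Fin m) (Fin m) R) :
    ((1 : Matrix (Unit ⊕ Fin n) (Unit ⊕ Fin n) R) ⊗ₖ B₁
        + (fromBlocks A₁₁ A₁₂ 0 A₂₂) ⊗ₖ B₂).charpoly
      = ((1 : Matrix Unit Unit R) ⊗ₖ B₁ + A₁₁ ⊗ₖ B₂).charpoly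
        * ((1 : Matrix (Fin n) (Fin n) R) ⊗ₖ B₁ + A₂₂ ⊗ₖ B₂).charpoly := by
  rw [← Matrix.charpoly_reindex (Equiv.sumProdDistrib Unit (Fin n) (Fin m)),
    ← Matrix.charpoly_fromBlocks_zero₂₁
      ((1 : Matrix Unit Unit R) ⊗ₖ B₁ + A₁₁ ⊗ₖ B₂) (A₁₂ ⊗ₖ B₂)
      ((1 : Matrix (Fin n) (Fin n) R) ⊗ₖ B₁ + A₂₂ ⊗ₖ B₂)]
  congr 1
  ext x y
  rcases x with ⟨i, k⟩ | ⟨i, k⟩ <;> rcases y with ⟨j, l⟩ | ⟨j, l⟩ <;>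
    simp [fromBlocks, one_apply]

lemma my_kron_unit (a : R) (A₁₁ : Matrix Unit Unit R) (h : A₁₁ = of fun _ _ => a)
    (B₁ B₂ : Matrix (Fin m) (Fin m) R) :
    ((1 : Matrix Unit Unit R) ⊗ₖ B₁ + A₁₁ ⊗ₖ B₂).charpoly = (B₁ + a • B₂).charpoly := by
  subst h
  rw [← Matrix.charpoly_reindex (Equiv.punitProd (Fin m))]
  congr 1
  ext k l
  simp [one_apply]

variable {R : Type*} [CommRing R]

lemma my_charpoly_conj {I : Type*} [Fintype I] [DecidableEq I]
    (P Q M : Matrix I I R) (hPQ : P * Q = 1) :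
    (P * M * Q).charpoly = M.charpoly := by
  have h1 : P.map C * Q.map C = 1 := by
    rw [← Matrix.map_mul, hPQ, Matrix.map_one C (map_zero C) (map_one C)]
  have hc : charmatrix (P * M * Q) = P.map C * charmatrix M * Q.map C := by
    rw [charmatrix, charmatrix]
    have hs : P.map C * Matrix.scalar I (X : R[X]) * Q.map C = Matrix.scalar I (X : R[X]) := by
      rw [← (Matrix.scalar_commute (X : R[X]) (fun r => Commute.all _ _) (P.map C)).eq,
        mul_assoc, h1, mul_one]
    rw [mul_sub, sub_mul, hs]
    congr 1
    simp [RingHom.mapMatrix_apply, Matrix.map_mul]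
  rw [Matrix.charpoly, hc, det_mul, det_mul, Matrix.charpoly,
    mul_comm ((P.map C).det), mul_assoc, ← det_mul, h1, det_one, mul_one]

lemma my_decomp {n : ℕ} (A : Matrix (Fin (n + 1)) (Fin (n + 1)) ℂ) (lam : ℂ)
    (h : (lam • (1 : Matrix (Fin (n + 1)) (Fin (n + 1)) ℂ) - A).det = 0) :
    ∃ A' : Matrix (Fin n) (Fin n) ℂ,
      A.charpoly = (X - C lam) * A'.charpoly ∧
      ∀ {m : ℕ} (B₁ B₂ : Matrix (Fin m) (Fin m) ℂ),
        ((1 : Matrix (Fin (n + 1)) (Fin (n + 1)) ℂ) ⊗ₖ B₁ + A ⊗ₖ B₂).charpoly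
          = (B₁ + lam • B₂).charpoly
            * ((1 : Matrix (Fin n) (Fin n) ℂ) ⊗ₖ B₁ + A' ⊗ₖ B₂).charpoly := by
  obtain ⟨v, hv0, hv⟩ := (Matrix.exists_mulVec_eq_zero_iff).mpr h
  have hAv : A *ᵥ v = lam • v := by
    rw [sub_mulVec, smul_mulVec, one_mulVec, sub_eq_zero] at hv
    exact hv.symm
  obtain ⟨i₀, hi₀⟩ : ∃ i, v i ≠ 0 := Function.ne_iff.mp hv0
  set P : Matrix (Fin (n + 1)) (Fin (n + 1)) ℂ := updateCol 1 i₀ v with hPdef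
  have hdet : P.det = v i₀ := by
    rw [← cramer_apply, cramer_one]; rfl
  have hP : IsUnit P.det := by rw [hdet]; exact hi₀.isUnit
  have hPinv : P⁻¹ * P = 1 := nonsing_inv_mul P hP
  have hPinv' : P * P⁻¹ = 1 := mul_nonsing_inv P hP
  set M' : Matrix (Fin (n + 1)) (Fin (n + 1)) ℂ := P⁻¹ * A * P with hM'def
  have hM'A : M'.charpoly = A.charpoly := my_charpoly_conj _ _ _ hPinv
  -- the i0 column of M' is lam * e_{i0}
  have hPcol : ∀ k, P k i₀ = v k := fun k => updateCol_self
  have hPe : P *ᵥ Pi.single i₀ 1 = v := by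
    ext k
    rw [mulVec_single]
    simp [hPcol]
  have hPiv : P⁻¹ *ᵥ v = Pi.single i₀ 1 := by
    rw [← hPe, mulVec_mulVec, hPinv, one_mulVec]
  have hcol : ∀ j, M' j i₀ = lam * (Pi.single i₀ 1 : Fin (n + 1) → ℂ) j := by
    intro j
    have hAP : ∀ j, (A * P) j i₀ = lam * v j := by
      intro j
      rw [mul_apply]
      have h2 : ∑ k, A j k * P k i₀ = (A *ᵥ v) j := by
        simp [mulVec, dotProduct, hPcol]
      rw [h2, hAv]
      simp [mul_comm]
    have h3 : M' j i₀ = ∑ k, P⁻¹ j k * (A * P) k i₀ := by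
      rw [hM'def, mul_assoc, mul_apply]
    rw [h3]
    simp only [hAP]
    have h4 : ∑ k, P⁻¹ j k * (lam * v k) = lam * (P⁻¹ *ᵥ v) j := by
      simp only [mulVec, dotProduct, Finset.mul_sum]
      apply Finset.sum_congr rfl
      intros; ring
    rw [h4, hPiv]
  -- reindex to Unit + Fin n
  set e : Fin (n + 1) ≃ (Unit ⊕ Fin n) :=
    (finSuccEquiv' i₀).trans ((Equiv.optionEquivSumPUnit (Fin n)).trans
      (Equiv.sumComm (Fin n) Unit)) with hedef
  have he_inl : e.symm (Sum.inl ()) = i₀ := by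
    simp [hedef, finSuccEquiv'_symm_none]
  have he_inr : ∀ j, e.symm (Sum.inr j) ≠ i₀ := by
    intro j
    simp only [hedef, Equiv.symm_trans_apply, Equiv.sumComm_symm, Equiv.sumComm_apply,
      Sum.swap_inr, Equiv.optionEquivSumPUnit_symm_inl, finSuccEquiv'_symm_some]
    exact i₀.succAbove_ne j
  set T : Matrix (Unit ⊕ Fin n) (Unit ⊕ Fin n) ℂ := reindex e e M' with hTdef
  set A' : Matrix (Fin n) (Fin n) ℂ := T.toBlocks₂₂ with hA'def
  have h11 : T.toBlocks₁₁ = of fun _ _ => lam := by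
    ext i j
    show T (Sum.inl i) (Sum.inl j) = lam
    rw [hTdef]
    simp only [reindex_apply, submatrix_apply]
    have hi : (Sum.inl i : Unit ⊕ Fin n) = Sum.inl () := rfl
    have hj : (Sum.inl j : Unit ⊕ Fin n) = Sum.inl () := rfl
    rw [hi, hj, he_inl, hcol i₀]
    simp
  have h21 : T.toBlocks₂₁ = 0 := by
    ext i j
    show T (Sum.inr i) (Sum.inl j) = 0
    rw [hTdef]
    simp only [reindex_apply, submatrix_apply]
    have hj : (Sum.inl j : Unit ⊕ Fin n) = Sum.inl () := rfl
    rw [hj, he_inl, hcol]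
    simp [Pi.single_eq_of_ne (he_inr i)]
  have hT : T = fromBlocks (of fun _ _ => lam) T.toBlocks₁₂ 0 A' := by
    conv_lhs => rw [← fromBlocks_toBlocks T]
    rw [h11, h21, hA'def]
  have hunit : (of (fun _ _ => lam) : Matrix Unit Unit ℂ).charpoly = X - C lam := by
    rw [Matrix.charpoly, det_unique, charmatrix_apply_eq]
    rfl
  have hTc : T.charpoly = (X - C lam) * A'.charpoly := by
    rw [hT, Matrix.charpoly_fromBlocks_zero₂₁, hunit]
  refine ⟨A', ?_, ?_⟩
  · rw [← hM'A, ← Matrix.charpoly_reindex e M', ← hTdef, hTc]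
  · intro m B₁ B₂
    have hconj : (P⁻¹ ⊗ₖ (1 : Matrix (Fin m) (Fin m) ℂ))
          * ((1 : Matrix (Fin (n + 1)) (Fin (n + 1)) ℂ) ⊗ₖ B₁ + A ⊗ₖ B₂)
          * (P ⊗ₖ (1 : Matrix (Fin m) (Fin m) ℂ))
        = (1 : Matrix (Fin (n + 1)) (Fin (n + 1)) ℂ) ⊗ₖ B₁ + M' ⊗ₖ B₂ := by
      simp only [mul_add, add_mul, ← mul_kronecker_mul, Matrix.mul_one, Matrix.one_mul]
      rw [hPinv, hM'def]
    have hunits : (P⁻¹ ⊗ₖ (1 : Matrix (Fin m) (Fin m) ℂ))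
        * (P ⊗ₖ (1 : Matrix (Fin m) (Fin m) ℂ)) = 1 := by
      rw [← mul_kronecker_mul, hPinv, Matrix.one_mul, one_kronecker_one]
    calc ((1 : Matrix (Fin (n + 1)) (Fin (n + 1)) ℂ) ⊗ₖ B₁ + A ⊗ₖ B₂).charpoly
        = ((1 : Matrix (Fin (n + 1)) (Fin (n + 1)) ℂ) ⊗ₖ B₁ + M' ⊗ₖ B₂).charpoly := by
          rw [← hconj]
          exact (my_charpoly_conj _ _ _ hunits).symm
      _ = ((1 : Matrix (Unit ⊕ Fin n) (Unit ⊕ Fin n) ℂ) ⊗ₖ B₁ + T ⊗ₖ B₂).charpoly := by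
          rw [hTdef]
          exact (my_kron_reindex e M' B₁ B₂).symm
      _ = (B₁ + lam • B₂).charpoly
            * ((1 : Matrix (Fin n) (Fin n) ℂ) ⊗ₖ B₁ + A' ⊗ₖ B₂).charpoly := by
          rw [hT, my_kron_block, my_kron_unit lam _ rfl]

end Aux

/-- If `A` is an `n × n` complex matrix with eigenvalues `μ 1, …, μ n`
listed with multiplicity (i.e. its characteristic polynomial factors as `∏ j, (X - μ j)`),
and `B₁, B₂` are `m × m` complex matrices, then the characteristic polynomial of
`I ⊗ B₁ + A ⊗ B₂` is the product over `j` of the characteristic polynomials of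
`B₁ + μ j • B₂`. -/
theorem stmt1 {n m : ℕ}
    (A : Matrix (Fin n) (Fin n) ℂ)
    (μ : Fin n → ℂ)
    (hμ : A.charpoly = ∏ j : Fin n, (X - C (μ j)))
    (B₁ B₂ : Matrix (Fin m) (Fin m) ℂ) :
    ((1 : Matrix (Fin n) (Fin n) ℂ) ⊗ₖ B₁ + A ⊗ₖ B₂).charpoly
      = ∏ j : Fin n, (B₁ + μ j • B₂).charpoly := by
  induction n with
  | zero => simp [Matrix.charpoly, Matrix.det_isEmpty]
  | succ n IH =>
    have hlam : ((μ 0) • (1 : Matrix (Fin (n + 1)) (Fin (n + 1)) ℂ) - A).det = 0 := by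
      rw [← my_eval_charpoly, hμ, eval_prod]
      refine Finset.prod_eq_zero (Finset.mem_univ 0) ?_
      simp
    obtain ⟨A', hc, hk⟩ := my_decomp A (μ 0) hlam
    have hA'c : A'.charpoly = ∏ j : Fin n, (X - C (μ j.succ)) := by
      refine mul_left_cancel₀ (X_sub_C_ne_zero (μ 0)) ?_
      rw [← hc, hμ, Fin.prod_univ_succ]
    rw [hk B₁ B₂, IH A' (fun j => μ j.succ) hA'c, Fin.prod_univ_succ]
end

section
/- Let A be an n×n complex matrix with eigenvalues λ_1,…,λ_n listed with multiplicity (the roots of its characteristic polynomial), let p_1,…,p_r be polynomials with complex coefficients, and let B_1,…,B_r be m×m complex matrices. Then the characteristic polynomial of C = Σ_{i=1}^r p_i(A) ⊗ B_i equals the product over j = 1,…,n of the characteristic polynomials of Σ_{i=1}^r p_i(λ_j) B_i; in particular, the eigenvalues of C are exactly the eigenvalues of Σ_i p_i(λ_j) B_i for j = 1,…,n. -/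
open Matrix Polynomial
open scoped Kronecker

namespace Stmt2Aux

lemma aeval_conj {ι : Type*} [Fintype ι] [DecidableEq ι]
    (P P' T : Matrix ι ι ℂ) (h1 : P * P' = 1) (h2 : P' * P = 1) (q : Polynomial ℂ) :
    Polynomial.aeval (P * T * P') q = P * Polynomial.aeval T q * P' := by
  induction q using Polynomial.induction_on with
  | C a =>
      simp only [aeval_C, Algebra.algebraMap_eq_smul_one, mul_smul_comm, smul_mul_assoc,
        one_mul, mul_one, h1]
  | add p q hp hq => simp [hp, hq, mul_add, add_mul]
  | monomial k a ih =>
      have e : (C a * X ^ (k + 1) : Polynomial ℂ) = C a * X ^ k * X := by ring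
      rw [e, _root_.map_mul (aeval (P * T * P')) (C a * X ^ k) X,
        _root_.map_mul (aeval T) (C a * X ^ k) X, ih, aeval_X, aeval_X]
      simp only [mul_assoc]
      rw [← mul_assoc P' P, h2, one_mul]

lemma charpoly_conj {ι : Type*} [Fintype ι] [DecidableEq ι]
    (P P' K : Matrix ι ι ℂ) (h1 : P * P' = 1) (h2 : P' * P = 1) :
    (P * K * P').charpoly = K.charpoly := by
  have hcm : charmatrix (P * K * P')
      = (C : ℂ →+* ℂ[X]).mapMatrix P * charmatrix K * (C : ℂ →+* ℂ[X]).mapMatrix P' := by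
    unfold charmatrix
    rw [mul_sub, sub_mul]
    congr 1
    · rw [← (Matrix.scalar_commute (X : ℂ[X]) (fun r => Commute.all _ _)
        ((C : ℂ →+* ℂ[X]).mapMatrix P)).eq, mul_assoc, ← _root_.map_mul, h1, _root_.map_one, mul_one]
    · rw [← _root_.map_mul, ← _root_.map_mul]
  unfold Matrix.charpoly
  have hPP : (C : ℂ →+* ℂ[X]).mapMatrix P' * (C : ℂ →+* ℂ[X]).mapMatrix P = 1 := by
    rw [← _root_.map_mul, h2, _root_.map_one]
  rw [hcm, det_mul, det_mul, mul_comm, ← mul_assoc, ← det_mul, hPP, det_one, one_mul]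

lemma exists_triangular : ∀ (N : ℕ) (A : Matrix (Fin N) (Fin N) ℂ),
    ∃ P P' : Matrix (Fin N) (Fin N) ℂ,
      P * P' = 1 ∧ P' * P = 1 ∧ (P' * A * P).BlockTriangular id := by
  intro N
  induction N with
  | zero =>
      intro A
      exact ⟨1, 1, by simp, by simp, fun i j _ => i.elim0⟩
  | succ n IH =>
      intro A
      obtain ⟨μ0, hμ0⟩ := Module.End.exists_eigenvalue (Matrix.mulVecLin A)
      obtain ⟨v, hv⟩ := hμ0.exists_hasEigenvector
      have hve : A.mulVec v = μ0 • v := by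
        have := hv.apply_eq_smul
        simpa [Matrix.mulVecLin_apply] using this
      obtain ⟨k, hk⟩ := Function.ne_iff.mp hv.right
      set P₀ : Matrix (Fin (n+1)) (Fin (n+1)) ℂ :=
        ((1 : Matrix (Fin (n+1)) (Fin (n+1)) ℂ).updateCol k v).submatrix id
          (Equiv.swap (0 : Fin (n+1)) k) with hP₀def
      have hdet : IsUnit P₀.det := by
        rw [hP₀def, Matrix.det_permute', ← Matrix.cramer_apply, Matrix.cramer_one]
        simp only [Module.End.one_apply]
        exact ((Equiv.Perm.sign (Equiv.swap 0 k)).isUnit.map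
          (Int.castRingHom ℂ)).mul (isUnit_iff_ne_zero.mpr (by simpa using hk))
      have hP0l : P₀ * P₀⁻¹ = 1 := Matrix.mul_nonsing_inv _ hdet
      have hP0r : P₀⁻¹ * P₀ = 1 := Matrix.nonsing_inv_mul _ hdet
      have hvcol : P₀.mulVec (Pi.single 0 1) = v := by
        funext i
        simp [hP₀def, Matrix.mulVec_single, Matrix.submatrix_apply,
          Matrix.updateCol_apply]
      set M : Matrix (Fin (n+1)) (Fin (n+1)) ℂ := P₀⁻¹ * A * P₀ with hMdef
      have hMe : M.mulVec (Pi.single 0 1) = μ0 • (Pi.single 0 1 : Fin (n+1) → ℂ) := by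
        have h1 : M.mulVec (Pi.single 0 1) = P₀⁻¹.mulVec (A.mulVec (P₀.mulVec (Pi.single 0 1))) := by
          rw [Matrix.mulVec_mulVec, Matrix.mulVec_mulVec]
        rw [h1, hvcol, hve, Matrix.mulVec_smul, ← hvcol, Matrix.mulVec_mulVec, hP0r,
          Matrix.one_mulVec]
      have hcol : ∀ i : Fin (n+1), M i 0 = if i = 0 then μ0 else 0 := by
        intro i
        have := congrFun hMe i
        simp only [Matrix.mulVec_single, mul_one, MulOpposite.op_one, one_smul, Matrix.col_apply] at this
        rw [this]
        by_cases h : i = 0 <;> simp [h, Pi.single_apply]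
      set A' : Matrix (Fin n) (Fin n) ℂ := M.submatrix Fin.succ Fin.succ with hA'def
      obtain ⟨Q, Q', hQ1, hQ2, hQt⟩ := IH A'
      set s : Fin (n+1) ≃ (Fin 1 ⊕ Fin n) :=
        (finSumFinEquiv.trans (finCongr (Nat.add_comm 1 n))).symm with hsdef
      have hsinl : ∀ x : Fin 1, s.symm (Sum.inl x) = 0 := by
        intro x
        have : x = 0 := Subsingleton.elim _ _
        subst this
        rfl
      have hsinr : ∀ j : Fin n, s.symm (Sum.inr j) = Fin.succ j := by
        intro j
        apply Fin.ext
        simp [hsdef, finSumFinEquiv, Nat.add_comm]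
      set Qh : Matrix (Fin (n+1)) (Fin (n+1)) ℂ :=
        (Matrix.fromBlocks (1 : Matrix (Fin 1) (Fin 1) ℂ) 0 0 Q).submatrix s s with hQh
      set Qh' : Matrix (Fin (n+1)) (Fin (n+1)) ℂ :=
        (Matrix.fromBlocks (1 : Matrix (Fin 1) (Fin 1) ℂ) 0 0 Q').submatrix s s with hQh'
      have hmuls : ∀ X Y : Matrix (Fin 1 ⊕ Fin n) (Fin 1 ⊕ Fin n) ℂ,
          X.submatrix s s * Y.submatrix s s = (X * Y).submatrix s s := fun X Y =>
        Matrix.submatrix_mul_equiv X Y s s s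
      have hQh1 : Qh * Qh' = 1 := by
        rw [hQh, hQh', hmuls, Matrix.fromBlocks_multiply]
        simp [hQ1, Matrix.fromBlocks_one]
      have hQh2 : Qh' * Qh = 1 := by
        rw [hQh, hQh', hmuls, Matrix.fromBlocks_multiply]
        simp [hQ2, Matrix.fromBlocks_one]
      refine ⟨P₀ * Qh, Qh' * P₀⁻¹, ?_, ?_, ?_⟩
      · calc P₀ * Qh * (Qh' * P₀⁻¹) = P₀ * (Qh * Qh') * P₀⁻¹ := by
              simp only [mul_assoc]
          _ = 1 := by rw [hQh1, mul_one, hP0l]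
      · calc Qh' * P₀⁻¹ * (P₀ * Qh) = Qh' * (P₀⁻¹ * P₀) * Qh := by
              simp only [mul_assoc]
          _ = 1 := by rw [hP0r, mul_one, hQh2]
      · have hrw : Qh' * P₀⁻¹ * A * (P₀ * Qh) = Qh' * M * Qh := by
          rw [hMdef]; simp only [mul_assoc]
        rw [hrw]
        set N' : Matrix (Fin 1 ⊕ Fin n) (Fin 1 ⊕ Fin n) ℂ :=
          Matrix.fromBlocks (Matrix.of fun _ _ => M 0 0)
            (Matrix.of fun (_ : Fin 1) j => M 0 (Fin.succ j)) 0 A' with hN'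
        have hMN : M = N'.submatrix s s := by
          ext i j
          rw [Matrix.submatrix_apply]
          have hi : i = s.symm (s i) := (Equiv.symm_apply_apply s i).symm
          have hj : j = s.symm (s j) := (Equiv.symm_apply_apply s j).symm
          rcases hx : s i with x | x <;> rcases hy : s j with y | y <;>
            rw [hx] at hi <;> rw [hy] at hj
          · have hx0 : (x : Fin 1) = 0 := Subsingleton.elim _ _
            have hy0 : (y : Fin 1) = 0 := Subsingleton.elim _ _
            rw [hi, hj, hsinl, hsinl]
            simp [hN']
          · rw [hi, hj, hsinl, hsinr]
            simp [hN']
          · rw [hi, hj, hsinr, hsinl]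
            simp only [hN', Matrix.fromBlocks_apply₂₁, Matrix.zero_apply]
            rw [hcol]
            simp [Fin.succ_ne_zero]
          · rw [hi, hj, hsinr, hsinr]
            simp [hN', hA'def]
        rw [hMN, hQh, hQh', hmuls, hmuls]
        set G : Matrix (Fin 1 ⊕ Fin n) (Fin 1 ⊕ Fin n) ℂ :=
          Matrix.fromBlocks (1 : Matrix (Fin 1) (Fin 1) ℂ) 0 0 Q' * N' *
            Matrix.fromBlocks (1 : Matrix (Fin 1) (Fin 1) ℂ) 0 0 Q with hG
        intro i j hij
        rw [Matrix.submatrix_apply]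
        have hi : i = s.symm (s i) := (Equiv.symm_apply_apply s i).symm
        have hj : j = s.symm (s j) := (Equiv.symm_apply_apply s j).symm
        rcases hx : s i with x | x <;> rcases hy : s j with y | y <;>
          rw [hx] at hi <;> rw [hy] at hj
        · exfalso
          rw [hi, hsinl] at hij
          exact Fin.not_lt_zero j hij
        · exfalso
          rw [hi, hsinl] at hij
          exact Fin.not_lt_zero j hij
        · simp [hG, Matrix.fromBlocks_multiply, hN']
        · have hlt : y < x := by
            rw [hi, hsinr, hj, hsinr] at hij
            exact Fin.succ_lt_succ_iff.mp hij
          have : G (Sum.inr x) (Sum.inr y) = (Q' * A' * Q) x y := by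
            simp [hG, Matrix.fromBlocks_multiply, hN', Matrix.mul_assoc]
          rw [this]
          exact hQt hlt

lemma diag_mul_triangular {N : ℕ} {S T : Matrix (Fin N) (Fin N) ℂ}
    (hS : S.BlockTriangular id) (hT : T.BlockTriangular id) (j : Fin N) :
    (S * T) j j = S j j * T j j := by
  rw [Matrix.mul_apply]
  apply Finset.sum_eq_single j
  · intro k _ hkj
    rcases lt_or_gt_of_ne hkj with h | h
    · rw [hS h, zero_mul]
    · rw [hT h, mul_zero]
  · intro h; exact absurd (Finset.mem_univ j) h

lemma aeval_triangular {N : ℕ} (T : Matrix (Fin N) (Fin N) ℂ)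
    (hT : T.BlockTriangular id) (q : Polynomial ℂ) :
    (Polynomial.aeval T q).BlockTriangular id ∧
      ∀ j, (Polynomial.aeval T q) j j = q.eval (T j j) := by
  induction q using Polynomial.induction_on with
  | C a =>
      refine ⟨fun i j hij => ?_, fun j => ?_⟩
      · simp only [aeval_C, Algebra.algebraMap_eq_smul_one, Matrix.smul_apply,
          smul_eq_mul]
        have hne : i ≠ j := fun h => by subst h; exact lt_irrefl _ hij
        rw [Matrix.one_apply_ne hne, mul_zero]
      · simp [aeval_C, Algebra.algebraMap_eq_smul_one, Matrix.smul_apply]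
  | add p q hp hq =>
      rw [_root_.map_add]
      refine ⟨hp.1.add hq.1, fun j => ?_⟩
      simp [Matrix.add_apply, hp.2 j, hq.2 j]
  | monomial k a ih =>
      have e : (C a * X ^ (k + 1) : Polynomial ℂ) = C a * X ^ k * X := by ring
      rw [e]
      rw [_root_.map_mul (aeval T) (C a * X ^ k) X, aeval_X]
      refine ⟨ih.1.mul hT, fun j => ?_⟩
      rw [diag_mul_triangular ih.1 hT j, ih.2 j]
      simp [eval_mul]

end Stmt2Aux

set_option maxHeartbeats 1000000 in
/-- If `A` is an `n × n` complex matrix with eigenvalues `μ 1, …, μ n`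
listed with multiplicity, `p 1, …, p r` are complex polynomials and `B 1, …, B r` are
`m × m` complex matrices, then the characteristic polynomial of `C = ∑ i, p i (A) ⊗ B i`
is the product over `j` of the characteristic polynomials of `∑ i, p i (μ j) • B i`. -/
theorem stmt2 {n m r : ℕ}
    (A : Matrix (Fin n) (Fin n) ℂ)
    (μ : Fin n → ℂ)
    (hμ : A.charpoly = ∏ j : Fin n, (X - C (μ j)))
    (p : Fin r → Polynomial ℂ)
    (B : Fin r → Matrix (Fin m) (Fin m) ℂ) :
    (∑ i, (Polynomial.aeval A (p i)) ⊗ₖ B i).charpoly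
      = ∏ j : Fin n, (∑ i, ((p i).eval (μ j)) • B i).charpoly := by
  classical
  rcases Nat.eq_zero_or_pos m with hm | hm
  · subst hm
    have h1 : (∑ i, (Polynomial.aeval A (p i)) ⊗ₖ B i).charpoly = 1 := by
      rw [Matrix.charpoly, Matrix.det_isEmpty]
    have h2 : ∀ j : Fin n, (∑ i, ((p i).eval (μ j)) • B i).charpoly = 1 := fun j => by
      rw [Matrix.charpoly, Matrix.det_isEmpty]
    simp [h1, h2]
  obtain ⟨P, P', hPP', hP'P, htr⟩ := Stmt2Aux.exists_triangular n A
  set T : Matrix (Fin n) (Fin n) ℂ := P' * A * P with hT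
  have hA : A = P * T * P' := by
    rw [hT]
    calc A = (P * P') * A * (P * P') := by rw [hPP']; simp
      _ = P * (P' * A * P) * P' := by simp only [mul_assoc]
  set d : Fin n → ℂ := fun j => T j j with hd
  have hcharT : T.charpoly = A.charpoly := by
    rw [hT]
    exact Stmt2Aux.charpoly_conj P' P A hP'P hPP'
  have hcharTd : T.charpoly = ∏ j : Fin n, (X - C (d j)) :=
    Matrix.charpoly_of_upperTriangular T htr
  have hms : Multiset.map d Finset.univ.val = Multiset.map μ Finset.univ.val := by
    have h1 : ((Multiset.map d Finset.univ.val).map fun a => X - C a).prod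
        = ((Multiset.map μ Finset.univ.val).map fun a => X - C a).prod := by
      rw [Multiset.map_map, Multiset.map_map]
      calc (Multiset.map ((fun a => X - C a) ∘ d) Finset.univ.val).prod
          = ∏ j : Fin n, (X - C (d j)) := (Finset.prod_eq_multiset_prod _ _).symm
        _ = ∏ j : Fin n, (X - C (μ j)) := by rw [← hcharTd, hcharT, hμ]
        _ = (Multiset.map ((fun a => X - C a) ∘ μ) Finset.univ.val).prod :=
            Finset.prod_eq_multiset_prod _ _
    have h2 := congrArg Polynomial.roots h1
    rwa [Polynomial.roots_multiset_prod_X_sub_C, Polynomial.roots_multiset_prod_X_sub_C] at h2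
  have hprodswap : ∀ g : ℂ → Polynomial ℂ, (∏ j : Fin n, g (μ j)) = ∏ j : Fin n, g (d j) := by
    intro g
    rw [Finset.prod_eq_multiset_prod, Finset.prod_eq_multiset_prod]
    rw [show (Multiset.map (fun j => g (μ j)) Finset.univ.val)
        = Multiset.map g (Multiset.map μ Finset.univ.val) by rw [Multiset.map_map]; rfl]
    rw [show (Multiset.map (fun j => g (d j)) Finset.univ.val)
        = Multiset.map g (Multiset.map d Finset.univ.val) by rw [Multiset.map_map]; rfl]
    rw [hms]
  set K : Matrix (Fin n × Fin m) (Fin n × Fin m) ℂ :=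
    ∑ i, (Polynomial.aeval T (p i)) ⊗ₖ B i with hK
  have hsum : (∑ i, (Polynomial.aeval A (p i)) ⊗ₖ B i)
      = (P ⊗ₖ (1 : Matrix (Fin m) (Fin m) ℂ)) * K * ((P' ⊗ₖ 1)) := by
    rw [hK, Finset.mul_sum, Finset.sum_mul]
    apply Finset.sum_congr rfl
    intro i _
    rw [hA, Stmt2Aux.aeval_conj P P' T hPP' hP'P]
    calc (P * Polynomial.aeval T (p i) * P') ⊗ₖ B i
        = (P * Polynomial.aeval T (p i) * P') ⊗ₖ (1 * B i * 1) := by rw [one_mul, mul_one]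
      _ = (P ⊗ₖ 1) * ((Polynomial.aeval T (p i)) ⊗ₖ B i) * (P' ⊗ₖ 1) := by
          rw [Matrix.mul_kronecker_mul, Matrix.mul_kronecker_mul]
  have hkron1 : (P ⊗ₖ (1 : Matrix (Fin m) (Fin m) ℂ)) * (P' ⊗ₖ 1) = 1 := by
    rw [← Matrix.mul_kronecker_mul, hPP', one_mul, Matrix.one_kronecker_one]
  have hkron2 : ((P' : Matrix (Fin n) (Fin n) ℂ) ⊗ₖ (1 : Matrix (Fin m) (Fin m) ℂ)) *
      (P ⊗ₖ 1) = 1 := by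
    rw [← Matrix.mul_kronecker_mul, hP'P, one_mul, Matrix.one_kronecker_one]
  rw [hsum, Stmt2Aux.charpoly_conj _ _ _ hkron1 hkron2]
  have hKtri : K.BlockTriangular (Prod.fst) := by
    intro x y hxy
    rw [hK, Matrix.sum_apply]
    apply Finset.sum_eq_zero
    intro i _
    rw [Matrix.kroneckerMap_apply, (Stmt2Aux.aeval_triangular T htr (p i)).1 hxy, zero_mul]
  have himg : Finset.image Prod.fst (Finset.univ : Finset (Fin n × Fin m)) = Finset.univ := by
    apply Finset.eq_univ_of_forall
    intro j
    exact Finset.mem_image.mpr ⟨(j, ⟨0, hm⟩), Finset.mem_univ _, rfl⟩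
  have hblock : ∀ j : Fin n, (K.toSquareBlock Prod.fst j).charpoly
      = (∑ i, ((p i).eval (d j)) • B i).charpoly := by
    intro j
    let e : {x : Fin n × Fin m // x.1 = j} ≃ Fin m :=
      { toFun := fun x => x.1.2
        invFun := fun a => ⟨(j, a), rfl⟩
        left_inv := fun x => by
          obtain ⟨⟨x1, x2⟩, hx⟩ := x
          simp at hx
          subst hx
          rfl
        right_inv := fun a => rfl }
    have he : Matrix.reindex e e (K.toSquareBlock Prod.fst j)
        = ∑ i, ((p i).eval (d j)) • B i := by
      ext a b
      rw [Matrix.reindex_apply, Matrix.submatrix_apply]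
      have hsa : ((e.symm a : {x : Fin n × Fin m // x.1 = j}) : Fin n × Fin m) = (j, a) := rfl
      have hsb : ((e.symm b : {x : Fin n × Fin m // x.1 = j}) : Fin n × Fin m) = (j, b) := rfl
      simp only [Matrix.toSquareBlock_def, Matrix.of_apply, hsa, hsb, hK, Matrix.sum_apply,
        Matrix.kroneckerMap_apply, Matrix.smul_apply, smul_eq_mul]
      apply Finset.sum_congr rfl
      intro i _
      rw [(Stmt2Aux.aeval_triangular T htr (p i)).2 j]
    rw [← Matrix.charpoly_reindex e (K.toSquareBlock Prod.fst j), he]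
  have t1 : K.charpoly = ∏ j : Fin n, (K.toSquareBlock Prod.fst j).charpoly := by
    rw [Matrix.charpoly, Matrix.BlockTriangular.det_fintype hKtri.charmatrix]
    exact Finset.prod_congr rfl fun j _ => by
      rw [Matrix.charpoly, Matrix.charmatrix_toSquareBlock]
  refine t1.trans (Eq.trans ?_
    ((hprodswap fun x => (∑ i, ((p i).eval x) • B i).charpoly).symm))
  exact Finset.prod_congr rfl fun j _ => hblock j
end

section
/- Let L_1,…,L_r be n×n real matrices with zero row sums and nonpositive off-diagonal entries (Laplacian matrices of weighted directed graphs on a common vertex set) that are simultaneously triangularizable: there exists an invertible n×n complex matrix P with P L_i P⁻¹ = J_i upper triangular for all i, with diagonal entries λ_{ij} = (J_i)_{jj}. Suppose 0 is a root of the characteristic polynomial of Σ_{i=1}^r L_i of multiplicity exactly 1 (equivalently, the reversal of the graph sum of the corresponding graphs contains a spanning directed tree). Then there is exactly one index j ∈ {1,…,n} such that λ_{ij} = 0 for all i = 1,…,r. -/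
open Matrix Polynomial

/-- Characteristic polynomial is invariant under conjugation. -/
private lemma charpoly_conj_aux {n : ℕ} (P A : Matrix (Fin n) (Fin n) ℂ) (hP : IsUnit P.det) :
    (P * A * P⁻¹).charpoly = A.charpoly := by
  have h1 : P * P⁻¹ = 1 := mul_nonsing_inv P hP
  have hmap : (P.map (C : ℂ →+* ℂ[X])) * ((P⁻¹).map (C : ℂ →+* ℂ[X])) = 1 := by
    rw [← Matrix.map_mul, h1, Matrix.map_one _ (map_zero _) (map_one _)]
  have hc : (P.map (C : ℂ →+* ℂ[X])) * Matrix.scalar (Fin n) (X : ℂ[X])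
      = Matrix.scalar (Fin n) (X : ℂ[X]) * (P.map (C : ℂ →+* ℂ[X])) :=
    ((scalar_commute (X : ℂ[X]) (fun r => Commute.all _ r) (P.map (C : ℂ →+* ℂ[X]))).eq).symm
  have key : charmatrix (P * A * P⁻¹)
      = (P.map (C : ℂ →+* ℂ[X])) * charmatrix A * ((P⁻¹).map (C : ℂ →+* ℂ[X])) := by
    rw [charmatrix, charmatrix]
    simp only [RingHom.mapMatrix_apply]
    rw [mul_sub, sub_mul, hc, mul_assoc (Matrix.scalar (Fin n) (X : ℂ[X])), hmap, mul_one]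
    congr 1
    simp [Matrix.map_mul, mul_assoc]
  have hdet : ((P.map (C : ℂ →+* ℂ[X])).det) * (((P⁻¹).map (C : ℂ →+* ℂ[X])).det) = 1 := by
    rw [← det_mul, hmap, det_one]
  rw [Matrix.charpoly, Matrix.charpoly, key, det_mul, det_mul, mul_right_comm, hdet, one_mul]

/-- Any complex root of the characteristic polynomial of a Laplacian matrix has nonnegative
real part, and is `0` if its real part is `0`. -/
private lemma lapl_root_aux {n : ℕ} (A : Matrix (Fin n) (Fin n) ℝ)
    (hrow : ∀ j, ∑ k, A j k = 0) (hoff : ∀ j k, j ≠ k → A j k ≤ 0) {μ : ℂ}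
    (hμ : ((A.map Complex.ofReal)).charpoly.IsRoot μ) :
    0 ≤ μ.re ∧ (μ.re = 0 → μ = 0) := by
  set Ac : Matrix (Fin n) (Fin n) ℂ := A.map Complex.ofReal with hAc
  -- from root of charpoly to singular matrix
  have hdet : (μ • (1 : Matrix (Fin n) (Fin n) ℂ) - Ac).det = 0 := by
    have h1 : (charmatrix Ac).map (evalRingHom μ) = μ • (1 : Matrix (Fin n) (Fin n) ℂ) - Ac := by
      ext i j
      by_cases h : i = j <;>
        simp [h, charmatrix_apply, Matrix.map_apply, Matrix.one_apply, Matrix.diagonal_apply,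
          Matrix.sub_apply, Matrix.smul_apply]
    have h2 := (RingHom.map_det (evalRingHom μ) (charmatrix Ac)).symm
    rw [RingHom.mapMatrix_apply, h1] at h2
    rw [h2]
    exact hμ
  obtain ⟨v, hv0, hv⟩ := (Matrix.exists_mulVec_eq_zero_iff.mpr hdet)
  have heig : Ac.mulVec v = μ • v := by
    have := hv
    rw [Matrix.sub_mulVec, Matrix.smul_mulVec, Matrix.one_mulVec, sub_eq_zero] at this
    exact this.symm
  have hev : Module.End.HasEigenvalue (Matrix.toLin' Ac) μ :=
    Module.End.hasEigenvalue_of_hasEigenvector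
      ⟨Module.End.mem_eigenspace_iff.mpr (by rw [Matrix.toLin'_apply, heig]), hv0⟩
  obtain ⟨k, hk⟩ := eigenvalue_mem_ball hev
  have hsum : ∑ j ∈ Finset.univ.erase k, ‖Ac k j‖ = A k k := by
    have h1 : ∀ j ∈ Finset.univ.erase k, ‖Ac k j‖ = -(A k j) := by
      intro j hj
      have hjk : j ≠ k := Finset.ne_of_mem_erase hj
      have : Ac k j = (A k j : ℂ) := rfl
      rw [this, Complex.norm_real, Real.norm_eq_abs, abs_of_nonpos (hoff k j (Ne.symm hjk))]
    rw [Finset.sum_congr rfl h1, Finset.sum_neg_distrib,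
      Finset.sum_erase_eq_sub (Finset.mem_univ k), hrow k]
    ring
  have hd0 : (0 : ℝ) ≤ A k k := by
    rw [← hsum]
    exact Finset.sum_nonneg fun j _ => norm_nonneg _
  have hkk : Ac k k = (A k k : ℂ) := rfl
  rw [Metric.mem_closedBall, hkk, hsum, Complex.dist_eq] at hk
  have habs : Complex.normSq (μ - (A k k : ℂ)) ≤ (A k k) ^ 2 := by
    have h2 : ‖μ - (A k k : ℂ)‖ ^ 2 ≤ (A k k) ^ 2 :=
      pow_le_pow_left₀ (norm_nonneg _) hk 2
    rwa [Complex.sq_norm] at h2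
  have hns : (μ.re - A k k) ^ 2 + μ.im ^ 2 ≤ (A k k) ^ 2 := by
    have : Complex.normSq (μ - (A k k : ℂ)) = (μ.re - A k k) ^ 2 + μ.im ^ 2 := by
      simp [Complex.normSq_apply, Complex.sub_re, Complex.sub_im]
      ring
    rwa [this] at habs
  constructor
  · nlinarith [sq_nonneg μ.re, sq_nonneg μ.im]
  · intro hre0
    have him : μ.im = 0 := by nlinarith [sq_nonneg μ.im]
    exact Complex.ext hre0 him

/-- Let `L 1, …, L r` be `n × n` real matrices with zero row sums and
nonpositive off-diagonal entries (Laplacian matrices) that are simultaneously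
triangularizable over `ℂ` via an invertible matrix `P`, with `P * L i * P⁻¹ = J i`
upper triangular and diagonal entries `λ_{ij} = (J i) j j`.  If `0` is a root of
multiplicity exactly `1` of the characteristic polynomial of `∑ i, L i`, then there is
exactly one index `j` such that `λ_{ij} = 0` for all `i`. -/
theorem stmt4 {n r : ℕ}
    (L : Fin r → Matrix (Fin n) (Fin n) ℝ)
    (hrow : ∀ i j, ∑ k, L i j k = 0)
    (hoff : ∀ i j k, j ≠ k → L i j k ≤ 0)
    (P : Matrix (Fin n) (Fin n) ℂ) (hP : IsUnit P.det)
    (J : Fin r → Matrix (Fin n) (Fin n) ℂ)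
    (hJ : ∀ i, P * (L i).map (Complex.ofReal) * P⁻¹ = J i)
    (htri : ∀ i, (J i).BlockTriangular id)
    (hmult : (∑ i, L i).charpoly.rootMultiplicity 0 = 1) :
    ∃! j : Fin n, ∀ i, J i j j = 0 := by
  classical
  set T : Matrix (Fin n) (Fin n) ℂ := ∑ i, J i with hT
  have hTtri : T.BlockTriangular id := by
    intro a b h
    rw [hT, Matrix.sum_apply]
    exact Finset.sum_eq_zero fun i _ => htri i h
  have hmapsum : (∑ i, L i).map Complex.ofReal = ∑ i, (L i).map Complex.ofReal := by
    ext j k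
    simp [Matrix.map_apply, Matrix.sum_apply]
  have hPT : P * ((∑ i, L i).map Complex.ofReal) * P⁻¹ = T := by
    rw [hmapsum, Finset.mul_sum, Finset.sum_mul, hT]
    exact Finset.sum_congr rfl fun i _ => hJ i
  -- charpoly over ℂ
  have hcp : (∑ i, L i).charpoly.map (Complex.ofRealHom) = ∏ j, (X - C (T j j)) := by
    rw [← Matrix.charpoly_map, ← charpoly_of_upperTriangular T hTtri, ← hPT,
      charpoly_conj_aux _ _ hP]
    rfl
  -- counting the zero diagonal entries of T
  have hcard : (Finset.univ.filter (fun j => T j j = 0)).card = 1 := by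
    have h1 : (∑ i, L i).charpoly.rootMultiplicity 0
        = (∏ j, (X - C (T j j))).rootMultiplicity 0 := by
      rw [Polynomial.eq_rootMultiplicity_map (f := Complex.ofRealHom)
        Complex.ofReal_injective 0, map_zero, hcp]
    have h2 : (∏ j : Fin n, (X - C (T j j)))
        = (Multiset.map (fun a => X - C a)
            (Multiset.map (fun j => T j j) Finset.univ.val)).prod := by
      rw [Multiset.map_map, ← Finset.prod_eq_multiset_prod]
      rfl
    have h3 : (∏ j : Fin n, (X - C (T j j))).roots
        = Multiset.map (fun j => T j j) Finset.univ.val := by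
      rw [h2, Polynomial.roots_multiset_prod_X_sub_C]
    have h4 : (∏ j : Fin n, (X - C (T j j))).rootMultiplicity 0
        = (Multiset.map (fun j => T j j) Finset.univ.val).count 0 := by
      rw [← Polynomial.count_roots, h3]
    have h5 : (Multiset.map (fun j => T j j) Finset.univ.val).count 0
        = (Finset.univ.filter (fun j => T j j = 0)).card := by
      rw [Multiset.count_map]
      simp [Finset.filter, eq_comm]
    rw [← h5, ← h4, ← h1, hmult]
  obtain ⟨j0, hj0⟩ := Finset.card_eq_one.mp hcard
  have hmem : ∀ j : Fin n, T j j = 0 ↔ j = j0 := by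
    intro j
    constructor
    · intro h
      have : j ∈ Finset.univ.filter (fun j => T j j = 0) := by
        simp [h]
      rw [hj0] at this
      exact Finset.mem_singleton.mp this
    · intro h
      subst h
      have : j ∈ ({j} : Finset (Fin n)) := Finset.mem_singleton_self j
      rw [← hj0] at this
      exact (Finset.mem_filter.mp this).2
  -- each diagonal entry of J i is a root of the charpoly of L i over ℂ
  have hroot : ∀ i j, ((L i).map Complex.ofReal).charpoly.IsRoot (J i j j) := by
    intro i j
    have h1 : ((L i).map Complex.ofReal).charpoly = (J i).charpoly := by
      rw [← hJ i, charpoly_conj_aux _ _ hP]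
    rw [h1, charpoly_of_upperTriangular _ (htri i)]
    have : IsRoot (∏ k : Fin n, (X - C (J i k k))) (J i j j) := by
      rw [IsRoot, eval_prod]
      exact Finset.prod_eq_zero (Finset.mem_univ j) (by simp)
    exact this
  have hre : ∀ i j, 0 ≤ (J i j j).re ∧ ((J i j j).re = 0 → J i j j = 0) :=
    fun i j => lapl_root_aux (L i) (hrow i) (hoff i) (hroot i j)
  -- the unique index
  refine ⟨j0, ?_, ?_⟩
  · -- all diagonal entries at j0 vanish
    have hsum0 : ∑ i, J i j0 j0 = 0 := by
      have := (hmem j0).mpr rfl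
      rwa [hT, Matrix.sum_apply] at this
    have hresum : ∑ i, (J i j0 j0).re = 0 := by
      have := congrArg Complex.re hsum0
      rwa [Complex.re_sum] at this
    have hzero : ∀ i ∈ Finset.univ, (J i j0 j0).re = 0 :=
      (Finset.sum_eq_zero_iff_of_nonneg (fun i _ => (hre i j0).1)).mp hresum
    intro i
    exact (hre i j0).2 (hzero i (Finset.mem_univ i))
  · -- uniqueness
    intro j hj
    apply (hmem j).mp
    rw [hT, Matrix.sum_apply]
    exact Finset.sum_eq_zero fun i _ => hj i
end

section
/- Let L_1,…,L_r be n×n real matrices with zero row sums and nonpositive off-diagonal entries (Laplacian matrices) that are simultaneously triangularizable via an invertible complex matrix P, P L_i P⁻¹ = J_i upper triangular, and assume all diagonal entries λ_{ij} = (J_i)_{jj} are real and nonnegative. Let B_1,…,B_r be m×m complex matrices such that every convex combination Σ_i t_i B_i (t_i ≥ 0, Σ_i t_i = 1) is invertible. If 0 is a root of the characteristic polynomial of Σ_{i=1}^r L_i of multiplicity exactly 1, then 0 is a root of the characteristic polynomial of the nm×nm matrix C = Σ_{i=1}^r L_i ⊗ B_i of multiplicity exactly m. -/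
open Matrix Polynomial
open scoped Kronecker

/-- Conjugation preserves the characteristic polynomial. -/
lemma charpoly_conj_aux_s5 {N : Type*} [Fintype N] [DecidableEq N] {R : Type*} [CommRing R]
    (P Q M : Matrix N N R) (hPQ : P * Q = 1) :
    (P * M * Q).charpoly = M.charpoly := by
  have h1 : (P.map (C : R →+* R[X])) * (Q.map C) = 1 := by
    rw [← Matrix.map_mul, hPQ, Matrix.map_one _ (map_zero _) (map_one _)]
  have hdiag : Matrix.diagonal (fun _ : N => (X : R[X])) = (X : R[X]) • (1 : Matrix N N R[X]) := by
    rw [Matrix.smul_one_eq_diagonal]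
  have hcm : charmatrix (P * M * Q) = P.map C * charmatrix M * Q.map C := by
    have e1 : ∀ (A : Matrix N N R), charmatrix A
        = Matrix.diagonal (fun _ : N => (X : R[X])) - A.map C := by
      intro A; ext i j; rw [charmatrix_apply]; simp [Matrix.sub_apply, Matrix.map_apply]
    rw [e1, e1, hdiag, Matrix.mul_sub, Matrix.sub_mul]
    congr 1
    · rw [mul_smul_comm, smul_mul_assoc, mul_one, h1]
    · rw [← Matrix.map_mul, ← Matrix.map_mul]
  rw [Matrix.charpoly, Matrix.charpoly, hcm, det_mul, det_mul]
  calc (P.map C).det * (charmatrix M).det * (Q.map C).det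
      = (charmatrix M).det * ((P.map C).det * (Q.map C).det) := by ring
    _ = (charmatrix M).det := by rw [← det_mul, h1, det_one, mul_one]

lemma rootMult_prod {ι : Type*} (t : Finset ι) (p : ι → ℂ[X]) (h : ∀ i ∈ t, p i ≠ 0) :
    (∏ i ∈ t, p i).rootMultiplicity 0 = ∑ i ∈ t, (p i).rootMultiplicity 0 := by
  induction t using Finset.cons_induction with
  | empty => simp [Polynomial.rootMultiplicity_eq_zero (by simp : ¬ IsRoot (1:ℂ[X]) 0)]
  | cons a t ha ih =>
      have hprod : ∏ i ∈ t, p i ≠ 0 :=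
        Finset.prod_ne_zero_iff.mpr fun i hi => h i (Finset.mem_cons_of_mem hi)
      rw [Finset.prod_cons, Finset.sum_cons,
        Polynomial.rootMultiplicity_mul (mul_ne_zero (h a (Finset.mem_cons_self _ _)) hprod),
        ih fun i hi => h i (Finset.mem_cons_of_mem hi)]

lemma charpoly_zero_mat (m : ℕ) : (0 : Matrix (Fin m) (Fin m) ℂ).charpoly = X ^ m := by
  have : charmatrix (0 : Matrix (Fin m) (Fin m) ℂ) = Matrix.diagonal (fun _ => (X : ℂ[X])) := by
    ext i j; by_cases hij : i = j <;> simp [charmatrix_apply, hij]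
  rw [Matrix.charpoly, this, det_diagonal, Finset.prod_const, Finset.card_univ, Fintype.card_fin]


/-- Let `L 1, …, L r` be `n × n` real Laplacian matrices (zero row sums,
nonpositive off-diagonal entries), simultaneously triangularizable over `ℂ` via an
invertible `P` with `P * L i * P⁻¹ = J i` upper triangular, whose diagonal entries
`λ_{ij} = (J i) j j` are all real and nonnegative.  Let `B 1, …, B r` be `m × m` complex
matrices every convex combination of which is invertible.  If `0` is a root of
multiplicity exactly `1` of the characteristic polynomial of `∑ i, L i`, then `0` is a
root of multiplicity exactly `m` of the characteristic polynomial of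
`C = ∑ i, L i ⊗ B i`. -/
theorem stmt5 {n m r : ℕ}
    (L : Fin r → Matrix (Fin n) (Fin n) ℝ)
    (hrow : ∀ i j, ∑ k, L i j k = 0)
    (hoff : ∀ i j k, j ≠ k → L i j k ≤ 0)
    (P : Matrix (Fin n) (Fin n) ℂ) (hP : IsUnit P.det)
    (J : Fin r → Matrix (Fin n) (Fin n) ℂ)
    (hJ : ∀ i, P * (L i).map (Complex.ofReal) * P⁻¹ = J i)
    (htri : ∀ i, (J i).BlockTriangular id)
    (hreal : ∀ i j, ∃ t : ℝ, 0 ≤ t ∧ J i j j = (t : ℂ))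
    (B : Fin r → Matrix (Fin m) (Fin m) ℂ)
    (hB : ∀ t : Fin r → ℝ, (∀ i, 0 ≤ t i) → ∑ i, t i = 1 →
      IsUnit (∑ i, (t i : ℂ) • B i).det)
    (hmult : (∑ i, L i).charpoly.rootMultiplicity 0 = 1) :
    (∑ i, ((L i).map (Complex.ofReal)) ⊗ₖ B i).charpoly.rootMultiplicity 0 = m := by
  obtain ⟨lam, hlam⟩ : ∃ lam : Fin r → Fin n → ℝ,
      ∀ i j, 0 ≤ lam i j ∧ J i j j = ((lam i j : ℝ) : ℂ) := by
    choose lam h1 h2 using hreal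
    exact ⟨lam, fun i j => ⟨h1 i j, h2 i j⟩⟩
  set s : Fin n → ℝ := fun j => ∑ i, lam i j with hs
  have hPinv : P * P⁻¹ = 1 := mul_nonsing_inv P hP
  -- step 1: transfer hmult to ℂ
  have hmapsum : (∑ i, L i).map (Complex.ofReal) = ∑ i, (L i).map (Complex.ofReal) := by
    ext j k
    simp [Matrix.map_apply, Matrix.sum_apply]
  have h1 : ((∑ i, (L i).map (Complex.ofReal)).charpoly).rootMultiplicity 0 = 1 := by
    rw [← hmapsum]
    have : ((∑ i, L i).map (Complex.ofReal)).charpoly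
        = ((∑ i, L i).charpoly).map Complex.ofRealHom :=
      Matrix.charpoly_map _ Complex.ofRealHom
    rw [this, ← map_zero (Complex.ofRealHom),
      ← Polynomial.eq_rootMultiplicity_map Complex.ofReal_injective 0, hmult]
  -- step 2: conjugate the sum
  have hconj : P * (∑ i, (L i).map (Complex.ofReal)) * P⁻¹ = ∑ i, J i := by
    rw [Finset.mul_sum, Finset.sum_mul]
    exact Finset.sum_congr rfl fun i _ => hJ i
  have h2 : (∑ i, J i).charpoly = (∑ i, (L i).map (Complex.ofReal)).charpoly := by
    rw [← hconj]
    exact charpoly_conj_aux_s5 P P⁻¹ _ hPinv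
  -- step 3: triangular sum
  have htriS : (∑ i, J i).BlockTriangular id := by
    intro a b hab
    rw [Matrix.sum_apply]
    exact Finset.sum_eq_zero fun i _ => htri i hab
  have hdiagS : ∀ j, (∑ i, J i) j j = ((s j : ℝ) : ℂ) := by
    intro j
    rw [Matrix.sum_apply, hs]
    push_cast
    exact Finset.sum_congr rfl fun i _ => (hlam i j).2
  -- step 4: count of zero diagonal entries
  have hcount : ∑ j : Fin n, (if s j = 0 then 1 else 0) = 1 := by
    have h4 : (∑ i, J i).charpoly = ∏ j : Fin n, (X - C ((s j : ℝ) : ℂ)) := by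
      rw [Matrix.charpoly_of_upperTriangular _ htriS]
      exact Finset.prod_congr rfl fun j _ => by rw [hdiagS j]
    have h5 : (∏ j : Fin n, (X - C ((s j : ℝ) : ℂ))).rootMultiplicity 0 = 1 := by
      rw [← h4, h2, h1]
    rw [rootMult_prod _ _ (fun j _ => X_sub_C_ne_zero _)] at h5
    have h6 : ∑ j : Fin n, (if s j = 0 then 1 else 0)
        = ∑ j : Fin n, (X - C ((s j : ℝ) : ℂ)).rootMultiplicity 0 := by
      refine Finset.sum_congr rfl fun j _ => ?_
      rw [rootMultiplicity_X_sub_C]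
      by_cases hj : s j = 0
      · simp [hj]
      · have hj' : ¬ ((0 : ℂ) = ((s j : ℝ) : ℂ)) := fun h => hj (by exact_mod_cast h.symm)
        simp [hj, hj']
    rw [h6]
    exact h5
  -- m = 0 case
  rcases Nat.eq_zero_or_pos m with hm | hm
  · subst hm
    have he : (∑ i, ((L i).map (Complex.ofReal)) ⊗ₖ B i).charpoly = 1 := by
      rw [Matrix.charpoly]
      exact det_isEmpty
    rw [he]
    exact rootMultiplicity_eq_zero (by simp [IsRoot])
  -- m > 0
  set T : Matrix (Fin n × Fin m) (Fin n × Fin m) ℂ := ∑ i, J i ⊗ₖ B i with hT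
  have hPk : (P ⊗ₖ (1 : Matrix (Fin m) (Fin m) ℂ))
      * ((P⁻¹) ⊗ₖ (1 : Matrix (Fin m) (Fin m) ℂ)) = 1 := by
    rw [← Matrix.mul_kronecker_mul, hPinv, Matrix.one_mul, Matrix.one_kronecker_one]
  have hTC : (P ⊗ₖ (1 : Matrix (Fin m) (Fin m) ℂ)) * (∑ i, ((L i).map (Complex.ofReal)) ⊗ₖ B i)
      * ((P⁻¹) ⊗ₖ (1 : Matrix (Fin m) (Fin m) ℂ)) = T := by
    rw [Finset.mul_sum, Finset.sum_mul]
    refine Finset.sum_congr rfl fun i _ => ?_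
    rw [← Matrix.mul_kronecker_mul, ← Matrix.mul_kronecker_mul, Matrix.one_mul, Matrix.mul_one,
      hJ i]
  have hcharT : T.charpoly = (∑ i, ((L i).map (Complex.ofReal)) ⊗ₖ B i).charpoly := by
    rw [← hTC]
    exact charpoly_conj_aux_s5 _ _ _ hPk
  rw [← hcharT]
  have hTtri : T.BlockTriangular (Prod.fst) := by
    intro x y hxy
    rw [hT, Matrix.sum_apply]
    refine Finset.sum_eq_zero fun i _ => ?_
    show J i x.1 y.1 * B i x.2 y.2 = 0
    rw [htri i hxy, zero_mul]
  have hblock : ∀ j : Fin n, (T.toSquareBlock Prod.fst j).charpoly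
      = (∑ i, ((lam i j : ℝ) : ℂ) • B i).charpoly := by
    intro j
    let e : Fin m ≃ {x : Fin n × Fin m // x.1 = j} :=
      { toFun := fun a => ⟨(j, a), rfl⟩
        invFun := fun x => x.1.2
        left_inv := fun a => rfl
        right_inv := fun x => Subtype.ext (Prod.ext x.2.symm rfl) }
    have hre : T.toSquareBlock Prod.fst j = (reindex e e) (∑ i, ((lam i j : ℝ) : ℂ) • B i) := by
      ext x y
      simp only [Matrix.reindex_apply, Matrix.submatrix_apply, Matrix.toSquareBlock_def,
        Matrix.of_apply, hT, Matrix.sum_apply]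
      refine Finset.sum_congr rfl fun i _ => ?_
      rw [Matrix.kroneckerMap_apply, x.prop, y.prop, (hlam i j).2]
      simp [e, Matrix.smul_apply]
    rw [hre, Matrix.charpoly_reindex]
  have hmul : ∀ j : Fin n, ((∑ i, ((lam i j : ℝ) : ℂ) • B i).charpoly).rootMultiplicity 0
      = if s j = 0 then m else 0 := by
    intro j
    by_cases hj : s j = 0
    · have hzero : ∀ i, lam i j = 0 := by
        intro i
        exact (Finset.sum_eq_zero_iff_of_nonneg (fun i _ => (hlam i j).1)).mp hj i
          (Finset.mem_univ i)
      have hD0 : (∑ i, ((lam i j : ℝ) : ℂ) • B i) = 0 := by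
        refine Finset.sum_eq_zero fun i _ => ?_
        rw [hzero i]
        simp
      rw [hD0, charpoly_zero_mat, if_pos hj]
      simpa using rootMultiplicity_X_sub_C_pow (0 : ℂ) m
    · rw [if_neg hj]
      have hspos : 0 < s j :=
        lt_of_le_of_ne (Finset.sum_nonneg fun i _ => (hlam i j).1) (Ne.symm hj)
      set t : Fin r → ℝ := fun i => lam i j / s j with ht
      have ht0 : ∀ i, 0 ≤ t i := fun i => div_nonneg (hlam i j).1 hspos.le
      have ht1 : ∑ i, t i = 1 := by
        rw [ht, ← Finset.sum_div]
        exact div_self hj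
      have hDef : (∑ i, ((lam i j : ℝ) : ℂ) • B i)
          = ((s j : ℝ) : ℂ) • ∑ i, ((t i : ℝ) : ℂ) • B i := by
        rw [Finset.smul_sum]
        refine Finset.sum_congr rfl fun i _ => ?_
        rw [smul_smul, ← Complex.ofReal_mul, ht]
        congr 2
        field_simp
      have hdet : (∑ i, ((lam i j : ℝ) : ℂ) • B i).det ≠ 0 := by
        rw [hDef, det_smul]
        exact mul_ne_zero (pow_ne_zero _ (by exact_mod_cast hj)) (hB t ht0 ht1).ne_zero
      refine rootMultiplicity_eq_zero fun hroot => hdet ?_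
      rw [Matrix.det_eq_sign_charpoly_coeff, coeff_zero_eq_eval_zero, hroot.eq_zero, mul_zero]
  have hcp : T.charpoly = ∏ k : Fin n, (T.toSquareBlock Prod.fst k).charpoly := by
    rw [Matrix.charpoly, hTtri.charmatrix.det_fintype]
    exact Finset.prod_congr rfl fun k _ => by
      rw [Matrix.charpoly, Matrix.charmatrix_toSquareBlock]
  rw [hcp, rootMult_prod _ _ (fun j _ => (Matrix.charpoly_monic _).ne_zero)]
  have hsum : ∑ j : Fin n, ((T.toSquareBlock Prod.fst j).charpoly).rootMultiplicity 0
      = ∑ j : Fin n, (if s j = 0 then m else 0) := by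
    refine Finset.sum_congr rfl fun j _ => ?_
    rw [hblock j, hmul j]
  rw [hsum]
  calc ∑ j : Fin n, (if s j = 0 then m else 0)
      = ∑ j : Fin n, m * (if s j = 0 then 1 else 0) := by
        refine Finset.sum_congr rfl fun j _ => ?_
        by_cases hj : s j = 0 <;> simp [hj]
    _ = m * ∑ j : Fin n, (if s j = 0 then 1 else 0) := by rw [Finset.mul_sum]
    _ = m := by rw [hcount, mul_one]
end

section
/- Consider the coupled network ẋ_i(t) = f(x_i(t), t) − Σ_{k=1}^r Σ_{j=1}^n (G_k(t))_{ij} D_k(t) x_j(t) for i = 1,…,n, where each x_i(t) ∈ ℝ^m, each G_k(t) is an n×n real matrix with zero row sums, and each D_k(t) is an m×m real matrix. Let P(t) be an m×m real matrix for each t, let V be an m×m real symmetric positive definite matrix and c > 0 be such that (y − z)ᵀ V (f(y,t) − P(t)y − f(z,t) + P(t)z) ≤ −c‖y − z‖² for all y, z ∈ ℝ^m and all t. Suppose there exists an irreducible matrix U ∈ 𝒲 such that for all t the nm×nm matrix (U ⊗ V)(Σ_{k=1}^r G_k(t) ⊗ D_k(t) − I ⊗ P(t)) is positive semidefinite. Then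 the network is globally synchronizing: for every solution x defined on an interval [t₀, ∞), ‖x_i(t) − x_j(t)‖ → 0 as t → ∞ for all i, j. -/
open Matrix Filter
open scoped Kronecker


lemma lap_identity {n : ℕ} (U : Matrix (Fin n) (Fin n) ℝ)
    (hsym : ∀ i j, U i j = U j i) (hrow : ∀ i, ∑ j, U i j = 0)
    (B : Fin n → Fin n → ℝ) :
    ∑ i, ∑ j, U i j * B i j
      = -(1/2) * ∑ i, ∑ j, U i j * (B i i - B i j - B j i + B j j) := by
  have hcol : ∀ j, ∑ i, U i j = 0 := by
    intro j
    calc ∑ i, U i j = ∑ i, U j i := by simp_rw [fun i => hsym i j]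
    _ = 0 := hrow j
  have h1 : ∑ i, ∑ j, U i j * B i i = 0 := by
    refine Finset.sum_eq_zero fun i _ => ?_
    rw [← Finset.sum_mul, hrow, zero_mul]
  have h4 : ∑ i, ∑ j, U i j * B j j = 0 := by
    rw [Finset.sum_comm]
    refine Finset.sum_eq_zero fun j _ => ?_
    rw [← Finset.sum_mul, hcol, zero_mul]
  have h3 : ∑ i, ∑ j, U i j * B j i = ∑ i, ∑ j, U i j * B i j := by
    rw [Finset.sum_comm]
    refine Finset.sum_congr rfl fun j _ => Finset.sum_congr rfl fun i _ => ?_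
    rw [hsym i j]
  have expand : ∑ i, ∑ j, U i j * (B i i - B i j - B j i + B j j)
      = (∑ i, ∑ j, U i j * B i i) - (∑ i, ∑ j, U i j * B i j)
        - (∑ i, ∑ j, U i j * B j i) + (∑ i, ∑ j, U i j * B j j) := by
    simp_rw [mul_add, mul_sub, Finset.sum_add_distrib, Finset.sum_sub_distrib]
  rw [expand, h1, h4, h3]
  ring

lemma hasDerivAt_quadForm {m : ℕ} (V : Matrix (Fin m) (Fin m) ℝ)
    (hVs : ∀ s u, V s u = V u s)
    {d : ℝ → Fin m → ℝ} {d' : Fin m → ℝ} {t : ℝ} (hd : HasDerivAt d d' t) :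
    HasDerivAt (fun s => d s ⬝ᵥ V.mulVec (d s)) (2 * (d t ⬝ᵥ V.mulVec d')) t := by
  have hdi : ∀ i, HasDerivAt (fun s => d s i) (d' i) t := hasDerivAt_pi.mp hd
  have main : HasDerivAt (fun s => ∑ i, d s i * ∑ u, V i u * d s u)
      (∑ i, (d' i * ∑ u, V i u * d t u + d t i * ∑ u, V i u * d' u)) t := by
    refine HasDerivAt.fun_sum fun i _ => ?_
    exact (hdi i).mul (HasDerivAt.fun_sum fun u _ => (hdi u).const_mul (V i u))
  have key : ∑ i, d' i * ∑ u, V i u * d t u = ∑ i, d t i * ∑ u, V i u * d' u := by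
    simp_rw [Finset.mul_sum]
    rw [Finset.sum_comm]
    refine Finset.sum_congr rfl fun a _ => Finset.sum_congr rfl fun b _ => ?_
    rw [hVs b a]; ring
  have hval : ∑ i, (d' i * ∑ u, V i u * d t u + d t i * ∑ u, V i u * d' u)
      = 2 * (d t ⬝ᵥ V.mulVec d') := by
    rw [Finset.sum_add_distrib, key, two_mul]
    simp [dotProduct, Matrix.mulVec]
  rw [hval] at main
  simpa [dotProduct, Matrix.mulVec] using main

lemma quad_bounds {m : ℕ} (V : Matrix (Fin m) (Fin m) ℝ) (hV : V.PosDef) :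
    ∃ ε C : ℝ, 0 < ε ∧ 0 < C ∧ ∀ d : Fin m → ℝ,
      ε * (d ⬝ᵥ d) ≤ d ⬝ᵥ V.mulVec d ∧ d ⬝ᵥ V.mulVec d ≤ C * (d ⬝ᵥ d) := by
  have hq : Continuous fun d : Fin m → ℝ => d ⬝ᵥ V.mulVec d := by
    simp only [dotProduct, Matrix.mulVec]
    exact continuous_finset_sum _ fun i _ => ((continuous_apply i).mul
      (continuous_finset_sum _ fun u _ => (continuous_const.mul (continuous_apply u))))
  have hdot : Continuous fun d : Fin m → ℝ => d ⬝ᵥ d := by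
    simp only [dotProduct]
    exact continuous_finset_sum _ fun i _ => ((continuous_apply i).mul (continuous_apply i))
  have hdotnn : ∀ d : Fin m → ℝ, 0 ≤ d ⬝ᵥ d := fun d =>
    Finset.sum_nonneg fun i _ => mul_self_nonneg _
  set K : Set (Fin m → ℝ) := {d | d ⬝ᵥ d = 1} with hK
  have hKc : IsCompact K := by
    have hclosed : IsClosed K := isClosed_eq hdot continuous_const
    have hbdd : Bornology.IsBounded K := by
      refine (Metric.isBounded_iff_subset_closedBall 0).mpr ⟨1, fun d hd => ?_⟩
      simp only [Metric.mem_closedBall, dist_zero_right]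
      refine (pi_norm_le_iff_of_nonneg zero_le_one).mpr fun i => ?_
      rw [Real.norm_eq_abs, abs_le_one_iff_mul_self_le_one]
      calc d i * d i ≤ ∑ j, d j * d j :=
            Finset.single_le_sum (fun j _ => mul_self_nonneg (d j)) (Finset.mem_univ i)
      _ = 1 := hd
    exact Metric.isCompact_of_isClosed_isBounded hclosed hbdd
  rcases Set.eq_empty_or_nonempty K with hKe | hKne
  · refine ⟨1, 1, one_pos, one_pos, fun d => ?_⟩
    have hd0 : d ⬝ᵥ d = 0 := by
      by_contra h
      have hpos : 0 < d ⬝ᵥ d := lt_of_le_of_ne (hdotnn d) (Ne.symm h)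
      have : (Real.sqrt (d ⬝ᵥ d))⁻¹ • d ∈ K := by
        simp only [hK, Set.mem_setOf_eq, smul_dotProduct, dotProduct_smul,
          smul_eq_mul]
        rw [← mul_assoc, ← mul_inv, Real.mul_self_sqrt (hdotnn d)]
        exact inv_mul_cancel₀ (ne_of_gt hpos)
      rw [hKe] at this; exact this
    have hd : d = 0 := dotProduct_self_eq_zero.mp hd0
    simp [hd]
  · obtain ⟨dmin, hdminK, hmin⟩ := hKc.exists_isMinOn hKne hq.continuousOn
    obtain ⟨dmax, hdmaxK, hmax⟩ := hKc.exists_isMaxOn hKne hq.continuousOn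
    have hdmin0 : dmin ≠ 0 := by
      intro h; rw [hK] at hdminK; simp [h] at hdminK
    have hε : 0 < dmin ⬝ᵥ V.mulVec dmin := hV.dotProduct_mulVec_pos hdmin0
    have hCpos : 0 < dmax ⬝ᵥ V.mulVec dmax := lt_of_lt_of_le hε (hmin hdmaxK)
    refine ⟨_, _, hε, hCpos, fun d => ?_⟩
    rcases eq_or_ne d 0 with hd | hd
    · simp [hd]
    · have hpos : 0 < d ⬝ᵥ d :=
        lt_of_le_of_ne (hdotnn d) (Ne.symm (fun h => hd (dotProduct_self_eq_zero.mp h)))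
      set s : ℝ := Real.sqrt (d ⬝ᵥ d) with hs
      have hss : s * s = d ⬝ᵥ d := Real.mul_self_sqrt (hdotnn d)
      set d' : Fin m → ℝ := s⁻¹ • d with hd'
      have hd'K : d' ∈ K := by
        simp only [hK, Set.mem_setOf_eq, hd', smul_dotProduct, dotProduct_smul,
          smul_eq_mul, ← mul_assoc, ← mul_inv, hss]
        exact inv_mul_cancel₀ (ne_of_gt hpos)
      have hql : d' ⬝ᵥ V.mulVec d' = (s * s)⁻¹ * (d ⬝ᵥ V.mulVec d) := by
        simp only [hd', smul_dotProduct, Matrix.mulVec_smul, dotProduct_smul,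
          smul_eq_mul, ← mul_assoc, ← mul_inv]
      constructor
      · rw [isMinOn_iff] at hmin
        have h := hmin d' hd'K
        rw [hql] at h
        have h2 := mul_le_mul_of_nonneg_left h (le_of_lt hpos)
        calc (dmin ⬝ᵥ V.mulVec dmin) * (d ⬝ᵥ d) = (d ⬝ᵥ d) * (dmin ⬝ᵥ V.mulVec dmin) := by ring
        _ ≤ (d ⬝ᵥ d) * ((s * s)⁻¹ * (d ⬝ᵥ V.mulVec d)) := h2
        _ = d ⬝ᵥ V.mulVec d := by rw [hss]; field_simp
      · rw [isMaxOn_iff] at hmax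
        have h := hmax d' hd'K
        rw [hql] at h
        have h2 := mul_le_mul_of_nonneg_left h (le_of_lt hpos)
        calc d ⬝ᵥ V.mulVec d = (d ⬝ᵥ d) * ((s*s)⁻¹ * (d ⬝ᵥ V.mulVec d)) := by
              rw [hss]; field_simp
        _ ≤ (d ⬝ᵥ d) * (dmax ⬝ᵥ V.mulVec dmax) := h2
        _ = (dmax ⬝ᵥ V.mulVec dmax) * (d ⬝ᵥ d) := by ring

lemma kron_quad {n m : ℕ} (U : Matrix (Fin n) (Fin n) ℝ) (V : Matrix (Fin m) (Fin m) ℝ)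
    (z w : Fin n × Fin m → ℝ) :
    w ⬝ᵥ (U ⊗ₖ V).mulVec z
      = ∑ i, ∑ j, U i j * ((fun s => w (i, s)) ⬝ᵥ V.mulVec (fun u => z (j, u))) := by
  simp only [dotProduct, Matrix.mulVec, Matrix.kroneckerMap_apply,
    Fintype.sum_prod_type]
  refine Finset.sum_congr rfl fun i _ => ?_
  simp_rw [Finset.mul_sum]
  rw [Finset.sum_comm]
  refine Finset.sum_congr rfl fun j _ => Finset.sum_congr rfl fun s _ =>
    Finset.sum_congr rfl fun u _ => by ring

lemma kron_component {n m r : ℕ} (Gm : Fin r → Matrix (Fin n) (Fin n) ℝ)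
    (Dm : Fin r → Matrix (Fin m) (Fin m) ℝ) (Pm : Matrix (Fin m) (Fin m) ℝ)
    (xv : Fin n → Fin m → ℝ) (j : Fin n) (u : Fin m) :
    ((∑ k, Gm k ⊗ₖ Dm k - (1 : Matrix (Fin n) (Fin n) ℝ) ⊗ₖ Pm).mulVec
        (fun p => xv p.1 p.2)) (j, u)
      = (∑ k, ∑ l, Gm k j l • (Dm k).mulVec (xv l)) u - (Pm.mulVec (xv j)) u := by
  simp only [Matrix.mulVec, dotProduct, Matrix.sub_apply, Matrix.sum_apply,
    Matrix.kroneckerMap_apply, Fintype.sum_prod_type, Matrix.one_apply,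
    Finset.sum_apply, Pi.smul_apply, smul_eq_mul]
  simp_rw [sub_mul, Finset.sum_sub_distrib]
  congr 1
  · simp_rw [Finset.sum_mul, Finset.mul_sum]
    refine Eq.trans (Finset.sum_congr rfl fun l _ => Finset.sum_comm) ?_
    rw [Finset.sum_comm]
    refine Finset.sum_congr rfl fun k _ => Finset.sum_congr rfl fun l _ =>
      Finset.sum_congr rfl fun w _ => by ring
  · simp [ite_mul, zero_mul, one_mul, mul_assoc, Finset.sum_ite_eq]

lemma dot_add_le {m : ℕ} (a b : Fin m → ℝ) :
    (a + b) ⬝ᵥ (a + b) ≤ 2 * (a ⬝ᵥ a + b ⬝ᵥ b) := by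
  have h1 : 0 ≤ (a - b) ⬝ᵥ (a - b) := Finset.sum_nonneg fun i _ => by
    simp only [Pi.sub_apply]; exact mul_self_nonneg _
  have e1 : (a + b) ⬝ᵥ (a + b) = a ⬝ᵥ a + a ⬝ᵥ b + b ⬝ᵥ a + b ⬝ᵥ b := by
    simp [add_dotProduct, dotProduct_add]; ring
  have e2 : (a - b) ⬝ᵥ (a - b) = a ⬝ᵥ a - a ⬝ᵥ b - b ⬝ᵥ a + b ⬝ᵥ b := by
    simp [sub_dotProduct, dotProduct_sub]; ring
  linarith

/-- Consider `n` identical `m`-dimensional systems coupled via `r`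
time-varying directed networks:
`ẋᵢ = f(xᵢ,t) − ∑ₖ ∑ⱼ (Gₖ(t))ᵢⱼ Dₖ(t) xⱼ`, where each `Gₖ(t)` has zero row sums.
If there is a time-varying matrix `P(t)`, a symmetric positive definite `V` and `c > 0`
with `(y−z)ᵀV(f(y,t)−P(t)y−f(z,t)+P(t)z) ≤ −c‖y−z‖²`, and an irreducible symmetric
matrix `U` with zero row sums and nonpositive off-diagonal entries such that
`(U ⊗ V)(∑ₖ Gₖ(t) ⊗ Dₖ(t) − I ⊗ P(t))` is positive semidefinite for all `t`, then the
network globally synchronizes: `‖xᵢ(t) − xⱼ(t)‖ → 0` as `t → ∞` for every solution.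
(Here `‖v‖ = √(v ⬝ᵥ v)` is the Euclidean norm.) -/
theorem stmt6 {n m r : ℕ}
    (f : (Fin m → ℝ) → ℝ → (Fin m → ℝ))
    (G : Fin r → ℝ → Matrix (Fin n) (Fin n) ℝ)
    (D : Fin r → ℝ → Matrix (Fin m) (Fin m) ℝ)
    (hG : ∀ k t i, ∑ j, G k t i j = 0)
    (P : ℝ → Matrix (Fin m) (Fin m) ℝ)
    (V : Matrix (Fin m) (Fin m) ℝ) (hV : V.PosDef)
    (c : ℝ) (hc : 0 < c)
    (hstab : ∀ t (y z : Fin m → ℝ),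
      (y - z) ⬝ᵥ V.mulVec (f y t - (P t).mulVec y - f z t + (P t).mulVec z)
        ≤ -c * ((y - z) ⬝ᵥ (y - z)))
    (U : Matrix (Fin n) (Fin n) ℝ)
    (hUsymm : U.IsSymm)
    (hUrow : ∀ i, ∑ j, U i j = 0)
    (hUoff : ∀ i j, i ≠ j → U i j ≤ 0)
    (hUirr : ∀ S : Finset (Fin n), S.Nonempty → S ≠ Finset.univ →
      ∃ i ∈ S, ∃ j ∉ S, U i j ≠ 0)
    (hPSD : ∀ t, ∀ x : Fin n × Fin m → ℝ,
      0 ≤ x ⬝ᵥ ((U ⊗ₖ V) *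
        (∑ k, (G k t) ⊗ₖ (D k t) - (1 : Matrix (Fin n) (Fin n) ℝ) ⊗ₖ (P t))).mulVec x)
    (t₀ : ℝ) (x : ℝ → Fin n → Fin m → ℝ)
    (hx : ∀ t ∈ Set.Ici t₀, ∀ i, HasDerivAt (fun s => x s i)
      (f (x t i) t - ∑ k, ∑ j, G k t i j • (D k t).mulVec (x t j)) t) :
    ∀ i j, Tendsto (fun t => Real.sqrt ((x t i - x t j) ⬝ᵥ (x t i - x t j)))
      atTop (nhds 0) := by
  classical
  obtain ⟨ε, C, hε, hC, hbound⟩ := quad_bounds V hV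
  have hVs : ∀ s u, V s u = V u s := by
    intro s u
    have h := congrFun (congrFun hV.1 s) u
    simpa [Matrix.conjTranspose_apply] using h.symm
  have hsym : ∀ i j, U i j = U j i := by
    intro i j
    have h := congrFun (congrFun hUsymm j) i
    simpa [Matrix.transpose_apply] using h
  have hdotnn : ∀ d : Fin m → ℝ, 0 ≤ d ⬝ᵥ d := fun d =>
    Finset.sum_nonneg fun i _ => mul_self_nonneg _
  have hqnn : ∀ d : Fin m → ℝ, 0 ≤ d ⬝ᵥ V.mulVec d := fun d =>
    le_trans (mul_nonneg hε.le (hdotnn d)) (hbound d).1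
  set v : ℝ → Fin n → Fin m → ℝ :=
    fun t i => f (x t i) t - ∑ k, ∑ j, G k t i j • (D k t).mulVec (x t j) with hv
  have hxd : ∀ t ∈ Set.Ici t₀, ∀ i, HasDerivAt (fun s => x s i) (v t i) t := hx
  set W : ℝ → ℝ :=
    fun t => ∑ i, ∑ j, (-(1/2) * U i j) * ((x t i - x t j) ⬝ᵥ V.mulVec (x t i - x t j))
    with hWdef
  have htermnn : ∀ t (i j : Fin n),
      0 ≤ (-(1/2) * U i j) * ((x t i - x t j) ⬝ᵥ V.mulVec (x t i - x t j)) := by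
    intro t i j
    rcases eq_or_ne i j with h | h
    · simp [h]
    · exact mul_nonneg (by have := hUoff i j h; linarith) (hqnn _)
  have hWnn : ∀ t, 0 ≤ W t := fun t =>
    Finset.sum_nonneg fun i _ => Finset.sum_nonneg fun j _ => htermnn t i j
  set W' : ℝ → ℝ :=
    fun t => ∑ i, ∑ j, (-(1/2) * U i j) *
      (2 * ((x t i - x t j) ⬝ᵥ V.mulVec (v t i - v t j))) with hW'def
  have hderiv : ∀ t ∈ Set.Ici t₀, HasDerivAt W (W' t) t := by
    intro t ht
    refine HasDerivAt.fun_sum fun i _ => HasDerivAt.fun_sum fun j _ => ?_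
    exact (hasDerivAt_quadForm V hVs ((hxd t ht i).sub (hxd t ht j))).const_mul _
  set α : ℝ := 2 * c / C with hα
  have hαpos : 0 < α := div_pos (by linarith) hC
  -- the key derivative inequality
  have hW'le : ∀ t ∈ Set.Ici t₀, W' t ≤ -α * W t := by
    intro t _
    set X : Fin n → Fin m → ℝ := x t with hX
    set g : Fin n → Fin m → ℝ := fun i => f (X i) t - (P t).mulVec (X i) with hg
    set y : Fin n → Fin m → ℝ := fun i => ∑ k, ∑ l, G k t i l • (D k t).mulVec (X l) with hy
    have hvgy : ∀ i, v t i = g i - (y i - (P t).mulVec (X i)) := by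
      intro i
      show f (x t i) t - ∑ k, ∑ j, G k t i j • (D k t).mulVec (x t j)
        = g i - (y i - (P t).mulVec (X i))
      rw [hg, hy, hX]
      exact (sub_sub_sub_cancel_right _ _ _).symm
    set B2 : Fin n → Fin n → ℝ := fun i j => X i ⬝ᵥ V.mulVec (v t j) with hB2
    have hA : ∀ i j : Fin n, (X i - X j) ⬝ᵥ V.mulVec (v t i - v t j)
        = B2 i i - B2 i j - B2 j i + B2 j j := by
      intro i j
      simp only [hB2, Matrix.mulVec_sub, dotProduct_sub, sub_dotProduct]
      ring
    have hQ : W' t = -(∑ i, ∑ j, U i j * (B2 i i - B2 i j - B2 j i + B2 j j)) := by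
      rw [hW'def]
      rw [← Finset.sum_neg_distrib]
      refine Finset.sum_congr rfl fun i _ => ?_
      rw [← Finset.sum_neg_distrib]
      refine Finset.sum_congr rfl fun j _ => ?_
      rw [← hA i j]
      show (-(1/2) * U i j) * (2 * ((X i - X j) ⬝ᵥ V.mulVec (v t i - v t j))) = _
      ring
    have step2 : W' t = 2 * ∑ i, ∑ j, U i j * B2 i j := by
      rw [hQ, lap_identity U hsym hUrow B2]; ring
    have hsplit : ∀ i j : Fin n, U i j * B2 i j
        = U i j * (X i ⬝ᵥ V.mulVec (g j))
          - U i j * (X i ⬝ᵥ V.mulVec (y j - (P t).mulVec (X j))) := by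
      intro i j
      show U i j * (X i ⬝ᵥ V.mulVec (v t j)) = _
      rw [hvgy j, Matrix.mulVec_sub, dotProduct_sub, mul_sub]
    have step3 : W' t = 2 * (∑ i, ∑ j, U i j * (X i ⬝ᵥ V.mulVec (g j)))
        - 2 * (∑ i, ∑ j, U i j * (X i ⬝ᵥ V.mulVec (y j - (P t).mulVec (X j)))) := by
      rw [step2]
      simp_rw [hsplit, Finset.sum_sub_distrib]
      ring
    -- PSD part
    have hpsd' : 0 ≤ ∑ i, ∑ j, U i j * (X i ⬝ᵥ V.mulVec (y j - (P t).mulVec (X j))) := by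
      have h := hPSD t (fun p => X p.1 p.2)
      rw [← Matrix.mulVec_mulVec, kron_quad] at h
      have harg : ∀ j : Fin n,
          (fun u => ((∑ k, (G k t) ⊗ₖ (D k t)
              - (1 : Matrix (Fin n) (Fin n) ℝ) ⊗ₖ (P t)).mulVec
                (fun p : Fin n × Fin m => X p.1 p.2)) (j, u))
          = y j - (P t).mulVec (X j) := by
        intro j
        funext u
        rw [kron_component]
        simp [hy]
      simp_rw [harg] at h
      exact h
    have step4 : W' t ≤ 2 * ∑ i, ∑ j, U i j * (X i ⬝ᵥ V.mulVec (g j)) := by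
      rw [step3]; linarith
    -- stability part
    set B3 : Fin n → Fin n → ℝ := fun i j => X i ⬝ᵥ V.mulVec (g j) with hB3
    have hA3 : ∀ i j : Fin n, B3 i i - B3 i j - B3 j i + B3 j j
        = (X i - X j) ⬝ᵥ V.mulVec (g i - g j) := by
      intro i j
      simp only [hB3, Matrix.mulVec_sub, dotProduct_sub, sub_dotProduct]
      ring
    have step5 : 2 * ∑ i, ∑ j, U i j * B3 i j
        = ∑ i, ∑ j, (-(U i j)) * ((X i - X j) ⬝ᵥ V.mulVec (g i - g j)) := by
      rw [lap_identity U hsym hUrow B3]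
      have hterm : ∀ i j : Fin n, U i j * (B3 i i - B3 i j - B3 j i + B3 j j)
          = -((-(U i j)) * ((X i - X j) ⬝ᵥ V.mulVec (g i - g j))) := by
        intro i j
        rw [hA3 i j]
        ring
      simp_rw [hterm, Finset.sum_neg_distrib]
      ring
    have step6 : ∑ i, ∑ j, (-(U i j)) * ((X i - X j) ⬝ᵥ V.mulVec (g i - g j))
        ≤ ∑ i, ∑ j, (-(U i j)) * (-c * ((X i - X j) ⬝ᵥ (X i - X j))) := by
      refine Finset.sum_le_sum fun i _ => Finset.sum_le_sum fun j _ => ?_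
      rcases eq_or_ne i j with h | h
      · subst h; simp
      · have hgg : g i - g j
            = f (X i) t - (P t).mulVec (X i) - f (X j) t + (P t).mulVec (X j) := by
          rw [hg]; exact (sub_add _ _ _).symm
        rw [hgg]
        exact mul_le_mul_of_nonneg_left (hstab t (X i) (X j))
          (by have := hUoff i j h; linarith)
    set S : ℝ := ∑ i, ∑ j, (-(1/2) * U i j) * ((X i - X j) ⬝ᵥ (X i - X j)) with hS
    have e7 : ∑ i, ∑ j, (-(U i j)) * (-c * ((X i - X j) ⬝ᵥ (X i - X j)))
        = -(2*c) * S := by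
      rw [hS, Finset.mul_sum]
      refine Finset.sum_congr rfl fun i _ => ?_
      rw [Finset.mul_sum]
      exact Finset.sum_congr rfl fun j _ => by ring
    have hSnn : 0 ≤ S := by
      rw [hS]
      refine Finset.sum_nonneg fun i _ => Finset.sum_nonneg fun j _ => ?_
      rcases eq_or_ne i j with h | h
      · simp [h]
      · exact mul_nonneg (by have := hUoff i j h; linarith) (hdotnn _)
    have hWCS : W t ≤ C * S := by
      rw [hS, Finset.mul_sum]
      refine Finset.sum_le_sum fun i _ => ?_
      rw [Finset.mul_sum]
      refine Finset.sum_le_sum fun j _ => ?_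
      rcases eq_or_ne i j with h | h
      · simp [h]
      · calc (-(1/2) * U i j) * ((X i - X j) ⬝ᵥ V.mulVec (X i - X j))
            ≤ (-(1/2) * U i j) * (C * ((X i - X j) ⬝ᵥ (X i - X j))) :=
              mul_le_mul_of_nonneg_left (hbound _).2 (by have := hUoff i j h; linarith)
        _ = C * ((-(1/2) * U i j) * ((X i - X j) ⬝ᵥ (X i - X j))) := by ring
    have hαC : α * (C * S) = 2 * c * S := by
      rw [hα]; field_simp
    have hfinal : W' t ≤ -(2*c) * S := by
      calc W' t ≤ 2 * ∑ i, ∑ j, U i j * (X i ⬝ᵥ V.mulVec (g j)) := step4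
      _ = ∑ i, ∑ j, (-(U i j)) * ((X i - X j) ⬝ᵥ V.mulVec (g i - g j)) := step5
      _ ≤ ∑ i, ∑ j, (-(U i j)) * (-c * ((X i - X j) ⬝ᵥ (X i - X j))) := step6
      _ = -(2*c) * S := e7
    have hαW : α * W t ≤ α * (C * S) := mul_le_mul_of_nonneg_left hWCS hαpos.le
    rw [hαC] at hαW
    linarith
  -- Gronwall argument
  have hexp : ∀ s : ℝ, HasDerivAt (fun u : ℝ => Real.exp (α * u)) (Real.exp (α * s) * α) s := by
    intro s
    simpa using ((hasDerivAt_id s).const_mul α).exp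
  have hanti : AntitoneOn (fun s => W s * Real.exp (α * s)) (Set.Ici t₀) := by
    have hint : interior (Set.Ici t₀) ⊆ Set.Ici t₀ := interior_subset
    refine antitoneOn_of_deriv_nonpos (convex_Ici t₀) ?_ ?_ ?_
    · intro s hs
      exact ((hderiv s hs).mul (hexp s)).continuousAt.continuousWithinAt
    · intro s hs
      exact ((hderiv s (hint hs)).mul (hexp s)).differentiableAt.differentiableWithinAt
    · intro s hs
      have hs' : s ∈ Set.Ici t₀ := hint hs
      rw [show deriv (fun s => W s * Real.exp (α * s)) s = _ from ((hderiv s hs').mul (hexp s)).deriv]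
      have h1 := hW'le s hs'
      have h2 : (0:ℝ) < Real.exp (α * s) := Real.exp_pos _
      have h3 := hWnn s
      nlinarith [mul_le_mul_of_nonneg_right h1 h2.le]
  have hdecay : ∀ t ∈ Set.Ici t₀, W t ≤ (W t₀ * Real.exp (α * t₀)) * Real.exp (-(α * t)) := by
    intro t ht
    have h := hanti Set.self_mem_Ici ht (Set.mem_Ici.mp ht)
    calc W t = (W t * Real.exp (α * t)) * Real.exp (-(α * t)) := by
          rw [mul_assoc, ← Real.exp_add]; simp
    _ ≤ (W t₀ * Real.exp (α * t₀)) * Real.exp (-(α * t)) :=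
          mul_le_mul_of_nonneg_right h (Real.exp_pos _).le
  have hWto : Tendsto W atTop (nhds 0) := by
    have h1 : Tendsto (fun t : ℝ => α * t) atTop atTop :=
      Tendsto.const_mul_atTop hαpos tendsto_id
    have h2 : Tendsto (fun t : ℝ => Real.exp (-(α * t))) atTop (nhds 0) :=
      Real.tendsto_exp_neg_atTop_nhds_zero.comp h1
    have hexp0 : Tendsto (fun t : ℝ => (W t₀ * Real.exp (α * t₀)) * Real.exp (-(α * t)))
        atTop (nhds 0) := by
      simpa using h2.const_mul (W t₀ * Real.exp (α * t₀))
    refine tendsto_of_tendsto_of_tendsto_of_le_of_le' tendsto_const_nhds hexp0 ?_ ?_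
    · exact Eventually.of_forall hWnn
    · exact eventually_atTop.mpr ⟨t₀, fun t ht => hdecay t ht⟩
  -- edges synchronize
  have hedge : ∀ i j : Fin n, i ≠ j → U i j ≠ 0 →
      Tendsto (fun t => (x t i - x t j) ⬝ᵥ (x t i - x t j)) atTop (nhds 0) := by
    intro i j hij hU0
    have hκ : 0 < -(1/2) * U i j := by
      rcases lt_or_eq_of_le (hUoff i j hij) with h | h
      · linarith
      · exact absurd h hU0
    have hTle : ∀ t, (-(1/2) * U i j) * ((x t i - x t j) ⬝ᵥ V.mulVec (x t i - x t j)) ≤ W t := by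
      intro t
      calc (-(1/2) * U i j) * ((x t i - x t j) ⬝ᵥ V.mulVec (x t i - x t j))
          ≤ ∑ j', (-(1/2) * U i j') * ((x t i - x t j') ⬝ᵥ V.mulVec (x t i - x t j')) :=
            Finset.single_le_sum (fun j' _ => htermnn t i j') (Finset.mem_univ j)
      _ ≤ W t := Finset.single_le_sum
            (fun i' _ => Finset.sum_nonneg fun j' _ => htermnn t i' j') (Finset.mem_univ i)
    have hT0 : Tendsto (fun t => (-(1/2) * U i j) *
        ((x t i - x t j) ⬝ᵥ V.mulVec (x t i - x t j))) atTop (nhds 0) :=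
      tendsto_of_tendsto_of_tendsto_of_le_of_le tendsto_const_nhds hWto
        (fun t => htermnn t i j) hTle
    have hκε : 0 < (-(1/2) * U i j) * ε := mul_pos hκ hε
    have hs_le : ∀ t, (x t i - x t j) ⬝ᵥ (x t i - x t j)
        ≤ ((-(1/2) * U i j) * ε)⁻¹ *
          ((-(1/2) * U i j) * ((x t i - x t j) ⬝ᵥ V.mulVec (x t i - x t j))) := by
      intro t
      have h1 := (hbound (x t i - x t j)).1
      have h2 : ((-(1/2) * U i j) * ε) * ((x t i - x t j) ⬝ᵥ (x t i - x t j))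
          ≤ (-(1/2) * U i j) * ((x t i - x t j) ⬝ᵥ V.mulVec (x t i - x t j)) := by
        have h3 := mul_le_mul_of_nonneg_left h1 hκ.le
        calc ((-(1/2) * U i j) * ε) * ((x t i - x t j) ⬝ᵥ (x t i - x t j))
            = (-(1/2) * U i j) * (ε * ((x t i - x t j) ⬝ᵥ (x t i - x t j))) := by ring
        _ ≤ _ := h3
      have h4 := mul_le_mul_of_nonneg_left h2 (inv_nonneg.mpr hκε.le)
      rwa [← mul_assoc, inv_mul_cancel₀ hκε.ne', one_mul] at h4
    have hlim : Tendsto (fun t => ((-(1/2) * U i j) * ε)⁻¹ *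
        ((-(1/2) * U i j) * ((x t i - x t j) ⬝ᵥ V.mulVec (x t i - x t j))))
        atTop (nhds 0) := by
      simpa using hT0.const_mul ((-(1/2) * U i j) * ε)⁻¹
    exact tendsto_of_tendsto_of_tendsto_of_le_of_le tendsto_const_nhds hlim
      (fun t => hdotnn _) hs_le
  -- equivalence-relation argument
  set rel : Fin n → Fin n → Prop := fun i j =>
    Tendsto (fun t => (x t i - x t j) ⬝ᵥ (x t i - x t j)) atTop (nhds 0) with hrel
  have hrefl : ∀ i, rel i i := by
    intro i
    show Tendsto (fun t => (x t i - x t i) ⬝ᵥ (x t i - x t i)) atTop (nhds 0)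
    have he : (fun t => (x t i - x t i) ⬝ᵥ (x t i - x t i)) = fun _ => (0:ℝ) := by
      funext t; simp
    rw [he]
    exact tendsto_const_nhds
  have htrans : ∀ i j k, rel i j → rel j k → rel i k := by
    intro i j k h1 h2
    show Tendsto (fun t => (x t i - x t k) ⬝ᵥ (x t i - x t k)) atTop (nhds 0)
    have hub : ∀ t, (x t i - x t k) ⬝ᵥ (x t i - x t k)
        ≤ 2 * ((x t i - x t j) ⬝ᵥ (x t i - x t j) + (x t j - x t k) ⬝ᵥ (x t j - x t k)) := by
      intro t
      have h := dot_add_le (x t i - x t j) (x t j - x t k)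
      have he : (x t i - x t j) + (x t j - x t k) = x t i - x t k := by abel
      rwa [he] at h
    have hlim2 : Tendsto (fun t => 2 * ((x t i - x t j) ⬝ᵥ (x t i - x t j)
        + (x t j - x t k) ⬝ᵥ (x t j - x t k))) atTop (nhds 0) := by
      simpa using (Tendsto.add h1 h2).const_mul (2:ℝ)
    exact tendsto_of_tendsto_of_tendsto_of_le_of_le tendsto_const_nhds hlim2
      (fun t => hdotnn _) hub
  have hall : ∀ i j, rel i j := by
    intro i j
    by_contra hnot
    set Sf : Finset (Fin n) := Finset.univ.filter (fun j' => rel i j') with hSf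
    have hiS : i ∈ Sf := by
      rw [hSf, Finset.mem_filter]
      exact ⟨Finset.mem_univ i, hrefl i⟩
    have hSne : Sf ≠ Finset.univ := by
      intro h
      have hjS : j ∈ Sf := h ▸ Finset.mem_univ j
      rw [hSf, Finset.mem_filter] at hjS
      exact hnot hjS.2
    obtain ⟨a, haS, b, hbS, hUab⟩ := hUirr Sf ⟨i, hiS⟩ hSne
    have hab : a ≠ b := by rintro rfl; exact hbS haS
    have hrab : rel a b := hedge a b hab hUab
    have hria : rel i a := by
      rw [hSf, Finset.mem_filter] at haS
      exact haS.2
    have hrib : rel i b := htrans i a b hria hrab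
    refine hbS ?_
    rw [hSf, Finset.mem_filter]
    exact ⟨Finset.mem_univ b, hrib⟩
  intro i j
  have h : Tendsto (fun t => (x t i - x t j) ⬝ᵥ (x t i - x t j)) atTop (nhds 0) := hall i j
  have hsq := (Real.continuous_sqrt.tendsto 0).comp h
  rw [Real.sqrt_zero] at hsq; exact hsq
end

section
/- Let G_1,…,G_r be n×n real matrices with zero row sums (n ≥ 2), and let μ = min_{k} min{ xᵀG_k x / xᵀx : x ∈ ℝⁿ, x ≠ 0, x ⊥ e }. Then μ belongs to Ξ; in fact U = L_K = nI − J is an irreducible matrix in 𝒲 with U(G_k − μI) positive semidefinite for all k. Consequently ξ_M = sup Ξ exists and ξ_M ≥ μ. -/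
open Matrix

/-- `U` is an irreducible `n × n` matrix: for every nonempty proper subset `S` of the
index set there are `i ∈ S` and `j ∉ S` with `U i j ≠ 0`. -/
def IsIrreducibleMatrix {n : ℕ} (U : Matrix (Fin n) (Fin n) ℝ) : Prop :=
  ∀ S : Finset (Fin n), S.Nonempty → S ≠ Finset.univ → ∃ i ∈ S, ∃ j ∉ S, U i j ≠ 0

/-- `U ∈ 𝒲`: `U` is symmetric with zero row sums and nonpositive off-diagonal entries. -/
def MemW {n : ℕ} (U : Matrix (Fin n) (Fin n) ℝ) : Prop :=
  U.IsSymm ∧ (∀ i, ∑ j, U i j = 0) ∧ ∀ i j, i ≠ j → U i j ≤ 0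

/-- `Ξ`: the set of `ξ ∈ ℝ` for which there exists an irreducible `U ∈ 𝒲` such that
`U * (G k − ξ I)` is positive semidefinite (as a quadratic form) for all `k`. -/
def Xi {n r : ℕ} (G : Fin r → Matrix (Fin n) (Fin n) ℝ) : Set ℝ :=
  {ξ | ∃ U : Matrix (Fin n) (Fin n) ℝ, MemW U ∧ IsIrreducibleMatrix U ∧
    ∀ k, ∀ x : Fin n → ℝ,
      0 ≤ x ⬝ᵥ (U * (G k - ξ • (1 : Matrix (Fin n) (Fin n) ℝ))).mulVec x}

lemma LK_mulVec {n : ℕ} (x : Fin n → ℝ) :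
    (((n:ℝ) • 1 - Matrix.of fun _ _ => (1:ℝ)) : Matrix (Fin n) (Fin n) ℝ).mulVec x
      = fun i => (n:ℝ) * x i - ∑ j, x j := by
  funext i
  simp [Matrix.mulVec, dotProduct, Matrix.sub_apply, Matrix.smul_apply,
    Matrix.one_apply, sub_mul, ite_mul, Finset.sum_sub_distrib, Finset.sum_ite_eq,
    Finset.mul_sum]

lemma LK_symm {n : ℕ} :
    ((((n:ℝ) • 1 - Matrix.of fun _ _ => (1:ℝ)) : Matrix (Fin n) (Fin n) ℝ))ᵀ
      = (((n:ℝ) • 1 - Matrix.of fun _ _ => (1:ℝ)) : Matrix (Fin n) (Fin n) ℝ) := by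
  ext i j
  simp [Matrix.one_apply, eq_comm]

lemma LK_psd {n : ℕ} (hn : 0 < n) (A : Matrix (Fin n) (Fin n) ℝ)
    (hrow : ∀ i, ∑ j, A i j = 0) (μ : ℝ)
    (hlb : ∀ y : Fin n → ℝ, y ≠ 0 → ∑ i, y i = 0 → μ * (y ⬝ᵥ y) ≤ y ⬝ᵥ A.mulVec y)
    (x : Fin n → ℝ) :
    0 ≤ x ⬝ᵥ ((((n:ℝ) • 1 - Matrix.of fun _ _ => (1:ℝ)) : Matrix (Fin n) (Fin n) ℝ)
        * (A - μ • 1)).mulVec x := by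
  set U : Matrix (Fin n) (Fin n) ℝ := (n:ℝ) • 1 - Matrix.of fun _ _ => (1:ℝ) with hU
  set s : ℝ := ∑ j, x j with hs
  set y : Fin n → ℝ := fun i => (n:ℝ) * x i - s with hy
  have hyU : U.mulVec x = y := LK_mulVec x
  have hysum : ∑ i, y i = 0 := by
    simp only [hy, Finset.sum_sub_distrib, ← Finset.mul_sum, Finset.sum_const,
      Finset.card_univ, Fintype.card_fin, nsmul_eq_mul, ← hs]
    ring
  have step1 : x ⬝ᵥ (U * (A - μ • 1)).mulVec x = y ⬝ᵥ (A - μ • 1).mulVec x := by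
    rw [← Matrix.mulVec_mulVec, Matrix.dotProduct_mulVec, ← Matrix.mulVec_transpose,
      LK_symm, hyU]
  have honese : (A - μ • 1).mulVec (fun _ => (1:ℝ)) = fun _ => -μ := by
    funext i
    rw [Matrix.sub_mulVec, Matrix.smul_mulVec, Matrix.one_mulVec]
    have hA : A.mulVec (fun _ => (1:ℝ)) i = 0 := by
      simpa [Matrix.mulVec, dotProduct] using hrow i
    simp [hA]
  have hxdecomp : (n:ℝ) • x = y + s • (fun _ => (1:ℝ)) := by
    funext i
    simp only [Pi.smul_apply, Pi.add_apply, hy, smul_eq_mul]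
    ring
  have step2 : (n:ℝ) * (y ⬝ᵥ (A - μ • 1).mulVec x) = y ⬝ᵥ (A - μ • 1).mulVec y := by
    have h1 : y ⬝ᵥ (A - μ • 1).mulVec ((n:ℝ) • x)
        = (n:ℝ) * (y ⬝ᵥ (A - μ • 1).mulVec x) := by
      rw [Matrix.mulVec_smul]
      simp [dotProduct_smul, smul_eq_mul]
    rw [← h1, hxdecomp, Matrix.mulVec_add, Matrix.mulVec_smul, honese,
      dotProduct_add]
    have hz : y ⬝ᵥ (s • fun _ => (-μ:ℝ)) = 0 := by
      have he : y ⬝ᵥ (s • fun _ => (-μ:ℝ)) = (∑ i, y i) * (s * -μ) := by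
        simp [dotProduct, Finset.sum_mul]
      rw [he, hysum, zero_mul]
    rw [hz, add_zero]
  have step3 : y ⬝ᵥ (A - μ • 1).mulVec y = y ⬝ᵥ A.mulVec y - μ * (y ⬝ᵥ y) := by
    rw [Matrix.sub_mulVec, Matrix.smul_mulVec, Matrix.one_mulVec]
    simp [dotProduct_sub, dotProduct_smul, smul_eq_mul]
  have hnum : 0 ≤ y ⬝ᵥ A.mulVec y - μ * (y ⬝ᵥ y) := by
    by_cases hy0 : y = 0
    · simp [hy0]
    · have := hlb y hy0 hysum; linarith
  have hn' : (0:ℝ) < n := by exact_mod_cast hn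
  have key : 0 ≤ (n:ℝ) * (x ⬝ᵥ (U * (A - μ • 1)).mulVec x) := by
    rw [step1, step2, step3]; exact hnum
  nlinarith [key, hn']

lemma xi_le_bound {n r : ℕ} (hn : 2 ≤ n) (G : Fin r → Matrix (Fin n) (Fin n) ℝ)
    (k₀ : Fin r) (ξ : ℝ) (hξ : ξ ∈ Xi G) :
    ξ ≤ 2 * ∑ j, |G k₀ j ⟨0, by omega⟩| := by
  obtain ⟨U, ⟨hsymm, hrowU, hoff⟩, hirr, hpsd⟩ := hξ
  set i : Fin n := ⟨0, by omega⟩ with hi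
  set C : ℝ := ∑ j, |G k₀ j i| with hC
  -- the singleton {i} is a proper nonempty subset
  have hne : ({i} : Finset (Fin n)) ≠ Finset.univ := by
    intro h
    have h1 : (⟨1, by omega⟩ : Fin n) ∈ ({i} : Finset (Fin n)) := by
      rw [h]; exact Finset.mem_univ _
    rw [Finset.mem_singleton] at h1
    exact absurd (congrArg Fin.val h1) (by simp)
  obtain ⟨i2, hi2, j, hj, hUij0⟩ := hirr {i} ⟨i, Finset.mem_singleton_self i⟩ hne
  rw [Finset.mem_singleton] at hi2
  subst hi2
  rw [Finset.mem_singleton] at hj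
  have hij : i ≠ j := fun h => hj h.symm
  have hUij : U i j < 0 := lt_of_le_of_ne (hoff i j hij) hUij0
  -- positivity of the diagonal entry
  set T : ℝ := ∑ j' ∈ Finset.univ.erase i, U i j' with hT
  have hsplit : U i i + T = 0 := by
    rw [hT, Finset.add_sum_erase _ _ (Finset.mem_univ i)]; exact hrowU i
  have hTle : T ≤ U i j := by
    have h1 : -U i j ≤ ∑ j' ∈ Finset.univ.erase i, -U i j' := by
      refine Finset.single_le_sum (f := fun j' => -U i j') (fun j' hj' => ?_)
        (Finset.mem_erase.mpr ⟨hj, Finset.mem_univ j⟩)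
      exact neg_nonneg.mpr (hoff i j' (fun h => (Finset.mem_erase.mp hj').1 h.symm))
    rw [Finset.sum_neg_distrib] at h1
    linarith
  have hUii : 0 < U i i := by linarith
  -- absolute row sum equals twice the diagonal
  have habs : ∑ j', |U i j'| = 2 * U i i := by
    rw [← Finset.add_sum_erase _ _ (Finset.mem_univ i), abs_of_pos hUii]
    have h2 : ∑ j' ∈ Finset.univ.erase i, |U i j'|
        = ∑ j' ∈ Finset.univ.erase i, -U i j' := by
      refine Finset.sum_congr rfl fun j' hj' => ?_
      exact abs_of_nonpos (hoff i j' (fun h => (Finset.mem_erase.mp hj').1 h.symm))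
    rw [h2, Finset.sum_neg_distrib, ← hT]
    linarith
  -- evaluate the PSD condition at the standard basis vector
  have hpsd' := hpsd k₀ (Pi.single i 1)
  have hdot : (Pi.single i 1 : Fin n → ℝ) ⬝ᵥ
      (U * (G k₀ - ξ • 1)).mulVec (Pi.single i 1)
      = (U * (G k₀ - ξ • 1)) i i := by
    simp [Matrix.mulVec, dotProduct, Pi.single_apply, mul_ite, ite_mul,
      Finset.sum_ite_eq, Finset.sum_ite_eq']
  have hMii : (U * (G k₀ - ξ • 1)) i i
      = (∑ j', U i j' * G k₀ j' i) - ξ * U i i := by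
    rw [Matrix.mul_apply]
    have : ∀ j' : Fin n, U i j' * (G k₀ - ξ • 1) j' i
        = U i j' * G k₀ j' i - (if j' = i then ξ * U i j' else 0) := by
      intro j'
      by_cases h : j' = i <;>
        simp [Matrix.sub_apply, Matrix.smul_apply, Matrix.one_apply, h, mul_sub] <;> ring
    rw [Finset.sum_congr rfl fun j' _ => this j', Finset.sum_sub_distrib,
      Finset.sum_ite_eq' Finset.univ i (fun j' => ξ * U i j')]
    simp [mul_comm]
  have hsum_le : ∑ j', U i j' * G k₀ j' i ≤ (∑ j', |U i j'|) * C := by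
    rw [Finset.sum_mul]
    refine Finset.sum_le_sum fun j' _ => ?_
    have h1 : U i j' * G k₀ j' i ≤ |U i j'| * |G k₀ j' i| := by
      calc U i j' * G k₀ j' i ≤ |U i j' * G k₀ j' i| := le_abs_self _
        _ = |U i j'| * |G k₀ j' i| := abs_mul _ _
    have h2 : |G k₀ j' i| ≤ C := by
      rw [hC]
      exact Finset.single_le_sum (f := fun j'' => |G k₀ j'' i|) (fun j'' _ => abs_nonneg _) (Finset.mem_univ j')
    calc U i j' * G k₀ j' i ≤ |U i j'| * |G k₀ j' i| := h1
      _ ≤ |U i j'| * C := mul_le_mul_of_nonneg_left h2 (abs_nonneg _)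
  have hfinal : ξ * U i i ≤ (2 * C) * U i i := by
    rw [hdot, hMii] at hpsd'
    rw [habs] at hsum_le
    linarith
  exact le_of_mul_le_mul_right hfinal hUii

/-- Let `G 1, …, G r` be `n × n` real matrices with zero row sums
(`n ≥ 2`), and let `μ = min_k min { xᵀGₖx / xᵀx : x ≠ 0, x ⊥ e }` (hypothesized as a
lower bound that is attained).  Then `U = L_K = nI − J` is an irreducible matrix in `𝒲`
with `U(Gₖ − μI)` positive semidefinite for all `k`; hence `μ ∈ Ξ`, and
`ξ_M = sup Ξ` exists (`Ξ` is nonempty and bounded above) with `ξ_M ≥ μ`. -/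
theorem stmt11 {n r : ℕ} (hn : 2 ≤ n)
    (G : Fin r → Matrix (Fin n) (Fin n) ℝ)
    (hGrow : ∀ k i, ∑ j, G k i j = 0)
    (μ : ℝ)
    (hμ_lb : ∀ k, ∀ x : Fin n → ℝ, x ≠ 0 → x ⬝ᵥ (fun _ => (1 : ℝ)) = 0 →
      μ ≤ (x ⬝ᵥ (G k).mulVec x) / (x ⬝ᵥ x))
    (hμ_mem : ∃ k, ∃ x : Fin n → ℝ, x ≠ 0 ∧ x ⬝ᵥ (fun _ => (1 : ℝ)) = 0 ∧
      (x ⬝ᵥ (G k).mulVec x) / (x ⬝ᵥ x) = μ) :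
    (MemW ((n : ℝ) • (1 : Matrix (Fin n) (Fin n) ℝ) - Matrix.of fun _ _ => (1 : ℝ)) ∧
      IsIrreducibleMatrix
        ((n : ℝ) • (1 : Matrix (Fin n) (Fin n) ℝ) - Matrix.of fun _ _ => (1 : ℝ)) ∧
      ∀ k, ∀ x : Fin n → ℝ,
        0 ≤ x ⬝ᵥ (((n : ℝ) • (1 : Matrix (Fin n) (Fin n) ℝ) - Matrix.of fun _ _ => (1 : ℝ)) *
          (G k - μ • (1 : Matrix (Fin n) (Fin n) ℝ))).mulVec x) ∧
    μ ∈ Xi G ∧ (Xi G).Nonempty ∧ BddAbove (Xi G) ∧ μ ≤ sSup (Xi G) := by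
  have hn0 : 0 < n := by omega
  obtain ⟨k₀, -⟩ := hμ_mem
  -- membership in 𝒲
  have hW : MemW ((n : ℝ) • (1 : Matrix (Fin n) (Fin n) ℝ) - Matrix.of fun _ _ => (1 : ℝ)) := by
    refine ⟨LK_symm, fun i => ?_, fun i j hij => ?_⟩
    · simp [Matrix.sub_apply, Matrix.smul_apply, Matrix.one_apply, smul_eq_mul,
        Finset.sum_sub_distrib, mul_ite, Finset.sum_ite_eq, Finset.card_univ]
    · simp [Matrix.sub_apply, Matrix.smul_apply, Matrix.one_apply, hij]
  -- irreducibility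
  have hirr : IsIrreducibleMatrix
      ((n : ℝ) • (1 : Matrix (Fin n) (Fin n) ℝ) - Matrix.of fun _ _ => (1 : ℝ)) := by
    intro S hS hSne
    obtain ⟨i, hi⟩ := hS
    have : ∃ j, j ∉ S := by
      by_contra h
      push_neg at h
      exact hSne (Finset.eq_univ_iff_forall.mpr h)
    obtain ⟨j, hj⟩ := this
    refine ⟨i, hi, j, hj, ?_⟩
    have hij : i ≠ j := fun h => hj (h ▸ hi)
    simp [Matrix.sub_apply, Matrix.smul_apply, Matrix.one_apply, hij]
  -- PSD
  have hpsd : ∀ k, ∀ x : Fin n → ℝ,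
      0 ≤ x ⬝ᵥ (((n : ℝ) • (1 : Matrix (Fin n) (Fin n) ℝ) - Matrix.of fun _ _ => (1 : ℝ)) *
        (G k - μ • (1 : Matrix (Fin n) (Fin n) ℝ))).mulVec x := by
    intro k x
    refine LK_psd hn0 (G k) (hGrow k) μ (fun y hy0 hysum => ?_) x
    have hortho : y ⬝ᵥ (fun _ => (1 : ℝ)) = 0 := by
      simpa [dotProduct] using hysum
    have hlb := hμ_lb k y hy0 hortho
    have hyy : 0 < y ⬝ᵥ y := by
      have h0 : 0 ≤ y ⬝ᵥ y := Finset.sum_nonneg fun i _ => mul_self_nonneg (y i)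
      rcases lt_or_eq_of_le h0 with h | h
      · exact h
      · exact absurd (dotProduct_self_eq_zero.mp h.symm) hy0
    exact (le_div_iff₀ hyy).mp hlb
  have hmem : μ ∈ Xi G := ⟨_, hW, hirr, hpsd⟩
  have hbdd : BddAbove (Xi G) :=
    ⟨2 * ∑ j, |G k₀ j ⟨0, by omega⟩|, fun ξ hξ => xi_le_bound hn G k₀ ξ hξ⟩
  exact ⟨⟨hW, hirr, hpsd⟩, hmem, ⟨μ, hmem⟩, hbdd, le_csSup hbdd hmem⟩
end

section
/- Let G_1,…,G_r be n×n real matrices (n ≥ 2) with nonpositive off-diagonal entries and zero row sums and zero column sums. Then ξ_M ≥ 0, i.e., 0 ∈ Ξ. If in addition G_k + G_kᵀ is irreducible for every k, then ξ_M > 0, i.e., Ξ contains some ξ > 0. -/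
open Matrix

namespace S12

variable {n : ℕ}

lemma qf (A : Matrix (Fin n) (Fin n) ℝ) (x : Fin n → ℝ) :
    x ⬝ᵥ A.mulVec x = ∑ i, ∑ j, A i j * x i * x j := by
  simp only [dotProduct, Matrix.mulVec, Finset.mul_sum]
  exact Finset.sum_congr rfl fun i _ => Finset.sum_congr rfl fun j _ => by ring

lemma energy (A : Matrix (Fin n) (Fin n) ℝ)
    (hrow : ∀ i, ∑ j, A i j = 0) (hcol : ∀ j, ∑ i, A i j = 0) (x : Fin n → ℝ) :
    ∑ i, ∑ j, A i j * (x i - x j)^2 = -2 * ∑ i, ∑ j, A i j * x i * x j := by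
  have h1 : ∑ i, ∑ j, A i j * x i * x i = 0 := by
    refine Finset.sum_eq_zero fun i _ => ?_
    calc ∑ j, A i j * x i * x i = (∑ j, A i j) * (x i * x i) := by
          rw [Finset.sum_mul]; exact Finset.sum_congr rfl fun j _ => by ring
      _ = 0 := by rw [hrow i, zero_mul]
  have h2 : ∑ i, ∑ j, A i j * x j * x j = 0 := by
    rw [Finset.sum_comm]
    refine Finset.sum_eq_zero fun j _ => ?_
    calc ∑ i, A i j * x j * x j = (∑ i, A i j) * (x j * x j) := by
          rw [Finset.sum_mul]; exact Finset.sum_congr rfl fun i _ => by ring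
      _ = 0 := by rw [hcol j, zero_mul]
  have expand : ∑ i, ∑ j, A i j * (x i - x j)^2
      = (∑ i, ∑ j, A i j * x i * x i) - 2 * (∑ i, ∑ j, A i j * x i * x j)
        + ∑ i, ∑ j, A i j * x j * x j := by
    have step : ∑ i, ∑ j, A i j * (x i - x j)^2
        = ∑ i, ∑ j, (A i j * x i * x i - 2 * (A i j * x i * x j) + A i j * x j * x j) :=
      Finset.sum_congr rfl fun i _ => Finset.sum_congr rfl fun j _ => by ring
    rw [step]
    simp only [Finset.sum_add_distrib, Finset.sum_sub_distrib, ← Finset.mul_sum]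
  rw [expand, h1, h2]; ring

lemma qf_nonneg (A : Matrix (Fin n) (Fin n) ℝ)
    (hrow : ∀ i, ∑ j, A i j = 0) (hcol : ∀ j, ∑ i, A i j = 0)
    (hoff : ∀ i j, i ≠ j → A i j ≤ 0) (x : Fin n → ℝ) :
    0 ≤ ∑ i, ∑ j, A i j * x i * x j := by
  have hE : ∑ i, ∑ j, A i j * (x i - x j)^2 ≤ 0 := by
    refine Finset.sum_nonpos fun i _ => Finset.sum_nonpos fun j _ => ?_
    by_cases h : i = j
    · subst h; simp
    · exact mul_nonpos_of_nonpos_of_nonneg (hoff i j h) (sq_nonneg _)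
  have := energy A hrow hcol x
  linarith

lemma symm_sum (A : Matrix (Fin n) (Fin n) ℝ) (x : Fin n → ℝ) :
    ∑ i, ∑ j, A j i * x i * x j = ∑ i, ∑ j, A i j * x i * x j := by
  rw [Finset.sum_comm]
  exact Finset.sum_congr rfl fun i _ => Finset.sum_congr rfl fun j _ => by ring

lemma gap (hn : 2 ≤ n) (L : Matrix (Fin n) (Fin n) ℝ)
    (hrow : ∀ i, ∑ j, L i j = 0) (hcol : ∀ j, ∑ i, L i j = 0)
    (hoff : ∀ i j, i ≠ j → L i j ≤ 0) (hirr : IsIrreducibleMatrix L) :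
    ∃ m > (0:ℝ), ∀ y : Fin n → ℝ, (∑ i, y i) = 0 →
      m * (∑ i, y i * y i) ≤ ∑ i, ∑ j, L i j * y i * y j := by
  set f : (Fin n → ℝ) → ℝ := fun y => ∑ i, ∑ j, L i j * y i * y j with hf
  set S : Set (Fin n → ℝ) := {y | (∑ i, y i) = 0 ∧ (∑ i, y i * y i) = 1} with hS
  -- continuity
  have hsum_cont : Continuous fun y : Fin n → ℝ => ∑ i, y i :=
    continuous_finset_sum _ fun i _ => continuous_apply i
  have hsq_cont : Continuous fun y : Fin n → ℝ => ∑ i, y i * y i :=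
    continuous_finset_sum _ fun i _ => (continuous_apply i).mul (continuous_apply i)
  have hf_cont : Continuous f :=
    continuous_finset_sum _ fun i _ => continuous_finset_sum _ fun j _ =>
      (continuous_const.mul (continuous_apply i)).mul (continuous_apply j)
  -- compactness
  have hclosed : IsClosed S := by
    have : S = {y | (∑ i, y i) = 0} ∩ {y | (∑ i, y i * y i) = 1} := rfl
    rw [this]
    exact (isClosed_eq hsum_cont continuous_const).inter (isClosed_eq hsq_cont continuous_const)
  have hbdd : Bornology.IsBounded S := by
    refine (Metric.isBounded_closedBall (x := (0 : Fin n → ℝ)) (r := 1)).subset ?_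
    rintro y ⟨-, h2⟩
    rw [Metric.mem_closedBall, dist_zero_right]
    rw [pi_norm_le_iff_of_nonneg zero_le_one]
    intro i
    have hle : y i * y i ≤ 1 := by
      have h := Finset.single_le_sum (f := fun i => y i * y i)
        (fun i _ => mul_self_nonneg (y i)) (Finset.mem_univ i)
      simpa [h2] using h
    rw [Real.norm_eq_abs]
    nlinarith [abs_nonneg (y i), abs_mul_abs_self (y i)]
  have hcomp : IsCompact S := Metric.isCompact_of_isClosed_isBounded hclosed hbdd
  -- nonempty
  have h0 : (0 : ℕ) < n := by omega
  have h1 : (1 : ℕ) < n := by omega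
  have hSne : S.Nonempty := by
    set a : ℝ := (Real.sqrt 2)⁻¹ with ha
    have ha2 : a * a = 2⁻¹ := by
      rw [ha, ← mul_inv]
      rw [Real.mul_self_sqrt (by norm_num : (0:ℝ) ≤ 2)]
    set i0 : Fin n := ⟨0, h0⟩
    set i1 : Fin n := ⟨1, h1⟩
    have hne01 : i0 ≠ i1 := by simp [i0, i1, Fin.ext_iff]
    refine ⟨fun i => (if i = i0 then a else 0) + (if i = i1 then -a else 0), ?_, ?_⟩
    · simp only [Finset.sum_add_distrib, Finset.sum_ite_eq', Finset.mem_univ, if_true]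
      ring
    · have : ∀ i : Fin n,
          ((if i = i0 then a else 0) + (if i = i1 then -a else 0)) *
          ((if i = i0 then a else 0) + (if i = i1 then -a else 0))
          = (if i = i0 then a * a else 0) + (if i = i1 then a * a else 0) := by
        intro i
        by_cases h : i = i0 <;> by_cases h' : i = i1 <;>
          first
          | (exfalso; exact hne01 (h ▸ h' ▸ rfl))
          | simp [h, h', hne01, Ne.symm hne01]
      rw [Finset.sum_congr rfl fun i _ => this i]
      simp only [Finset.sum_add_distrib, Finset.sum_ite_eq', Finset.mem_univ, if_true]
      rw [ha2]; norm_num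
  -- minimum
  obtain ⟨y0, hy0S, hmin⟩ := hcomp.exists_isMinOn hSne hf_cont.continuousOn
  simp only [isMinOn_iff] at hmin
  obtain ⟨hy0sum, hy0sq⟩ := hy0S
  -- positivity of the minimum
  have hfy0_pos : 0 < f y0 := by
    rcases lt_or_ge 0 (f y0) with h | h
    · exact h
    · exfalso
      have hge : 0 ≤ f y0 := qf_nonneg L hrow hcol hoff y0
      have hfy0 : f y0 = 0 := le_antisymm h hge
      have hEzero : ∑ i, ∑ j, L i j * (y0 i - y0 j)^2 = 0 := by
        rw [energy L hrow hcol y0]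
        have h' : ∑ i, ∑ j, L i j * y0 i * y0 j = 0 := hfy0
        rw [h']; ring
      have hterm : ∀ i j, L i j * (y0 i - y0 j)^2 = 0 := by
        have houter : ∀ i ∈ Finset.univ, ∑ j, L i j * (y0 i - y0 j)^2 = 0 := by
          rw [← Finset.sum_eq_zero_iff_of_nonpos]
          · exact hEzero
          · intro i _
            refine Finset.sum_nonpos fun j _ => ?_
            by_cases h' : i = j
            · subst h'; simp
            · exact mul_nonpos_of_nonpos_of_nonneg (hoff i j h') (sq_nonneg _)
        intro i j
        have := (Finset.sum_eq_zero_iff_of_nonpos (fun j _ => by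
          by_cases h' : i = j
          · subst h'; simp
          · exact mul_nonpos_of_nonpos_of_nonneg (hoff i j h') (sq_nonneg _))).mp
          (houter i (Finset.mem_univ i)) j (Finset.mem_univ j)
        exact this
      have heq : ∀ i j, L i j ≠ 0 → y0 i = y0 j := by
        intro i j hL
        have := hterm i j
        have hsq : (y0 i - y0 j)^2 = 0 := by
          rcases mul_eq_zero.mp this with h' | h'
          · exact absurd h' hL
          · exact h'
        have := pow_eq_zero_iff (n := 2) (by norm_num) |>.mp hsq
        linarith
      -- connectivity ⇒ y0 constant
      set i0 : Fin n := ⟨0, h0⟩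
      set T : Finset (Fin n) := Finset.univ.filter (fun i => y0 i = y0 i0) with hT
      have hTuniv : T = Finset.univ := by
        by_contra hne
        obtain ⟨i, hiT, j, hjT, hL⟩ := hirr T ⟨i0, by simp [hT]⟩ hne
        have hyi : y0 i = y0 i0 := (Finset.mem_filter.mp hiT).2
        have : y0 j = y0 i0 := (heq i j hL) ▸ hyi
        exact hjT (Finset.mem_filter.mpr ⟨Finset.mem_univ j, this⟩)
      have hconst : ∀ i, y0 i = y0 i0 := by
        intro i
        have : i ∈ T := hTuniv ▸ Finset.mem_univ i
        exact (Finset.mem_filter.mp this).2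
      have hz : y0 i0 = 0 := by
        have h'' : ∑ i, y0 i = (n : ℝ) * y0 i0 := by
          rw [Finset.sum_congr rfl fun i _ => hconst i]
          simp [Finset.sum_const, Finset.card_univ, mul_comm]
        have h3 : (n : ℝ) * y0 i0 = 0 := h''.symm.trans hy0sum
        have hn' : (n : ℝ) ≠ 0 := by positivity
        exact (mul_eq_zero.mp h3).resolve_left hn'
      have : ∑ i, y0 i * y0 i = 0 := by
        refine Finset.sum_eq_zero fun i _ => ?_
        rw [hconst i, hz]; ring
      rw [hy0sq] at this; norm_num at this
  -- conclusion by scaling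
  refine ⟨f y0, hfy0_pos, fun y hy => ?_⟩
  rcases eq_or_ne (∑ i, y i * y i) 0 with hz | hz
  · have hy0' : ∀ i, y i = 0 := by
      intro i
      have := (Finset.sum_eq_zero_iff_of_nonneg (fun i _ => mul_self_nonneg (y i))).mp hz
        i (Finset.mem_univ i)
      exact mul_self_eq_zero.mp this
    have : ∑ i, ∑ j, L i j * y i * y j = 0 :=
      Finset.sum_eq_zero fun i _ => Finset.sum_eq_zero fun j _ => by rw [hy0' i]; ring
    rw [hz, this]; ring_nf; exact le_refl 0
  · have hpos : 0 < ∑ i, y i * y i :=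
      lt_of_le_of_ne (Finset.sum_nonneg fun i _ => mul_self_nonneg (y i)) (Ne.symm hz)
    set t : ℝ := Real.sqrt (∑ i, y i * y i) with ht
    have htpos : 0 < t := Real.sqrt_pos.mpr hpos
    have htt : t * t = ∑ i, y i * y i := Real.mul_self_sqrt hpos.le
    set z : Fin n → ℝ := fun i => t⁻¹ * y i with hzdef
    have hzS : z ∈ S := by
      constructor
      · simp only [hzdef, ← Finset.mul_sum, hy, mul_zero]
      · have : ∑ i, z i * z i = t⁻¹ * t⁻¹ * ∑ i, y i * y i := by
          rw [Finset.mul_sum]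
          exact Finset.sum_congr rfl fun i _ => by simp [hzdef]; ring
        rw [this, ← htt]
        field_simp
    have hfz : f z = t⁻¹ * t⁻¹ * f y := by
      simp only [hf]
      rw [Finset.mul_sum]
      refine Finset.sum_congr rfl fun i _ => ?_
      rw [Finset.mul_sum]
      exact Finset.sum_congr rfl fun j _ => by simp [hzdef]; ring
    have := hmin z hzS
    rw [hfz] at this
    have h2 : f y0 * (t * t) ≤ f y := by
      have ht2 : 0 < t * t := mul_pos htpos htpos
      calc f y0 * (t * t) ≤ (t⁻¹ * t⁻¹ * f y) * (t * t) := by nlinarith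
        _ = f y := by field_simp
    calc f y0 * ∑ i, y i * y i = f y0 * (t * t) := by rw [htt]
      _ ≤ f y := h2
      _ = ∑ i, ∑ j, L i j * y i * y j := rfl

def Umat (n : ℕ) : Matrix (Fin n) (Fin n) ℝ :=
  Matrix.of fun i j => if i = j then (n : ℝ) - 1 else -1

lemma Umat_memW : MemW (Umat n) := by
  refine ⟨?_, ?_, ?_⟩
  · ext i j
    simp only [Matrix.transpose_apply, Umat, Matrix.of_apply]
    by_cases h : i = j
    · subst h; rfl
    · rw [if_neg h, if_neg (Ne.symm h)]
  · intro i
    have h : ∀ j, Umat n i j = (if i = j then (n : ℝ) else 0) + (-1) := by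
      intro j
      by_cases h : i = j
      · simp [Umat, h]; try ring
      · simp [Umat, h]
    rw [Finset.sum_congr rfl fun j _ => h j, Finset.sum_add_distrib,
      Finset.sum_ite_eq, Finset.sum_const]
    simp
  · intro i j hij
    simp [Umat, hij]

lemma Umat_irr (hn : 2 ≤ n) : IsIrreducibleMatrix (Umat n) := by
  intro S hne hproper
  obtain ⟨i, hi⟩ := hne
  obtain ⟨j, hj⟩ : ∃ j, j ∉ S := by
    by_contra h
    push_neg at h
    exact hproper (Finset.eq_univ_iff_forall.mpr h)
  have hij : i ≠ j := fun h => hj (h ▸ hi)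
  exact ⟨i, hi, j, hj, by simp [Umat, hij]⟩

lemma keyQF (A : Matrix (Fin n) (Fin n) ℝ) (hcol : ∀ j, ∑ i, A i j = 0)
    (ξ : ℝ) (x : Fin n → ℝ) :
    x ⬝ᵥ ((Umat n) * (A - ξ • (1 : Matrix (Fin n) (Fin n) ℝ))).mulVec x
      = n * (∑ i, ∑ j, A i j * x i * x j) - n * ξ * (∑ i, x i * x i)
        + ξ * (∑ i, x i) * (∑ i, x i) := by
  have hprod : (Umat n) * (A - ξ • (1 : Matrix (Fin n) (Fin n) ℝ))
      = Matrix.of fun i j => (n : ℝ) * A i j - (if i = j then (n : ℝ) * ξ else 0) + ξ := by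
    ext i j
    rw [Matrix.mul_apply]
    have hterm : ∀ t, Umat n i t * (A - ξ • (1 : Matrix (Fin n) (Fin n) ℝ)) t j
        = ((if i = t then (n : ℝ) * A t j else 0) - A t j)
          - (if t = j then ξ * Umat n i j else 0) := by
      intro t
      simp only [Matrix.sub_apply, Matrix.smul_apply, Matrix.one_apply, smul_eq_mul]
      by_cases h1 : i = t <;> by_cases h2 : t = j
      · subst h1; subst h2; simp [Umat]; try ring
      · subst h1; simp [Umat, h2]; try ring
      · subst h2; simp [Umat, h1]; try ring
      · simp [Umat, h1, h2]; try ring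
    rw [Finset.sum_congr rfl fun t _ => hterm t, Finset.sum_sub_distrib,
      Finset.sum_sub_distrib, Finset.sum_ite_eq, Finset.sum_ite_eq', hcol j]
    simp only [Finset.mem_univ, if_true, Matrix.of_apply]
    by_cases h : i = j
    · simp [Umat, h]; try ring
    · simp [Umat, h]; try ring
  rw [hprod, qf]
  have hsplit : ∀ i j, (Matrix.of fun i j => (n:ℝ) * A i j - (if i = j then (n:ℝ) * ξ else 0) + ξ) i j * x i * x j
      = (n:ℝ) * (A i j * x i * x j) - (if i = j then (n:ℝ) * ξ * (x i * x i) else 0)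
        + (ξ * x i) * x j := by
    intro i j
    by_cases h : i = j
    · subst h
      simp only [Matrix.of_apply]
      split_ifs with hc
      · ring
      · simp at hc
    · simp only [Matrix.of_apply, if_neg h]; ring
  rw [Finset.sum_congr rfl fun i _ => Finset.sum_congr rfl fun j _ => hsplit i j]
  have inner : ∀ i, ∑ j, ((n:ℝ) * (A i j * x i * x j)
        - (if i = j then (n:ℝ) * ξ * (x i * x i) else 0) + (ξ * x i) * x j)
      = (n:ℝ) * (∑ j, A i j * x i * x j) - (n:ℝ) * ξ * (x i * x i)
        + (ξ * x i) * ∑ j, x j := by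
    intro i
    rw [Finset.sum_add_distrib, Finset.sum_sub_distrib, ← Finset.mul_sum,
      Finset.sum_ite_eq, ← Finset.mul_sum]
    simp
  rw [Finset.sum_congr rfl fun i _ => inner i, Finset.sum_add_distrib,
    Finset.sum_sub_distrib, ← Finset.mul_sum, ← Finset.mul_sum, ← Finset.sum_mul]
  have : ∑ i, ξ * x i = ξ * ∑ i, x i := by rw [Finset.mul_sum]
  rw [this]
  try ring

end S12

/-- Let `G 1, …, G r` be `n × n` real matrices (`n ≥ 2`) with
nonpositive off-diagonal entries and zero row and column sums.  Then `0 ∈ Ξ`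
(so `ξ_M ≥ 0`); and if moreover `Gₖ + Gₖᵀ` is irreducible for every `k`, then `Ξ`
contains some `ξ > 0` (so `ξ_M > 0`). -/
theorem stmt12 {n r : ℕ} (hn : 2 ≤ n)
    (G : Fin r → Matrix (Fin n) (Fin n) ℝ)
    (hGoff : ∀ k i j, i ≠ j → G k i j ≤ 0)
    (hGrow : ∀ k i, ∑ j, G k i j = 0)
    (hGcol : ∀ k j, ∑ i, G k i j = 0) :
    (0 : ℝ) ∈ Xi G ∧
      ((∀ k, IsIrreducibleMatrix (G k + (G k)ᵀ)) → ∃ ξ > (0 : ℝ), ξ ∈ Xi G) := by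
  have hUW := S12.Umat_memW (n := n)
  have hUirr := S12.Umat_irr hn
  have hn0 : (0:ℝ) ≤ (n:ℝ) := Nat.cast_nonneg n
  have hnpos : (0:ℝ) < (n:ℝ) := by exact_mod_cast (by omega : 0 < n)
  constructor
  · refine ⟨S12.Umat n, hUW, hUirr, fun k x => ?_⟩
    rw [S12.keyQF (G k) (hGcol k) 0 x]
    have hq := S12.qf_nonneg (G k) (hGrow k) (hGcol k) (hGoff k) x
    have h2 : 0 ≤ (n:ℝ) * ∑ i, ∑ j, G k i j * x i * x j := mul_nonneg hn0 hq
    linarith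
  · intro hirrG
    obtain ⟨ξ, hξpos, hξ⟩ : ∃ ξ > (0:ℝ), ∀ k, ∀ y : Fin n → ℝ, (∑ i, y i) = 0 →
        ξ * (∑ i, y i * y i) ≤ ∑ i, ∑ j, G k i j * y i * y j := by
      rcases Nat.eq_zero_or_pos r with hr | hr
      · subst hr; exact ⟨1, one_pos, fun k => k.elim0⟩
      · have hgap : ∀ k, ∃ m > (0:ℝ), ∀ y : Fin n → ℝ, (∑ i, y i) = 0 →
            m * (∑ i, y i * y i) ≤ ∑ i, ∑ j, (G k + (G k)ᵀ) i j * y i * y j := by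
          intro k
          refine S12.gap hn (G k + (G k)ᵀ) ?_ ?_ ?_ (hirrG k)
          · intro i
            simp [Matrix.add_apply, Matrix.transpose_apply, Finset.sum_add_distrib,
              hGrow k i, hGcol k i]
          · intro j
            simp [Matrix.add_apply, Matrix.transpose_apply, Finset.sum_add_distrib,
              hGrow k j, hGcol k j]
          · intro i j hij
            have h1 := hGoff k i j hij
            have h2 := hGoff k j i (Ne.symm hij)
            simp only [Matrix.add_apply, Matrix.transpose_apply]
            linarith
        choose m hm hmb using hgap
        haveI : Nonempty (Fin r) := ⟨⟨0, hr⟩⟩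
        refine ⟨(Finset.univ.inf' Finset.univ_nonempty m) / 2, ?_, ?_⟩
        · have hpos : 0 < Finset.univ.inf' Finset.univ_nonempty m := by
            rw [Finset.lt_inf'_iff]
            exact fun k _ => hm k
          linarith
        · intro k y hy
          have h1 := hmb k y hy
          have h2 : Finset.univ.inf' Finset.univ_nonempty m ≤ m k :=
            Finset.inf'_le _ (Finset.mem_univ k)
          have h3 : ∑ i, ∑ j, (G k + (G k)ᵀ) i j * y i * y j
              = 2 * ∑ i, ∑ j, G k i j * y i * y j := by
            have hterm : ∀ i j, (G k + (G k)ᵀ) i j * y i * y j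
                = G k i j * y i * y j + (G k) j i * y i * y j := by
              intro i j
              simp only [Matrix.add_apply, Matrix.transpose_apply]
              ring
            rw [Finset.sum_congr rfl fun i _ => Finset.sum_congr rfl fun j _ => hterm i j]
            simp only [Finset.sum_add_distrib]
            rw [S12.symm_sum]
            ring
          have hyy : 0 ≤ ∑ i, y i * y i := Finset.sum_nonneg fun i _ => mul_self_nonneg _
          nlinarith [h1, h2, h3, hyy]
    refine ⟨ξ, hξpos, S12.Umat n, hUW, hUirr, fun k x => ?_⟩
    rw [S12.keyQF (G k) (hGcol k) ξ x]
    set s : ℝ := ∑ i, x i with hs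
    set c : ℝ := s / n with hc
    set y : Fin n → ℝ := fun i => x i - c with hy
    have hcs : (n:ℝ) * c = s := by
      rw [hc]; field_simp
    have hysum : ∑ i, y i = 0 := by
      simp only [hy]
      rw [Finset.sum_sub_distrib, Finset.sum_const]
      simp only [Finset.card_univ, Fintype.card_fin, nsmul_eq_mul, ← hs]
      rw [hcs]; ring
    have hQeq : ∑ i, ∑ j, G k i j * y i * y j = ∑ i, ∑ j, G k i j * x i * x j := by
      have e1 := S12.energy (G k) (hGrow k) (hGcol k) x
      have e2 := S12.energy (G k) (hGrow k) (hGcol k) y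
      have e3 : ∑ i, ∑ j, G k i j * (y i - y j)^2 = ∑ i, ∑ j, G k i j * (x i - x j)^2 :=
        Finset.sum_congr rfl fun i _ => Finset.sum_congr rfl fun j _ => by
          simp only [hy]; ring
      linarith
    have hxx : ∑ i, x i * x i = (∑ i, y i * y i) + (n:ℝ) * (c * c) := by
      have hterm : ∀ i, x i * x i = y i * y i + 2 * c * y i + c * c := fun i => by
        simp only [hy]; ring
      rw [Finset.sum_congr rfl fun i _ => hterm i, Finset.sum_add_distrib,
        Finset.sum_add_distrib, ← Finset.mul_sum, hysum, Finset.sum_const]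
      simp only [Finset.card_univ, Fintype.card_fin, nsmul_eq_mul]
      ring
    have hb := hξ k y hysum
    have hmul : (n:ℝ) * (ξ * (∑ i, y i * y i)) ≤ (n:ℝ) * ∑ i, ∑ j, G k i j * y i * y j :=
      mul_le_mul_of_nonneg_left hb hn0
    have hccs : (n:ℝ) * ξ * ((n:ℝ) * (c * c)) = ξ * s * s := by
      rw [← hcs]; ring
    rw [← hQeq, hxx]
    nlinarith [hmul, hccs]
end

section
/- Let U be an n×n real symmetric positive semidefinite matrix whose kernel is exactly the span of the all-ones vector e, let G be an n×n real matrix and μ a real number such that U(G − μI) is positive semidefinite (its symmetric part is positive semidefinite). If v ∈ ℂⁿ is an eigenvector of G with eigenvalue λ ∈ ℂ and v is not a scalar multiple of e, then Re(λ) ≥ μ. -/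
open Matrix

lemma re_quad {n : ℕ} (M : Matrix (Fin n) (Fin n) ℝ) (v : Fin n → ℂ) :
    (star v ⬝ᵥ (M.map Complex.ofReal) *ᵥ v).re =
      (fun i => (v i).re) ⬝ᵥ M *ᵥ (fun i => (v i).re)
      + (fun i => (v i).im) ⬝ᵥ M *ᵥ (fun i => (v i).im) := by
  simp only [dotProduct, mulVec, Matrix.map_apply, Pi.star_apply, Finset.mul_sum,
    Complex.re_sum, ← Finset.sum_add_distrib]
  refine Finset.sum_congr rfl fun i _ => ?_

  refine Finset.sum_congr rfl fun j _ => ?_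
  simp [Complex.mul_re, Complex.mul_im]; try ring
lemma im_quad {n : ℕ} (M : Matrix (Fin n) (Fin n) ℝ) (v : Fin n → ℂ) :
    (star v ⬝ᵥ (M.map Complex.ofReal) *ᵥ v).im =
      (fun i => (v i).re) ⬝ᵥ M *ᵥ (fun i => (v i).im)
      - (fun i => (v i).im) ⬝ᵥ M *ᵥ (fun i => (v i).re) := by
  simp only [dotProduct, mulVec, Matrix.map_apply, Pi.star_apply, Finset.mul_sum,
    Complex.im_sum, ← Finset.sum_sub_distrib]
  refine Finset.sum_congr rfl fun i _ => ?_

  refine Finset.sum_congr rfl fun j _ => ?_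
  simp [Complex.mul_re, Complex.mul_im]; try ring

/-- Let `U` be an `n × n` real symmetric positive semidefinite matrix
whose kernel is exactly the span of the all-ones vector `e`, and let `G` be a real
`n × n` matrix and `μ ∈ ℝ` such that `U(G − μI)` is positive semidefinite as a quadratic
form.  If `v ∈ ℂⁿ` is an eigenvector of `G` (i.e. of its complexification) with
eigenvalue `λ`, and `v` is not a scalar multiple of `e`, then `Re λ ≥ μ`. -/
theorem stmt13 {n : ℕ}
    (U : Matrix (Fin n) (Fin n) ℝ)
    (hUsymm : U.IsSymm)
    (hUpsd : ∀ x : Fin n → ℝ, 0 ≤ x ⬝ᵥ U.mulVec x)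
    (hUker : ∀ x : Fin n → ℝ, U.mulVec x = 0 ↔ ∃ a : ℝ, x = a • (fun _ => (1 : ℝ)))
    (G : Matrix (Fin n) (Fin n) ℝ) (μ : ℝ)
    (hPSD : ∀ x : Fin n → ℝ,
      0 ≤ x ⬝ᵥ (U * (G - μ • (1 : Matrix (Fin n) (Fin n) ℝ))).mulVec x)
    (v : Fin n → ℂ) (lam : ℂ) (hv : v ≠ 0)
    (heig : ((G.map Complex.ofReal)).mulVec v = lam • v)
    (hne : ¬∃ a : ℂ, v = a • (fun _ => (1 : ℂ))) :
    μ ≤ lam.re := by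
  classical
  set x : Fin n → ℝ := fun i => (v i).re with hx
  set y : Fin n → ℝ := fun i => (v i).im with hy
  -- U is PosSemidef over ℝ
  have hUps : U.PosSemidef := by
    refine .of_dotProduct_mulVec_nonneg ?_ (fun w => by simpa using hUpsd w)
    simpa [Matrix.IsHermitian, Matrix.conjTranspose_eq_transpose_of_trivial] using hUsymm.eq
  -- symmetry of dot products with U
  have hsy : ∀ a b : Fin n → ℝ, a ⬝ᵥ U *ᵥ b = b ⬝ᵥ U *ᵥ a := by
    intro a b
    rw [dotProduct_mulVec, ← Matrix.mulVec_transpose, hUsymm, dotProduct_comm]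
  set q : ℂ := star v ⬝ᵥ (U.map Complex.ofReal) *ᵥ v with hq
  have hqre : q.re = x ⬝ᵥ U *ᵥ x + y ⬝ᵥ U *ᵥ y := re_quad U v
  have hqim : q.im = 0 := by
    rw [hq, im_quad U v, hsy]
    ring
  -- q.re > 0
  have hqpos : 0 < q.re := by
    rcases lt_or_eq_of_le (add_nonneg (hUpsd x) (hUpsd y)) with h | h
    · rw [hqre]; exact h
    · exfalso
      have hxz : x ⬝ᵥ U *ᵥ x = 0 ∧ y ⬝ᵥ U *ᵥ y = 0 := by
        constructor <;> nlinarith [hUpsd x, hUpsd y]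
      have hUx : U *ᵥ x = 0 := (hUps.dotProduct_mulVec_zero_iff x).mp (by simpa using hxz.1)
      have hUy : U *ᵥ y = 0 := (hUps.dotProduct_mulVec_zero_iff y).mp (by simpa using hxz.2)
      obtain ⟨a, ha⟩ := (hUker x).mp hUx
      obtain ⟨b, hb⟩ := (hUker y).mp hUy
      refine hne ⟨⟨a, b⟩, funext fun i => ?_⟩
      have hxi : (v i).re = a := by
        have := congrFun ha i; simpa using this
      have hyi : (v i).im = b := by
        have := congrFun hb i; simpa using this
      apply Complex.ext <;> simp [hxi, hyi]
  -- eigen computation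
  have hsub : (G - μ • (1 : Matrix (Fin n) (Fin n) ℝ)).map Complex.ofReal
      = G.map Complex.ofReal - (μ : ℂ) • (1 : Matrix (Fin n) (Fin n) ℂ) := by
    ext i j
    by_cases h : i = j <;> simp [Matrix.one_apply, h]
  have hGv : ((G - μ • (1 : Matrix (Fin n) (Fin n) ℝ)).map Complex.ofReal) *ᵥ v
      = (lam - μ) • v := by
    rw [hsub, Matrix.sub_mulVec, heig, Matrix.smul_mulVec, Matrix.one_mulVec, sub_smul]
  have hmap : (U * (G - μ • (1 : Matrix (Fin n) (Fin n) ℝ))).map Complex.ofReal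
      = (U.map Complex.ofReal) * ((G - μ • (1 : Matrix (Fin n) (Fin n) ℝ)).map Complex.ofReal) := by
    exact Matrix.map_mul (f := Complex.ofRealHom)
  have key : star v ⬝ᵥ ((U * (G - μ • (1 : Matrix (Fin n) (Fin n) ℝ))).map Complex.ofReal) *ᵥ v
      = (lam - μ) * q := by
    rw [hmap, ← Matrix.mulVec_mulVec, hGv, Matrix.mulVec_smul, dotProduct_smul, smul_eq_mul, hq]
  have hnonneg : 0 ≤ ((lam - μ) * q).re := by
    rw [← key, re_quad]
    exact add_nonneg (hPSD x) (hPSD y)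
  rw [Complex.mul_re, hqim, mul_zero, sub_zero] at hnonneg
  have : (0:ℝ) ≤ (lam - μ).re := nonneg_of_mul_nonneg_right (by linarith [hnonneg] : 0 ≤ q.re * (lam - ↑μ).re) hqpos
  simp [Complex.sub_re] at this
  linarith
end

section
/- Let G_1,…,G_r be n×n real matrices with zero row sums (n ≥ 2). Then every ξ ∈ Ξ satisfies ξ ≤ μ₂(G_k) for all k; consequently, if Ξ is nonempty then ξ_M = sup Ξ ≤ min_k μ₂(G_k). -/
open Matrix

lemma quad_formula {n : ℕ} (U : Matrix (Fin n) (Fin n) ℝ) (hsym : U.IsSymm)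
    (hrow : ∀ i, ∑ j, U i j = 0) (x : Fin n → ℝ) :
    2 * (x ⬝ᵥ U.mulVec x) = ∑ i, ∑ j, (-(U i j)) * (x i - x j)^2 := by
  have hcol : ∀ j, ∑ i, U i j = 0 := by
    intro j
    have : ∑ i, U i j = ∑ i, U j i :=
      Finset.sum_congr rfl fun i _ => (hsym.apply j i)
    rw [this, hrow]
  have expand : ∀ i j : Fin n, (-(U i j)) * (x i - x j)^2
      = (2 * (x i * (U i j * x j))) - (U i j * (x i)^2) - (U i j * (x j)^2) := by
    intros; ring
  have h1 : ∑ i, ∑ j, U i j * (x i)^2 = 0 := by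
    refine Finset.sum_eq_zero fun i _ => ?_
    rw [← Finset.sum_mul, hrow, zero_mul]
  have h2 : ∑ i, ∑ j, U i j * (x j)^2 = 0 := by
    rw [Finset.sum_comm]
    refine Finset.sum_eq_zero fun j _ => ?_
    rw [← Finset.sum_mul, hcol, zero_mul]
  have h3 : x ⬝ᵥ U.mulVec x = ∑ i, ∑ j, x i * (U i j * x j) := by
    simp [dotProduct, Matrix.mulVec, Finset.mul_sum]
  simp only [expand, Finset.sum_sub_distrib, ← Finset.mul_sum, h1, h2, h3]
  ring

lemma quad_nonneg {n : ℕ} (U : Matrix (Fin n) (Fin n) ℝ) (hsym : U.IsSymm)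
    (hrow : ∀ i, ∑ j, U i j = 0) (hoff : ∀ i j, i ≠ j → U i j ≤ 0) (x : Fin n → ℝ) :
    0 ≤ x ⬝ᵥ U.mulVec x := by
  have h := quad_formula U hsym hrow x
  have hterm : ∀ i j : Fin n, 0 ≤ (-(U i j)) * (x i - x j)^2 := by
    intro i j
    rcases eq_or_ne i j with rfl | hij
    · simp
    · exact mul_nonneg (by linarith [hoff i j hij]) (sq_nonneg _)
  have : 0 ≤ ∑ i, ∑ j, (-(U i j)) * (x i - x j)^2 :=
    Finset.sum_nonneg fun i _ => Finset.sum_nonneg fun j _ => hterm i j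
  linarith

lemma const_of_quad_zero {n : ℕ} (U : Matrix (Fin n) (Fin n) ℝ) (hsym : U.IsSymm)
    (hrow : ∀ i, ∑ j, U i j = 0) (hoff : ∀ i j, i ≠ j → U i j ≤ 0)
    (hirr : IsIrreducibleMatrix U) (x : Fin n → ℝ)
    (hq : x ⬝ᵥ U.mulVec x = 0) : ∀ i j, x i = x j := by
  have h := quad_formula U hsym hrow x
  rw [hq, mul_zero] at h
  have hterm : ∀ i j : Fin n, 0 ≤ (-(U i j)) * (x i - x j)^2 := by
    intro i j
    rcases eq_or_ne i j with rfl | hij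
    · simp
    · exact mul_nonneg (by linarith [hoff i j hij]) (sq_nonneg _)
  have hzero : ∀ i j : Fin n, (-(U i j)) * (x i - x j)^2 = 0 := by
    intro i j
    have h1 := (Finset.sum_eq_zero_iff_of_nonneg
      (fun i _ => Finset.sum_nonneg fun j _ => hterm i j)).mp h.symm i (Finset.mem_univ i)
    exact (Finset.sum_eq_zero_iff_of_nonneg (fun j _ => hterm i j)).mp h1 j (Finset.mem_univ j)
  have key : ∀ i j : Fin n, U i j ≠ 0 → x i = x j := by
    intro i j hU
    have := hzero i j
    have h2 : (x i - x j)^2 = 0 := by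
      rcases mul_eq_zero.mp this with h | h
      · exact absurd (by linarith : U i j = 0) hU
      · exact h
    have := pow_eq_zero_iff (n := 2) (by norm_num) |>.mp h2
    linarith
  intro i j
  by_contra hne
  set S : Finset (Fin n) := Finset.univ.filter (fun p => x p = x i) with hS
  have hiS : i ∈ S := by simp [hS]
  have hjS : j ∉ S := by simp [hS]; intro h'; exact hne h'.symm
  obtain ⟨p, hp, q, hq', hUpq⟩ := hirr S ⟨i, hiS⟩ (fun h => hjS (h ▸ Finset.mem_univ j))
  have hxp : x p = x i := by simpa [hS] using hp
  have : x q = x i := (key p q hUpq).symm.trans hxp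
  exact hq' (by simp [hS, this])

/-- Let `G 1, …, G r` be `n × n` real matrices with zero row sums
(`n ≥ 2`).  Then every `ξ ∈ Ξ` is at most `μ₂(Gₖ)` for every `k`, i.e. `ξ ≤ Re λ` for
every eigenvalue `λ` of `Gₖ` possessing an eigenvector not proportional to the all-ones
vector `e`; consequently, if `Ξ` is nonempty then `sup Ξ ≤ Re λ` for every such
eigenvalue, i.e. `ξ_M ≤ min_k μ₂(Gₖ)`. -/
theorem stmt14 {n r : ℕ} (hn : 2 ≤ n)
    (G : Fin r → Matrix (Fin n) (Fin n) ℝ)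
    (hGrow : ∀ k i, ∑ j, G k i j = 0) :
    (∀ ξ ∈ Xi G, ∀ k, ∀ lam : ℂ, ∀ v : Fin n → ℂ, v ≠ 0 →
        ((G k).map Complex.ofReal).mulVec v = lam • v →
        (¬∃ a : ℂ, v = a • (fun _ => (1 : ℂ))) → ξ ≤ lam.re) ∧
      ((Xi G).Nonempty → ∀ k, ∀ lam : ℂ, ∀ v : Fin n → ℂ, v ≠ 0 →
        ((G k).map Complex.ofReal).mulVec v = lam • v →
        (¬∃ a : ℂ, v = a • (fun _ => (1 : ℂ))) → sSup (Xi G) ≤ lam.re) := by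
  have main : ∀ ξ ∈ Xi G, ∀ k, ∀ lam : ℂ, ∀ v : Fin n → ℂ, v ≠ 0 →
      ((G k).map Complex.ofReal).mulVec v = lam • v →
      (¬∃ a : ℂ, v = a • (fun _ => (1 : ℂ))) → ξ ≤ lam.re := by
    intro ξ hξ k lam v hv heig hnp
    obtain ⟨U, ⟨hsym, hrow, hoff⟩, hirr, hpsd⟩ := hξ
    set a : Fin n → ℝ := fun i => (v i).re with ha'
    set b : Fin n → ℝ := fun i => (v i).im with hb'
    have heigc : ∀ i, ∑ j, (G k i j : ℂ) * v j = lam * v i := by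
      intro i
      have h := congrFun heig i
      simpa [Matrix.mulVec, dotProduct, Matrix.map_apply] using h
    have ha : ∀ i, (G k).mulVec a i = lam.re * a i - lam.im * b i := by
      intro i
      have h := congrArg Complex.re (heigc i)
      simpa [Matrix.mulVec, dotProduct, Complex.re_sum, Complex.mul_re, ha', hb'] using h
    have hb : ∀ i, (G k).mulVec b i = lam.im * a i + lam.re * b i := by
      intro i
      have h := congrArg Complex.im (heigc i)
      simp only [Matrix.mulVec, dotProduct, Complex.im_sum, Complex.mul_im, ha', hb',
        Complex.ofReal_re, Complex.ofReal_im, zero_mul, add_zero, mul_zero] at h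
      simp only [Matrix.mulVec, dotProduct, ha', hb']
      linarith [h]
    set Qa := a ⬝ᵥ U.mulVec a with hQa'
    set Qb := b ⬝ᵥ U.mulVec b with hQb'
    set Qab := a ⬝ᵥ U.mulVec b with hQab'
    set Qba := b ⬝ᵥ U.mulVec a with hQba'
    have h1 : (G k - ξ • (1 : Matrix (Fin n) (Fin n) ℝ)).mulVec a
        = (lam.re - ξ) • a - lam.im • b := by
      funext i
      simp only [Matrix.sub_mulVec, Matrix.smul_mulVec, Matrix.one_mulVec,
        Pi.sub_apply, Pi.smul_apply, smul_eq_mul, ha i]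
      ring
    have h2 : (G k - ξ • (1 : Matrix (Fin n) (Fin n) ℝ)).mulVec b
        = lam.im • a + (lam.re - ξ) • b := by
      funext i
      simp only [Matrix.sub_mulVec, Matrix.smul_mulVec, Matrix.one_mulVec,
        Pi.sub_apply, Pi.add_apply, Pi.smul_apply, smul_eq_mul, hb i]
      ring
    have hMa : a ⬝ᵥ (U * (G k - ξ • (1 : Matrix (Fin n) (Fin n) ℝ))).mulVec a
        = (lam.re - ξ) * Qa - lam.im * Qab := by
      rw [← Matrix.mulVec_mulVec, h1]
      simp [Matrix.mulVec_sub, Matrix.mulVec_smul, dotProduct_sub, dotProduct_smul,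
        smul_eq_mul, hQa', hQab']
    have hMb : b ⬝ᵥ (U * (G k - ξ • (1 : Matrix (Fin n) (Fin n) ℝ))).mulVec b
        = lam.im * Qba + (lam.re - ξ) * Qb := by
      rw [← Matrix.mulVec_mulVec, h2]
      simp [Matrix.mulVec_add, Matrix.mulVec_smul, dotProduct_add, dotProduct_smul,
        smul_eq_mul, hQb', hQba']
    have hsymdot : Qab = Qba := by
      rw [hQab', hQba']
      simp only [dotProduct, Matrix.mulVec, Finset.mul_sum]
      rw [Finset.sum_comm]
      refine Finset.sum_congr rfl fun i _ => Finset.sum_congr rfl fun j _ => ?_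
      rw [hsym.apply i j]
      ring
    have h0 : 0 ≤ (lam.re - ξ) * (Qa + Qb) := by
      have := add_nonneg (hpsd k a) (hpsd k b)
      rw [hMa, hMb] at this
      rw [hsymdot] at this
      have hma := mul_add (lam.re - ξ) Qa Qb
      linarith [this, hma]
    have hQann : 0 ≤ Qa := quad_nonneg U hsym hrow hoff a
    have hQbnn : 0 ≤ Qb := quad_nonneg U hsym hrow hoff b
    have hQpos : 0 < Qa + Qb := by
      rcases lt_or_eq_of_le (add_nonneg hQann hQbnn) with h | h
      · exact h
      · exfalso
        have hQa0 : Qa = 0 := by linarith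
        have hQb0 : Qb = 0 := by linarith
        have i₀ : Fin n := ⟨0, by omega⟩
        apply hnp
        refine ⟨v i₀, funext fun i => ?_⟩
        have h3 := const_of_quad_zero U hsym hrow hoff hirr a hQa0 i i₀
        have h4 := const_of_quad_zero U hsym hrow hoff hirr b hQb0 i i₀
        simp only [Pi.smul_apply, smul_eq_mul, mul_one]
        apply Complex.ext
        · exact h3
        · exact h4
    by_contra hcon
    push_neg at hcon
    have : (lam.re - ξ) * (Qa + Qb) < 0 :=
      mul_neg_of_neg_of_pos (by linarith) hQpos
    linarith
  exact ⟨main, fun hne k lam v hv heig hnp =>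
    csSup_le hne fun ξ hξ => main ξ hξ k lam v hv heig hnp⟩
end

section
/- Let G_1,…,G_r be n×n real normal matrices with zero row sums (n ≥ 2). Then ξ_M = sup Ξ exists and ξ_M = min_k min{ xᵀG_k x / xᵀx : x ∈ ℝⁿ, x ≠ 0, x ⊥ e } = min_k μ₂(G_k). -/
open Matrix

lemma quad_identity {n : ℕ} {U : Matrix (Fin n) (Fin n) ℝ} (hU : MemW U) (z : Fin n → ℝ) :
    ∑ i, ∑ j, (-U i j) * (z i - z j)^2 = 2 * (z ⬝ᵥ U.mulVec z) := by
  obtain ⟨hsymm, hrow, -⟩ := hU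
  have hUji : ∀ i j, U j i = U i j := fun i j => hsymm.apply i j
  have expand : ∀ i j, (-U i j) * (z i - z j)^2
      = 2 * (U i j * (z i * z j)) - U i j * z i^2 - U i j * z j^2 := by
    intros; ring
  simp only [expand, Finset.sum_sub_distrib, ← Finset.mul_sum]
  have h1 : ∑ i, ∑ j, U i j * z i ^ 2 = 0 := by
    refine Finset.sum_eq_zero fun i _ => ?_
    rw [← Finset.sum_mul, hrow i, zero_mul]
  have h2 : ∑ i, ∑ j, U i j * z j ^ 2 = 0 := by
    rw [Finset.sum_comm]
    refine Finset.sum_eq_zero fun j _ => ?_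
    have : ∑ i, U i j = 0 := by
      rw [show ∑ i, U i j = ∑ i, U j i from Finset.sum_congr rfl fun i _ => (hUji i j).symm]
      exact hrow j
    rw [← Finset.sum_mul, this, zero_mul]
  have h3 : ∑ i, ∑ j, U i j * (z i * z j) = z ⬝ᵥ U.mulVec z := by
    simp only [dotProduct, mulVec, Finset.mul_sum]
    refine Finset.sum_congr rfl fun i _ => Finset.sum_congr rfl fun j _ => by ring
  rw [h1, h2, h3]
  ring

lemma quad_nonneg' {n : ℕ} {U : Matrix (Fin n) (Fin n) ℝ} (hU : MemW U) (z : Fin n → ℝ) :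
    0 ≤ z ⬝ᵥ U.mulVec z := by
  have key := quad_identity hU z
  have hnn : 0 ≤ ∑ i, ∑ j, (-U i j) * (z i - z j)^2 := by
    refine Finset.sum_nonneg fun i _ => Finset.sum_nonneg fun j _ => ?_
    rcases eq_or_ne i j with rfl | hij
    · simp
    · exact mul_nonneg (by linarith [hU.2.2 i j hij]) (sq_nonneg _)
  linarith

lemma quad_zero_const {n : ℕ} {U : Matrix (Fin n) (Fin n) ℝ} (hU : MemW U)
    (hirr : IsIrreducibleMatrix U) {z : Fin n → ℝ} (hz : z ⬝ᵥ U.mulVec z = 0) (i j : Fin n) :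
    z i = z j := by
  have key := quad_identity hU z
  rw [hz] at key
  -- each term is zero
  have hterm : ∀ i j : Fin n, U i j ≠ 0 → z i = z j := by
    intro a b hab
    rcases eq_or_ne a b with rfl | hne
    · rfl
    have hnn : ∀ p ∈ Finset.univ (α := Fin n), 0 ≤ ∑ q, (-U p q) * (z p - z q)^2 := by
      intro p _
      refine Finset.sum_nonneg fun q _ => ?_
      rcases eq_or_ne p q with rfl | hpq
      · simp
      · exact mul_nonneg (by linarith [hU.2.2 p q hpq]) (sq_nonneg _)
    have h0 : ∑ q, (-U a q) * (z a - z q)^2 = 0 := by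
      have := (Finset.sum_eq_zero_iff_of_nonneg hnn).1 (by rw [key]; ring) a (Finset.mem_univ a)
      exact this
    have hnn2 : ∀ q ∈ Finset.univ (α := Fin n), 0 ≤ (-U a q) * (z a - z q)^2 := by
      intro q _
      rcases eq_or_ne a q with rfl | hpq
      · simp
      · exact mul_nonneg (by linarith [hU.2.2 a q hpq]) (sq_nonneg _)
    have := (Finset.sum_eq_zero_iff_of_nonneg hnn2).1 h0 b (Finset.mem_univ b)
    have hUab : -U a b ≠ 0 := neg_ne_zero.mpr hab
    have : (z a - z b)^2 = 0 := by
      rcases mul_eq_zero.1 this with h | h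
      · exact absurd h hUab
      · exact h
    have := pow_eq_zero_iff (n := 2) (by norm_num) |>.1 this
    linarith
  -- connectivity argument
  classical
  set S := Finset.univ.filter (fun j => z j = z i) with hS
  have hiS : i ∈ S := by simp [hS]
  have hSuniv : S = Finset.univ := by
    by_contra hne
    obtain ⟨a, haS, b, hbS, hab⟩ := hirr S ⟨i, hiS⟩ hne
    have hza : z a = z i := by simpa [hS] using haS
    have hzb : z b = z a := (hterm a b hab).symm
    exact hbS (by simp [hS, hzb, hza])
  have := hSuniv ▸ Finset.mem_univ j
  have hzj : z j = z i := by simpa [hS] using (hSuniv ▸ Finset.mem_univ j : j ∈ S)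
  exact hzj.symm

lemma mulVec_ones_eq_zero {n : ℕ} {M : Matrix (Fin n) (Fin n) ℝ}
    (hrow : ∀ i, ∑ j, M i j = 0) : M.mulVec (fun _ => (1:ℝ)) = 0 := by
  funext i
  simp [mulVec, dotProduct, hrow i]

lemma col_sums_zero {n : ℕ} {M : Matrix (Fin n) (Fin n) ℝ}
    (hrow : ∀ i, ∑ j, M i j = 0) (hnorm : M * Mᵀ = Mᵀ * M) (j : Fin n) :
    ∑ i, M i j = 0 := by
  set e : Fin n → ℝ := fun _ => 1 with he
  have hMe : M.mulVec e = 0 := mulVec_ones_eq_zero hrow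
  have hL : e ⬝ᵥ (M * Mᵀ).mulVec e = ∑ k, (∑ i, M i k)^2 := by
    simp only [dotProduct, mulVec, Matrix.mul_apply, transpose_apply, he, mul_one, one_mul]
    calc ∑ i, ∑ j, ∑ k, M i k * M j k
        = ∑ i, ∑ k, ∑ j, M i k * M j k := Finset.sum_congr rfl fun _ _ => Finset.sum_comm
      _ = ∑ k, ∑ i, ∑ j, M i k * M j k := Finset.sum_comm
      _ = ∑ k, (∑ i, M i k)^2 := Finset.sum_congr rfl fun k _ => by
            rw [sq, Finset.sum_mul_sum]
  have hR : e ⬝ᵥ (Mᵀ * M).mulVec e = 0 := by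
    rw [← mulVec_mulVec, hMe]
    simp
  have hzero : ∑ k, (∑ i, M i k)^2 = 0 := by rw [← hL, hnorm, hR]
  have := (Finset.sum_eq_zero_iff_of_nonneg (fun k _ => sq_nonneg (∑ i, M i k))).1 hzero j
    (Finset.mem_univ j)
  exact pow_eq_zero_iff (n := 2) (by norm_num) |>.1 this

lemma complex_eig_real {n : ℕ} (M : Matrix (Fin n) (Fin n) ℝ) (v : Fin n → ℂ) (lam : ℂ)
    (h : (M.map Complex.ofReal).mulVec v = lam • v) :
    M.mulVec (fun i => (v i).re) = lam.re • (fun i => (v i).re) - lam.im • (fun i => (v i).im)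
    ∧ M.mulVec (fun i => (v i).im) = lam.im • (fun i => (v i).re) + lam.re • (fun i => (v i).im)
    := by
  constructor
  · funext i
    have hi := congrFun h i
    have hre := congrArg Complex.re hi
    simpa [mulVec, dotProduct, Complex.re_sum, Complex.mul_re, Pi.smul_apply,
      Complex.smul_re] using hre
  · funext i
    have hi := congrFun h i
    have him := congrArg Complex.im hi
    simpa [mulVec, dotProduct, Complex.im_sum, Complex.mul_im, Pi.smul_apply,
      Complex.smul_im, add_comm] using him

lemma rayleigh_le_of_perp {n : ℕ} {M : Matrix (Fin n) (Fin n) ℝ} {μ : ℝ}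
    (hlb : ∀ x : Fin n → ℝ, x ≠ 0 → x ⬝ᵥ (fun _ => (1 : ℝ)) = 0 →
      μ ≤ (x ⬝ᵥ M.mulVec x) / (x ⬝ᵥ x))
    (x : Fin n → ℝ) (hperp : x ⬝ᵥ (fun _ => (1 : ℝ)) = 0) :
    μ * (x ⬝ᵥ x) ≤ x ⬝ᵥ M.mulVec x := by
  rcases eq_or_ne x 0 with rfl | hx
  · simp
  · have hpos : 0 < x ⬝ᵥ x := by
      have h1 : 0 ≤ x ⬝ᵥ x := Finset.sum_nonneg fun i _ => mul_self_nonneg _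
      rcases h1.lt_or_eq with h | h
      · exact h
      · exfalso; apply hx; funext i
        have := (Finset.sum_eq_zero_iff_of_nonneg
          (fun i _ => mul_self_nonneg (x i))).1 h.symm i (Finset.mem_univ i)
        exact mul_self_eq_zero.1 this
    have := hlb x hx hperp
    calc μ * (x ⬝ᵥ x) ≤ ((x ⬝ᵥ M.mulVec x) / (x ⬝ᵥ x)) * (x ⬝ᵥ x) := by
          exact mul_le_mul_of_nonneg_right this hpos.le
      _ = x ⬝ᵥ M.mulVec x := by field_simp

lemma mu_le_relam {n : ℕ} (hn : 0 < n) {M : Matrix (Fin n) (Fin n) ℝ}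
    (hrow : ∀ i, ∑ j, M i j = 0) (hnorm : M * Mᵀ = Mᵀ * M) {μ : ℝ}
    (hlb : ∀ x : Fin n → ℝ, x ≠ 0 → x ⬝ᵥ (fun _ => (1 : ℝ)) = 0 →
      μ ≤ (x ⬝ᵥ M.mulVec x) / (x ⬝ᵥ x))
    {lam : ℂ} {v : Fin n → ℂ} (hv : v ≠ 0)
    (heig : (M.map Complex.ofReal).mulVec v = lam • v)
    (hne : ¬∃ a : ℂ, v = a • (fun _ => (1 : ℂ))) :
    μ ≤ lam.re := by
  classical
  obtain ⟨hx0, hy0⟩ := complex_eig_real M v lam heig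
  set a := lam.re; set b := lam.im
  set x : Fin n → ℝ := fun i => (v i).re with hxdef
  set y : Fin n → ℝ := fun i => (v i).im with hydef
  set s := ∑ i, x i with hs
  set t := ∑ i, y i with ht
  have hcol : ∀ j, ∑ i, M i j = 0 := col_sums_zero hrow hnorm
  -- sum of M.mulVec z is zero
  have hsumM : ∀ z : Fin n → ℝ, ∑ i, (M.mulVec z) i = 0 := by
    intro z
    simp only [mulVec, dotProduct]
    rw [Finset.sum_comm]
    exact Finset.sum_eq_zero fun j _ => by rw [← Finset.sum_mul, hcol j, zero_mul]
  have hsum1 : a * s - b * t = 0 := by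
    have h := hsumM x
    rw [hx0] at h
    simp only [Pi.sub_apply, Pi.smul_apply, smul_eq_mul, Finset.sum_sub_distrib,
      ← Finset.mul_sum] at h
    exact h
  have hsum2 : b * s + a * t = 0 := by
    have h := hsumM y
    rw [hy0] at h
    simp only [Pi.add_apply, Pi.smul_apply, smul_eq_mul, Finset.sum_add_distrib,
      ← Finset.mul_sum] at h
    exact h
  set x' : Fin n → ℝ := fun i => n * x i - s with hx'
  set y' : Fin n → ℝ := fun i => n * y i - t with hy'
  have hnR : (0:ℝ) < n := by exact_mod_cast hn
  have hperpx : x' ⬝ᵥ (fun _ => (1:ℝ)) = 0 := by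
    simp [hx', dotProduct, Finset.sum_sub_distrib, ← Finset.mul_sum, ← hs]
  have hperpy : y' ⬝ᵥ (fun _ => (1:ℝ)) = 0 := by
    simp [hy', dotProduct, Finset.sum_sub_distrib, ← Finset.mul_sum, ← ht]
  have hMconst : ∀ c : ℝ, M.mulVec (fun _ => c) = 0 := by
    intro c; funext i; simp [mulVec, dotProduct, ← Finset.sum_mul, hrow i]
  have hmv : ∀ z : Fin n → ℝ, ∀ c : ℝ, M.mulVec (fun i => n * z i - c)
      = fun i => n * (M.mulVec z) i := by
    intro z c
    have : (fun i => n * z i - c) = (n:ℝ) • z - (fun _ => c) := by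
      funext i; simp [smul_eq_mul]
    rw [this, Matrix.mulVec_sub, Matrix.mulVec_smul, hMconst]
    funext i; simp [smul_eq_mul]
  have hMx' : M.mulVec x' = fun i => a * x' i - b * y' i := by
    rw [hx', hmv x s, hx0]
    funext i
    simp only [Pi.sub_apply, Pi.smul_apply, smul_eq_mul, hy']
    have h1 : a * s - b * t = 0 := hsum1
    ring_nf
    nlinarith [h1]
  have hMy' : M.mulVec y' = fun i => b * x' i + a * y' i := by
    rw [hy', hmv y t, hy0]
    funext i
    simp only [Pi.add_apply, Pi.smul_apply, smul_eq_mul, hx']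
    have h2 : b * s + a * t = 0 := hsum2
    ring_nf
    nlinarith [h2]
  have hquad : x' ⬝ᵥ M.mulVec x' + y' ⬝ᵥ M.mulVec y'
      = a * (x' ⬝ᵥ x' + y' ⬝ᵥ y') := by
    rw [hMx', hMy']
    simp only [dotProduct, ← Finset.sum_add_distrib, Finset.mul_sum]
    exact Finset.sum_congr rfl fun i _ => by ring
  have hx'nn : (0:ℝ) ≤ x' ⬝ᵥ x' := Finset.sum_nonneg fun i _ => mul_self_nonneg _
  have hy'nn : (0:ℝ) ≤ y' ⬝ᵥ y' := Finset.sum_nonneg fun i _ => mul_self_nonneg _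
  have hpos : 0 < x' ⬝ᵥ x' + y' ⬝ᵥ y' := by
    rcases (lt_or_eq_of_le (add_nonneg hx'nn hy'nn)).symm with h | h
    · exfalso
      have hx'0 : ∀ i, x' i = 0 := by
        intro i
        have hxx : x' ⬝ᵥ x' = 0 := le_antisymm (by linarith) hx'nn
        have := (Finset.sum_eq_zero_iff_of_nonneg
          (fun i _ => mul_self_nonneg (x' i))).1 hxx i (Finset.mem_univ i)
        exact mul_self_eq_zero.1 this
      have hy'0 : ∀ i, y' i = 0 := by
        intro i
        have hyy : y' ⬝ᵥ y' = 0 := le_antisymm (by linarith) hy'nn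
        have := (Finset.sum_eq_zero_iff_of_nonneg
          (fun i _ => mul_self_nonneg (y' i))).1 hyy i (Finset.mem_univ i)
        exact mul_self_eq_zero.1 this
      apply hne
      refine ⟨Complex.ofReal (s/n) + Complex.ofReal (t/n) * Complex.I, funext fun i => ?_⟩
      have hxi : x i = s / n := by
        have := hx'0 i
        simp only [hx'] at this
        field_simp
        linarith
      have hyi : y i = t / n := by
        have := hy'0 i
        simp only [hy'] at this
        field_simp
        linarith
      apply Complex.ext
      · simpa [Complex.add_re, Complex.mul_re] using hxi
      · simpa [Complex.add_im, Complex.mul_im] using hyi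
    · exact h
  have hb1 : μ * (x' ⬝ᵥ x') ≤ x' ⬝ᵥ M.mulVec x' := rayleigh_le_of_perp hlb x' hperpx
  have hb2 : μ * (y' ⬝ᵥ y') ≤ y' ⬝ᵥ M.mulVec y' := rayleigh_le_of_perp hlb y' hperpy
  have : μ * (x' ⬝ᵥ x' + y' ⬝ᵥ y') ≤ a * (x' ⬝ᵥ x' + y' ⬝ᵥ y') := by
    rw [← hquad]; linarith
  exact le_of_mul_le_mul_right (by linarith [this]) hpos

lemma dot_symm {n : ℕ} {U : Matrix (Fin n) (Fin n) ℝ} (hsymm : U.IsSymm)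
    (x y : Fin n → ℝ) : x ⬝ᵥ U.mulVec y = y ⬝ᵥ U.mulVec x := by
  simp only [dotProduct, mulVec, Finset.mul_sum]
  rw [Finset.sum_comm]
  exact Finset.sum_congr rfl fun p _ => Finset.sum_congr rfl fun q _ => by
    rw [hsymm.apply q p]; ring

lemma xi_le_relam {n : ℕ} {U M : Matrix (Fin n) (Fin n) ℝ} {ξ : ℝ}
    (hU : MemW U) (hirr : IsIrreducibleMatrix U)
    (hpsd : ∀ x : Fin n → ℝ, 0 ≤ x ⬝ᵥ (U * (M - ξ • (1 : Matrix (Fin n) (Fin n) ℝ))).mulVec x)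
    {lam : ℂ} {v : Fin n → ℂ} (hv : v ≠ 0)
    (heig : (M.map Complex.ofReal).mulVec v = lam • v)
    (hne : ¬∃ a : ℂ, v = a • (fun _ => (1 : ℂ))) :
    ξ ≤ lam.re := by
  classical
  obtain ⟨hx0, hy0⟩ := complex_eig_real M v lam heig
  set a := lam.re; set b := lam.im
  set x : Fin n → ℝ := fun i => (v i).re with hxdef
  set y : Fin n → ℝ := fun i => (v i).im with hydef
  have hnonempty : Nonempty (Fin n) :=
    not_isEmpty_iff.1 (fun h => hv (funext fun i => (h.false i).elim))
  obtain ⟨i₀⟩ := hnonempty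
  set A := x ⬝ᵥ U.mulVec x + y ⬝ᵥ U.mulVec y with hA
  have hApos : 0 < A := by
    have h1 := quad_nonneg' hU x
    have h2 := quad_nonneg' hU y
    rcases (lt_or_eq_of_le (add_nonneg h1 h2)).symm with h | h
    · exfalso
      apply hne
      have hxz : x ⬝ᵥ U.mulVec x = 0 := le_antisymm (by linarith) h1
      have hyz : y ⬝ᵥ U.mulVec y = 0 := le_antisymm (by linarith) h2
      refine ⟨v i₀, funext fun i => ?_⟩
      have hx_const := quad_zero_const hU hirr hxz i i₀
      have hy_const := quad_zero_const hU hirr hyz i i₀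
      apply Complex.ext
      · simpa using hx_const
      · simpa using hy_const
    · exact h
  -- evaluate the quadratic forms at x and y
  have hMmulx : (M - ξ • (1 : Matrix (Fin n) (Fin n) ℝ)).mulVec x
      = (a - ξ) • x - b • y := by
    rw [Matrix.sub_mulVec, hx0, Matrix.smul_mulVec, Matrix.one_mulVec]
    funext i; simp [smul_eq_mul]; ring
  have hMmuly : (M - ξ • (1 : Matrix (Fin n) (Fin n) ℝ)).mulVec y
      = b • x + (a - ξ) • y := by
    rw [Matrix.sub_mulVec, hy0, Matrix.smul_mulVec, Matrix.one_mulVec]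
    funext i; simp [smul_eq_mul]; ring
  have hqx := hpsd x
  have hqy := hpsd y
  rw [← Matrix.mulVec_mulVec, hMmulx] at hqx
  rw [← Matrix.mulVec_mulVec, hMmuly] at hqy
  rw [Matrix.mulVec_sub, Matrix.mulVec_smul, Matrix.mulVec_smul] at hqx
  rw [Matrix.mulVec_add, Matrix.mulVec_smul, Matrix.mulVec_smul] at hqy
  rw [dotProduct_sub, dotProduct_smul, dotProduct_smul] at hqx
  rw [dotProduct_add, dotProduct_smul, dotProduct_smul] at hqy
  have hcross : x ⬝ᵥ U.mulVec y = y ⬝ᵥ U.mulVec x := dot_symm hU.1 x y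
  have hsum : 0 ≤ (a - ξ) * A := by
    simp only [smul_eq_mul] at hqx hqy
    rw [hcross] at hqx
    have h3 : 0 ≤ (a - ξ) * (x ⬝ᵥ U.mulVec x) + (a - ξ) * (y ⬝ᵥ U.mulVec y) := by
      linarith
    rw [hA, mul_add]
    exact h3
  by_contra hlt
  push_neg at hlt
  have : (a - ξ) * A < 0 := mul_neg_of_neg_of_pos (by linarith) hApos
  linarith

lemma scaled_proj_lemma {n : ℕ} {M : Matrix (Fin n) (Fin n) ℝ}
    (hrow : ∀ i, ∑ j, M i j = 0) (z : Fin n → ℝ) (c : ℝ) :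
    M.mulVec (fun i => (n:ℝ) * z i - c) = fun i => (n:ℝ) * (M.mulVec z) i := by
  have hMconst : M.mulVec (fun _ => c) = 0 := by
    funext i; simp [mulVec, dotProduct, ← Finset.sum_mul, hrow i]
  have : (fun i => (n:ℝ) * z i - c) = (n:ℝ) • z - (fun _ => c) := by
    funext i; simp [smul_eq_mul]
  rw [this, Matrix.mulVec_sub, Matrix.mulVec_smul, hMconst]
  funext i; simp [smul_eq_mul]

lemma good_U_exists {n r : ℕ} (hn : 2 ≤ n) (G : Fin r → Matrix (Fin n) (Fin n) ℝ)
    (hGrow : ∀ k i, ∑ j, G k i j = 0) (μ : ℝ)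
    (hμ_lb : ∀ k, ∀ x : Fin n → ℝ, x ≠ 0 → x ⬝ᵥ (fun _ => (1 : ℝ)) = 0 →
      μ ≤ (x ⬝ᵥ (G k).mulVec x) / (x ⬝ᵥ x)) :
    ∃ U : Matrix (Fin n) (Fin n) ℝ, MemW U ∧ IsIrreducibleMatrix U ∧
      ∀ k, ∀ x : Fin n → ℝ,
        0 ≤ x ⬝ᵥ (U * (G k - μ • (1 : Matrix (Fin n) (Fin n) ℝ))).mulVec x := by
  classical
  set U : Matrix (Fin n) (Fin n) ℝ :=
    Matrix.of (fun i j => (if i = j then (n:ℝ) else 0) - 1) with hUdef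
  have hUapp : ∀ i j, U i j = (if i = j then (n:ℝ) else 0) - 1 := fun i j => rfl
  have hnR : (0:ℝ) < n := by
    have : 0 < n := lt_of_lt_of_le (by norm_num) hn
    exact_mod_cast this
  have hmemW : MemW U := by
    refine ⟨?_, ?_, ?_⟩
    · ext i j
      simp only [Matrix.transpose_apply, hUapp]
      by_cases h : i = j
      · subst h; simp
      · simp [h, Ne.symm h]
    · intro i
      simp only [hUapp, Finset.sum_sub_distrib, Finset.sum_ite_eq, Finset.mem_univ,
        if_true, Finset.sum_const, Finset.card_univ, Fintype.card_fin, nsmul_eq_mul, mul_one]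
      ring
    · intro i j hij
      simp [hUapp, hij]
  have hirr : IsIrreducibleMatrix U := by
    intro S hSne hSuniv
    obtain ⟨i, hiS⟩ := hSne
    have : ∃ j, j ∉ S := by
      by_contra h
      push_neg at h
      exact hSuniv (Finset.eq_univ_iff_forall.2 h)
    obtain ⟨j, hjS⟩ := this
    refine ⟨i, hiS, j, hjS, ?_⟩
    have hij : i ≠ j := fun h => hjS (h ▸ hiS)
    simp [hUapp, hij]
  refine ⟨U, hmemW, hirr, fun k x => ?_⟩
  set s := ∑ i, x i with hs
  set y : Fin n → ℝ := fun i => (n:ℝ) * x i - s with hy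
  have hUx : U.mulVec x = y := by
    funext i
    simp only [mulVec, dotProduct, hUapp, sub_mul, Finset.sum_sub_distrib, one_mul, hy]
    congr 1
    rw [Finset.sum_congr rfl (fun j _ => by
      rw [show (if i = j then (n:ℝ) else 0) * x j = if i = j then (n:ℝ) * x j else 0 from by
        split <;> simp])]
    simp [Finset.sum_ite_eq, hs]
  have hsumy : ∑ i, y i = 0 := by
    simp [hy, Finset.sum_sub_distrib, ← Finset.mul_sum, ← hs]
  have hperp : y ⬝ᵥ (fun _ => (1:ℝ)) = 0 := by
    simpa [dotProduct] using hsumy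
  set z := (G k - μ • (1 : Matrix (Fin n) (Fin n) ℝ)).mulVec x with hz
  have hgoal : x ⬝ᵥ (U * (G k - μ • (1 : Matrix (Fin n) (Fin n) ℝ))).mulVec x = z ⬝ᵥ y := by
    rw [← Matrix.mulVec_mulVec, ← hz, dot_symm hmemW.1 x z, hUx]
  rw [hgoal]
  have hzval : z = (G k).mulVec x - μ • x := by
    rw [hz, Matrix.sub_mulVec, Matrix.smul_mulVec, Matrix.one_mulVec]
  have hGy : (G k).mulVec y = fun i => (n:ℝ) * ((G k).mulVec x) i :=
    scaled_proj_lemma (hGrow k) x s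
  have hyx : (n:ℝ) * (y ⬝ᵥ x) = y ⬝ᵥ y := by
    calc (n:ℝ) * (y ⬝ᵥ x) = ∑ i, ((n:ℝ) * (y i * x i)) := by
          simp [dotProduct, Finset.mul_sum]
      _ = ∑ i, (y i * y i + s * y i) := Finset.sum_congr rfl fun i _ => by
          simp only [hy]; ring
      _ = y ⬝ᵥ y + s * ∑ i, y i := by
          rw [Finset.sum_add_distrib, ← Finset.mul_sum]; rfl
      _ = y ⬝ᵥ y := by rw [hsumy, mul_zero, add_zero]
  have hyGx : y ⬝ᵥ (G k).mulVec y = (n:ℝ) * (y ⬝ᵥ (G k).mulVec x) := by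
    rw [hGy]
    simp only [dotProduct, Finset.mul_sum]
    exact Finset.sum_congr rfl fun i _ => by ring
  have hyz : y ⬝ᵥ z = y ⬝ᵥ (G k).mulVec x - μ * (y ⬝ᵥ x) := by
    rw [hzval, dotProduct_sub]
    simp [dotProduct, Finset.mul_sum, Finset.sum_sub_distrib]
    exact Finset.sum_congr rfl fun i _ => by ring
  have hray : μ * (y ⬝ᵥ y) ≤ y ⬝ᵥ (G k).mulVec y := rayleigh_le_of_perp (hμ_lb k) y hperp
  have hkey : (n:ℝ) * (y ⬝ᵥ z) = y ⬝ᵥ (G k).mulVec y - μ * (y ⬝ᵥ y) := by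
    rw [hyz, hyGx, ← hyx]; ring
  have hnn : 0 ≤ (n:ℝ) * (y ⬝ᵥ z) := by rw [hkey]; linarith
  rw [dotProduct_comm]
  by_contra h
  push_neg at h
  have : (n:ℝ) * (y ⬝ᵥ z) < 0 := mul_neg_of_pos_of_neg hnR h
  linarith

open scoped RealInnerProductSpace

lemma quad_transpose {n : ℕ} (M : Matrix (Fin n) (Fin n) ℝ) (z : Fin n → ℝ) :
    z ⬝ᵥ Mᵀ.mulVec z = z ⬝ᵥ M.mulVec z := by
  simp only [dotProduct, mulVec, transpose_apply, Finset.mul_sum]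
  rw [Finset.sum_comm]
  exact Finset.sum_congr rfl fun p _ => Finset.sum_congr rfl fun q _ => by ring

lemma map_mulVec_coe {n : ℕ} (M : Matrix (Fin n) (Fin n) ℝ) (w : Fin n → ℝ) :
    (M.map Complex.ofReal).mulVec (fun i => (w i : ℂ)) = fun i => ((M.mulVec w i : ℝ) : ℂ) := by
  funext i
  simp only [mulVec, dotProduct, Matrix.map_apply]
  push_cast
  rfl

noncomputable def sumLin (n : ℕ) : (Fin n → ℂ) →ₗ[ℂ] ℂ where
  toFun v := ∑ i, v i
  map_add' u v := by simp [Finset.sum_add_distrib]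
  map_smul' c v := by simp [Finset.mul_sum]

set_option maxHeartbeats 1000000 in
lemma nu_le_mu {n : ℕ} (hn : 2 ≤ n) {M : Matrix (Fin n) (Fin n) ℝ}
    (hrow : ∀ i, ∑ j, M i j = 0) (hnorm : M * Mᵀ = Mᵀ * M)
    {μ ν : ℝ}
    (hlb : ∀ lam : ℂ, ∀ v : Fin n → ℂ, v ≠ 0 →
      ((M).map Complex.ofReal).mulVec v = lam • v →
      (¬∃ a : ℂ, v = a • (fun _ => (1 : ℂ))) → ν ≤ lam.re)
    {x : Fin n → ℝ} (hx : x ≠ 0) (hperp : x ⬝ᵥ (fun _ => (1 : ℝ)) = 0)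
    (hmu : (x ⬝ᵥ M.mulVec x) / (x ⬝ᵥ x) = μ) :
    ν ≤ μ := by
  classical
  have hcol : ∀ j, ∑ i, M i j = 0 := col_sums_zero hrow hnorm
  set S : Matrix (Fin n) (Fin n) ℝ := (1/2 : ℝ) • (M + Mᵀ) with hSdef
  have hSsymm : S.IsSymm := by
    unfold Matrix.IsSymm
    rw [hSdef, Matrix.transpose_smul, Matrix.transpose_add, Matrix.transpose_transpose,
      add_comm (Mᵀ) M]
  have hS : S.IsHermitian := by
    rw [Matrix.IsHermitian, Matrix.conjTranspose]
    ext i j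
    simp only [Matrix.map_apply, Matrix.transpose_apply, star_trivial]
    exact hSsymm.apply i j
  have hSrow : ∀ i, ∑ j, S i j = 0 := by
    intro i
    simp only [hSdef, Matrix.smul_apply, Matrix.add_apply, Matrix.transpose_apply,
      smul_eq_mul, Finset.sum_add_distrib, ← Finset.mul_sum, hrow i, hcol i]
    ring
  have hquadS : ∀ z : Fin n → ℝ, z ⬝ᵥ S.mulVec z = z ⬝ᵥ M.mulVec z := by
    intro z
    rw [hSdef, Matrix.smul_mulVec, dotProduct_smul, Matrix.add_mulVec,
      dotProduct_add, quad_transpose]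
    simp [smul_eq_mul]; ring
  have hxx_pos : 0 < x ⬝ᵥ x := by
    have h1 : 0 ≤ x ⬝ᵥ x := Finset.sum_nonneg fun i _ => mul_self_nonneg _
    rcases h1.lt_or_eq with h | h
    · exact h
    · exfalso; apply hx; funext i
      have := (Finset.sum_eq_zero_iff_of_nonneg
        (fun i _ => mul_self_nonneg (x i))).1 h.symm i (Finset.mem_univ i)
      exact mul_self_eq_zero.1 this
  have hxMx : x ⬝ᵥ M.mulVec x = μ * (x ⬝ᵥ x) := by
    rw [← hmu]; field_simp
  set b := hS.eigenvectorBasis with hb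
  set t := hS.eigenvalues with ht
  have hSb : ∀ i, S.mulVec ⇑(b i) = t i • ⇑(b i) := fun i => hS.mulVec_eigenvectorBasis i
  set X : EuclideanSpace ℝ (Fin n) := WithLp.toLp 2 x with hX
  have hinner : ∀ u w : EuclideanSpace ℝ (Fin n), ⟪u, w⟫ = (u : Fin n → ℝ) ⬝ᵥ (w : Fin n → ℝ) := by
    intro u w
    simp [PiLp.inner_apply, RCLike.inner_apply, dotProduct, mul_comm]
  set c : Fin n → ℝ := fun i => (x ⬝ᵥ ⇑(b i)) with hc
  have hpar1 : ∑ i, c i * c i = x ⬝ᵥ x := by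
    have hp := b.sum_inner_mul_inner X X
    have key : ∀ i : Fin n, ⟪X, b i⟫ * ⟪b i, X⟫ = c i * c i := by
      intro i
      have e1 : ⟪X, b i⟫ = c i := hinner X (b i)
      have e2 : ⟪b i, X⟫ = c i := by rw [real_inner_comm]; exact e1
      rw [e1, e2]
    have hXX : ⟪X, X⟫ = x ⬝ᵥ x := hinner X X
    rw [← hXX, ← hp]
    exact Finset.sum_congr rfl fun i _ => (key i).symm
  have hpar2 : ∑ i, c i * (t i * c i) = x ⬝ᵥ M.mulVec x := by
    set Y : EuclideanSpace ℝ (Fin n) := WithLp.toLp 2 (S.mulVec x) with hY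
    have hp := b.sum_inner_mul_inner X Y
    have hXY : ⟪X, Y⟫ = x ⬝ᵥ M.mulVec x := by
      have e0 : ⟪X, Y⟫ = x ⬝ᵥ S.mulVec x := hinner X Y
      rw [e0, hquadS x]
    have key : ∀ i : Fin n, ⟪X, b i⟫ * ⟪b i, Y⟫ = c i * (t i * c i) := by
      intro i
      have e1 : ⟪X, b i⟫ = c i := hinner X (b i)
      have e2 : ⟪b i, Y⟫ = t i * c i := by
        have f1 : ⟪b i, Y⟫ = (⇑(b i) : Fin n → ℝ) ⬝ᵥ S.mulVec x := hinner (b i) Y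
        have f2 : (⇑(b i) : Fin n → ℝ) ⬝ᵥ S.mulVec x = x ⬝ᵥ S.mulVec (⇑(b i)) :=
          dot_symm hSsymm _ x
        have f3 : x ⬝ᵥ S.mulVec (⇑(b i)) = x ⬝ᵥ (t i • (⇑(b i) : Fin n → ℝ)) := by
          have := hSb i
          rw [show S.mulVec (⇑(b i)) = t i • (⇑(b i) : Fin n → ℝ) from this]
        have f4 : x ⬝ᵥ (t i • (⇑(b i) : Fin n → ℝ)) = t i * (x ⬝ᵥ ⇑(b i)) := by
          simp only [dotProduct, Pi.smul_apply, smul_eq_mul, Finset.mul_sum]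
          exact Finset.sum_congr rfl fun j _ => by ring
        rw [f1, f2, f3, f4]
      rw [e1, e2]
    rw [← hXY, ← hp]
    exact Finset.sum_congr rfl fun i _ => (key i).symm
  have hexists : ∃ i, c i ≠ 0 ∧ t i ≤ μ := by
    by_contra h
    push_neg at h
    have hex : ∃ i₀, c i₀ ≠ 0 := by
      by_contra hall; push_neg at hall
      have : x ⬝ᵥ x = 0 := by
        rw [← hpar1]; exact Finset.sum_eq_zero fun i _ => by rw [hall i]; ring
      linarith
    obtain ⟨i₀, hi₀⟩ := hex
    have hlt : ∑ i, μ * (c i * c i) < ∑ i, c i * (t i * c i) := by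
      apply Finset.sum_lt_sum
      · intro i _
        rcases eq_or_ne (c i) 0 with h0 | h0
        · simp [h0]
        · have := h i h0
          nlinarith [mul_self_pos.2 h0]
      · exact ⟨i₀, Finset.mem_univ i₀, by
          have := h i₀ hi₀
          nlinarith [mul_self_pos.2 hi₀]⟩
    rw [hpar2, hxMx, ← Finset.mul_sum, hpar1] at hlt
    linarith
  obtain ⟨i, hci, hti⟩ := hexists
  have hnR : (0:ℝ) < n := by
    have : 0 < n := lt_of_lt_of_le (by norm_num) hn
    exact_mod_cast this
  set u : Fin n → ℝ := ⇑(b i) with hu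
  have hSu : S.mulVec u = t i • u := hSb i
  set su := ∑ j, u j with hsu
  set w : Fin n → ℝ := fun j => (n:ℝ) * u j - su with hw
  have hsumw : ∑ j, w j = 0 := by
    simp [hw, Finset.sum_sub_distrib, ← Finset.mul_sum, ← hsu]
  have hScol : ∀ j, ∑ p, S p j = 0 := by
    intro j
    calc ∑ p, S p j = ∑ p, S j p := Finset.sum_congr rfl fun p _ => hSsymm.apply j p
      _ = 0 := hSrow j
  have hSw : S.mulVec w = t i • w := by
    have h1 : S.mulVec w = fun j => (n:ℝ) * (S.mulVec u) j := scaled_proj_lemma hSrow u su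
    rcases eq_or_ne (t i) 0 with h0 | h0
    · rw [h1, hSu, h0]; funext j; simp
    · have hsum_Su : ∑ j, (S.mulVec u) j = 0 := by
        simp only [mulVec, dotProduct]
        rw [Finset.sum_comm]
        exact Finset.sum_eq_zero fun q _ => by rw [← Finset.sum_mul, hScol q, zero_mul]
      have htisu : t i * su = 0 := by
        rw [hSu] at hsum_Su
        simpa [Pi.smul_apply, smul_eq_mul, ← Finset.mul_sum, ← hsu] using hsum_Su
      have hsu0 : su = 0 := by
        rcases mul_eq_zero.1 htisu with h | h
        · exact absurd h h0
        · exact h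
      rw [h1, hSu]
      funext j
      simp only [hw, Pi.smul_apply, smul_eq_mul, hsu0]
      ring
  have hsumx : ∑ j, x j = 0 := by simpa [dotProduct] using hperp
  have hw0 : w ≠ 0 := by
    intro h
    apply hci
    have hcon : ∀ j, u j = su / n := by
      intro j
      have := congrFun h j
      simp only [hw, Pi.zero_apply] at this
      field_simp
      linear_combination this
    have : c i = ∑ j, x j * (su / n) := Finset.sum_congr rfl fun j _ => by
      show x j * u j = x j * (su / ↑n)
      rw [hcon j]
    rw [this, ← Finset.sum_mul, hsumx, zero_mul]
  -- complex stage
  set Mc := M.map Complex.ofReal with hMc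
  set Sc := S.map Complex.ofReal with hSc
  have hcommMS : M * S = S * M := by
    rw [hSdef, Matrix.mul_smul, Matrix.smul_mul, mul_add, add_mul, hnorm]
  have map_mul_coe : ∀ A B : Matrix (Fin n) (Fin n) ℝ,
      (A * B).map Complex.ofReal = A.map Complex.ofReal * B.map Complex.ofReal := by
    intro A B
    ext p q
    simp only [Matrix.map_apply, Matrix.mul_apply]
    push_cast
    rfl
  have hcommC : Mc * Sc = Sc * Mc := by
    rw [hMc, hSc, ← map_mul_coe, ← map_mul_coe, hcommMS]
  have hcolC : ∀ j, ∑ p, Mc p j = 0 := by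
    intro j
    rw [hMc]
    simp only [Matrix.map_apply]
    rw [show ∑ p, ((M p j : ℝ) : ℂ) = ((∑ p, M p j : ℝ) : ℂ) from by push_cast; rfl, hcol j]
    simp
  set wc : Fin n → ℂ := fun j => (w j : ℂ) with hwc
  have hScwc : Sc.mulVec wc = ((t i : ℝ) : ℂ) • wc := by
    rw [hSc, hwc, map_mulVec_coe S w, hSw]
    funext j
    simp only [Pi.smul_apply, smul_eq_mul]
    push_cast
    ring
  set eigL : (Fin n → ℂ) →ₗ[ℂ] (Fin n → ℂ) :=
    Sc.mulVecLin - ((t i : ℝ) : ℂ) • LinearMap.id with heigL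
  set W : Submodule ℂ (Fin n → ℂ) := LinearMap.ker eigL ⊓ LinearMap.ker (sumLin n) with hW
  have hwcW : wc ∈ W := by
    refine Submodule.mem_inf.2 ⟨?_, ?_⟩
    · rw [LinearMap.mem_ker, heigL]
      simp only [LinearMap.sub_apply, LinearMap.smul_apply, LinearMap.id_apply,
        Matrix.mulVecLin_apply]
      rw [hScwc]
      simp
    · rw [LinearMap.mem_ker]
      show ∑ j, wc j = 0
      rw [hwc]
      rw [show ∑ j, ((w j : ℝ) : ℂ) = ((∑ j, w j : ℝ) : ℂ) from by push_cast; rfl, hsumw]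
      simp
  have hwcne : wc ≠ 0 := by
    intro h
    apply hw0
    funext j
    have := congrFun h j
    simpa [hwc] using this
  have hWnt : Nontrivial W := Submodule.nontrivial_iff_ne_bot.2 (by
    intro hbot
    rw [hbot] at hwcW
    exact hwcne (Submodule.mem_bot ℂ |>.1 hwcW))
  have hinv : ∀ v ∈ W, Mc.mulVecLin v ∈ W := by
    intro v hv
    obtain ⟨hv1, hv2⟩ := Submodule.mem_inf.1 hv
    rw [LinearMap.mem_ker, heigL] at hv1
    simp only [LinearMap.sub_apply, LinearMap.smul_apply, LinearMap.id_apply,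
      Matrix.mulVecLin_apply] at hv1
    have hv1' : Sc.mulVec v = ((t i : ℝ) : ℂ) • v := by
      have := sub_eq_zero.1 hv1
      simpa using this
    refine Submodule.mem_inf.2 ⟨?_, ?_⟩
    · rw [LinearMap.mem_ker, heigL]
      simp only [LinearMap.sub_apply, LinearMap.smul_apply, LinearMap.id_apply,
        Matrix.mulVecLin_apply]
      rw [Matrix.mulVec_mulVec, ← hcommC, ← Matrix.mulVec_mulVec, hv1',
        Matrix.mulVec_smul]
      simp
    · rw [LinearMap.mem_ker]
      show ∑ j, (Mc.mulVec v) j = 0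
      simp only [mulVec, dotProduct]
      rw [Finset.sum_comm]
      have hv2' : ∑ j, v j = 0 := hv2
      exact Finset.sum_eq_zero fun q _ => by rw [← Finset.sum_mul, hcolC q, zero_mul]
  set f : Module.End ℂ W := Mc.mulVecLin.restrict hinv with hf
  obtain ⟨lam, hlam⟩ := Module.End.exists_eigenvalue f
  obtain ⟨v₀, hv₀⟩ := hlam.exists_hasEigenvector
  set v : Fin n → ℂ := (v₀ : Fin n → ℂ) with hv
  have hvne : v ≠ 0 := by
    intro h
    exact hv₀.2 (Subtype.ext h)
  have heig : Mc.mulVec v = lam • v := by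
    have h1 := hv₀.apply_eq_smul
    have h2 := congrArg (Subtype.val) h1
    rw [hf, LinearMap.restrict_coe_apply] at h2
    rw [show ((Mc.mulVecLin) (v₀ : Fin n → ℂ)) = Mc.mulVec v from rfl] at h2
    rw [h2]
    rfl
  obtain ⟨hv1, hv2⟩ := Submodule.mem_inf.1 v₀.2
  rw [LinearMap.mem_ker, heigL] at hv1
  simp only [LinearMap.sub_apply, LinearMap.smul_apply, LinearMap.id_apply,
    Matrix.mulVecLin_apply] at hv1
  have hScv : Sc.mulVec v = ((t i : ℝ) : ℂ) • v := by
    have := sub_eq_zero.1 hv1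
    simpa using this
  have hsumv : ∑ j, v j = 0 := hv2
  have hnotprop : ¬∃ a : ℂ, v = a • (fun _ => (1 : ℂ)) := by
    rintro ⟨a, ha⟩
    apply hvne
    have : ∑ j, v j = (n : ℂ) * a := by
      rw [ha]
      simp [Finset.sum_const, Finset.card_univ, mul_comm]
    rw [hsumv] at this
    have hnC : (n : ℂ) ≠ 0 := by
      simp only [ne_eq, Nat.cast_eq_zero]
      omega
    have ha0 : a = 0 := (mul_eq_zero.1 this.symm).resolve_left hnC
    rw [ha, ha0]
    funext j; simp
  -- lam.re = t i
  obtain ⟨hmx, hmy⟩ := complex_eig_real M v lam heig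
  obtain ⟨hsx, hsy⟩ := complex_eig_real S v ((t i : ℝ) : ℂ) hScv
  set x1 : Fin n → ℝ := fun j => (v j).re with hx1
  set y1 : Fin n → ℝ := fun j => (v j).im with hy1
  simp only [Complex.ofReal_re, Complex.ofReal_im, zero_smul, sub_zero, zero_add] at hsx hsy
  have hT : 0 < x1 ⬝ᵥ x1 + y1 ⬝ᵥ y1 := by
    have h1 : 0 ≤ x1 ⬝ᵥ x1 := Finset.sum_nonneg fun j _ => mul_self_nonneg _
    have h2 : 0 ≤ y1 ⬝ᵥ y1 := Finset.sum_nonneg fun j _ => mul_self_nonneg _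
    rcases (lt_or_eq_of_le (add_nonneg h1 h2)).symm with h | h
    · exfalso
      apply hvne
      have hxz : x1 ⬝ᵥ x1 = 0 := le_antisymm (by linarith) h1
      have hyz : y1 ⬝ᵥ y1 = 0 := le_antisymm (by linarith) h2
      funext j
      have hx0 : x1 j = 0 := mul_self_eq_zero.1 ((Finset.sum_eq_zero_iff_of_nonneg
        (fun p _ => mul_self_nonneg (x1 p))).1 hxz j (Finset.mem_univ j))
      have hy0 : y1 j = 0 := mul_self_eq_zero.1 ((Finset.sum_eq_zero_iff_of_nonneg
        (fun p _ => mul_self_nonneg (y1 p))).1 hyz j (Finset.mem_univ j))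
      apply Complex.ext
      · simpa using hx0
      · simpa using hy0
    · exact h
  have hq1 : x1 ⬝ᵥ S.mulVec x1 = t i * (x1 ⬝ᵥ x1) := by
    rw [hsx, dotProduct_smul]; rfl
  have hq2 : y1 ⬝ᵥ S.mulVec y1 = t i * (y1 ⬝ᵥ y1) := by
    rw [hsy, dotProduct_smul]; rfl
  have hq3 : x1 ⬝ᵥ M.mulVec x1 = lam.re * (x1 ⬝ᵥ x1) - lam.im * (x1 ⬝ᵥ y1) := by
    rw [hmx, dotProduct_sub, dotProduct_smul, dotProduct_smul]; rfl
  have hq4 : y1 ⬝ᵥ M.mulVec y1 = lam.im * (y1 ⬝ᵥ x1) + lam.re * (y1 ⬝ᵥ y1) := by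
    rw [hmy, dotProduct_add, dotProduct_smul, dotProduct_smul]; rfl
  have hcomm_dot : x1 ⬝ᵥ y1 = y1 ⬝ᵥ x1 := dotProduct_comm x1 y1
  have hqs1 := hquadS x1
  have hqs2 := hquadS y1
  have hre : lam.re = t i := by
    have hsum : t i * (x1 ⬝ᵥ x1 + y1 ⬝ᵥ y1) = lam.re * (x1 ⬝ᵥ x1 + y1 ⬝ᵥ y1) := by
      rw [hcomm_dot] at hq3
      linarith [hq1, hq2, hq3, hq4, hqs1, hqs2]
    have := mul_right_cancel₀ (ne_of_gt hT) hsum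
    exact this.symm
  have := hlb lam v hvne heig hnotprop
  rw [hre] at this
  linarith

/-- Let `G 1, …, G r` be `n × n` real normal matrices with zero row
sums (`n ≥ 2`).  Let `μ = min_k min { xᵀGₖx / xᵀx : x ≠ 0, x ⊥ e }` and let `ν = min_k
μ₂(Gₖ)` (the minimum of `Re λ` over eigenvalues `λ` of `Gₖ` having an eigenvector not
proportional to `e`), both hypothesized as attained lower bounds.  Then `ξ_M = sup Ξ`
exists and `ξ_M = μ = ν`. -/
theorem stmt15 {n r : ℕ} (hn : 2 ≤ n)
    (G : Fin r → Matrix (Fin n) (Fin n) ℝ)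
    (hGrow : ∀ k i, ∑ j, G k i j = 0)
    (hGnormal : ∀ k, G k * (G k)ᵀ = (G k)ᵀ * G k)
    (μ : ℝ)
    (hμ_lb : ∀ k, ∀ x : Fin n → ℝ, x ≠ 0 → x ⬝ᵥ (fun _ => (1 : ℝ)) = 0 →
      μ ≤ (x ⬝ᵥ (G k).mulVec x) / (x ⬝ᵥ x))
    (hμ_mem : ∃ k, ∃ x : Fin n → ℝ, x ≠ 0 ∧ x ⬝ᵥ (fun _ => (1 : ℝ)) = 0 ∧
      (x ⬝ᵥ (G k).mulVec x) / (x ⬝ᵥ x) = μ)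
    (ν : ℝ)
    (hν_lb : ∀ k, ∀ lam : ℂ, ∀ v : Fin n → ℂ, v ≠ 0 →
      ((G k).map Complex.ofReal).mulVec v = lam • v →
      (¬∃ a : ℂ, v = a • (fun _ => (1 : ℂ))) → ν ≤ lam.re)
    (hν_mem : ∃ k, ∃ lam : ℂ, ∃ v : Fin n → ℂ, v ≠ 0 ∧
      ((G k).map Complex.ofReal).mulVec v = lam • v ∧
      (¬∃ a : ℂ, v = a • (fun _ => (1 : ℂ))) ∧ lam.re = ν) :
    (Xi G).Nonempty ∧ BddAbove (Xi G) ∧ sSup (Xi G) = μ ∧ μ = ν := by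
  obtain ⟨k₀, x₀, hx₀, hperp₀, hmu₀⟩ := hμ_mem
  obtain ⟨k₁, lam₁, v₁, hv₁, heig₁, hne₁, hre₁⟩ := hν_mem
  have hn0 : 0 < n := lt_of_lt_of_le (by norm_num) hn
  have hμν : μ = ν := by
    have h1 : μ ≤ ν := by
      have := mu_le_relam hn0 (hGrow k₁) (hGnormal k₁) (hμ_lb k₁) hv₁ heig₁ hne₁
      rwa [hre₁] at this
    have h2 : ν ≤ μ := nu_le_mu hn (hGrow k₀) (hGnormal k₀) (hν_lb k₀) hx₀ hperp₀ hmu₀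
    linarith
  obtain ⟨U, hU, hirr, hpsd⟩ := good_U_exists hn G hGrow μ hμ_lb
  have hmem : μ ∈ Xi G := ⟨U, hU, hirr, hpsd⟩
  have hub : ∀ ξ ∈ Xi G, ξ ≤ μ := by
    rintro ξ ⟨U', hU', hirr', hpsd'⟩
    have := xi_le_relam hU' hirr' (hpsd' k₁) hv₁ heig₁ hne₁
    rw [hre₁, ← hμν] at this
    exact this
  refine ⟨⟨μ, hmem⟩, ⟨μ, fun ξ hξ => hub ξ hξ⟩, ?_, hμν⟩
  exact le_antisymm (csSup_le ⟨μ, hmem⟩ hub) (le_csSup ⟨μ, fun ξ hξ => hub ξ hξ⟩ hmem)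
end
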